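/- arXiv:1003.3557 — 3 statements merged into one kernel-verified Lean document; each statement's English description precedes it below -/
import Mathlib

section
/- Let K be a definably complete expansion of an ordered field. The following are equivalent: (1) K is a-minimal and every pseudo-finite subset of K is finite; (2) K is a-minimal and every pseudo-finite subset of K^n is finite, for every n; (3) every definable closed discrete subset of K is finite; (4) every definable closed discrete subset of K^n is finite, for every n; (5) every definable discrete subset of K is finite; (6) every definable discrete subset of K^n is finite, for every n. -/
open FirstOrder Set

namespace Tame

variable (L : FirstOrder.Language) (K : Type*) [Field K] [LinearOrder K] [IsStrictOrderedRing K]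
  [TopologicalSpace K] [OrderTopology K] [L.Structure K]

/-- A set is discrete if each of its points is isolated. -/
def IsDiscreteSet {α : Type*} [TopologicalSpace α] (X : Set α) : Prop :=
  ∀ x ∈ X, ∃ U : Set α, IsOpen U ∧ U ∩ X = {x}

/-- A set is nowhere dense if its closure has empty interior. -/
def IsNwd {α : Type*} [TopologicalSpace α] (X : Set α) : Prop :=
  interior (closure X) = ∅

/-- `K` is an expansion of an ordered field: the order and the graphs of addition and
multiplication are definable without parameters. -/
def IsOrderedFieldExpansion : Prop :=
  Set.Definable (∅ : Set K) L {x : Fin 2 → K | x 0 < x 1} ∧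
  Set.Definable (∅ : Set K) L {x : Fin 3 → K | x 0 + x 1 = x 2} ∧
  Set.Definable (∅ : Set K) L {x : Fin 3 → K | x 0 * x 1 = x 2}

/-- Definable completeness: every nonempty definable subset of `K` that is bounded above has a
least upper bound. -/
def DefinablyComplete : Prop :=
  ∀ s : Set K, Set.Definable₁ (Set.univ : Set K) L s → s.Nonempty → BddAbove s →
    ∃ a : K, IsLUB s a

/-- Boundedness of a subset of `K^n`. -/
def IsBddSet {n : ℕ} (X : Set (Fin n → K)) : Prop :=
  ∃ r : K, ∀ x ∈ X, ∀ i, |x i| ≤ r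

/-- A subset of `K^n` is pseudo-finite if it is closed, bounded and discrete. -/
def PseudoFinite {n : ℕ} (X : Set (Fin n → K)) : Prop :=
  IsClosed X ∧ IsBddSet K X ∧ IsDiscreteSet X

/-- A subset of `K` is pseudo-finite if it is closed, bounded and discrete. -/
def PseudoFinite1 (X : Set K) : Prop :=
  IsClosed X ∧ (∃ r : K, ∀ x ∈ X, |x| ≤ r) ∧ IsDiscreteSet X

/-- The fiber of `Y ⊆ K^{1+n}` at `t`. -/
def fib {n : ℕ} (Y : Set (Fin (n + 1) → K)) (t : K) : Set (Fin n → K) :=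
  {x | Fin.cons t x ∈ Y}

/-- The fiber at `t` of `Y ⊆ K^2`, viewed as a subset of `K`. -/
def fib1 (Y : Set (Fin 2 → K)) (t : K) : Set K :=
  {x | ![t, x] ∈ Y}

/-- A subset of `K^n` is (definably) meager if it is the union of a definable increasing family
of nowhere dense sets. -/
def DefMeager {n : ℕ} (X : Set (Fin n → K)) : Prop :=
  ∃ Y : Set (Fin (n + 1) → K), Set.Definable (Set.univ : Set K) L Y ∧
    (∀ s t : K, s ≤ t → fib K Y s ⊆ fib K Y t) ∧
    (∀ t : K, IsNwd (fib K Y t)) ∧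
    X = ⋃ t : K, fib K Y t

/-- A subset of `K` is (definably) meager if it is the union of a definable increasing family
of nowhere dense sets. -/
def DefMeager1 (X : Set K) : Prop :=
  ∃ Y : Set (Fin 2 → K), Set.Definable (Set.univ : Set K) L Y ∧
    (∀ s t : K, s ≤ t → fib1 K Y s ⊆ fib1 K Y t) ∧
    (∀ t : K, IsNwd (fib1 K Y t)) ∧
    X = ⋃ t : K, fib1 K Y t

/-- `K` is definably Baire if `K` is not meager in itself. -/
def DefinablyBaire : Prop := ¬ DefMeager1 L K (Set.univ : Set K)

/-- An Fσ subset of `K^n`: the union of a definable increasing family of closed sets. -/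
def DefFsigma {n : ℕ} (X : Set (Fin n → K)) : Prop :=
  ∃ Y : Set (Fin (n + 1) → K), Set.Definable (Set.univ : Set K) L Y ∧
    (∀ s t : K, s ≤ t → fib K Y s ⊆ fib K Y t) ∧
    (∀ t : K, IsClosed (fib K Y t)) ∧
    X = ⋃ t : K, fib K Y t

/-- Finite Boolean combinations of open sets (constructible sets). -/
inductive IsBoolCombOpens {α : Type*} [TopologicalSpace α] : Set α → Prop
  | basic {U : Set α} : IsOpen U → IsBoolCombOpens U
  | compl {s : Set α} : IsBoolCombOpens s → IsBoolCombOpens sᶜ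
  | union {s t : Set α} : IsBoolCombOpens s → IsBoolCombOpens t →
      IsBoolCombOpens (s ∪ t)

/-- `K` is a-minimal if every definable discrete closed subset of `K` is pseudo-finite. -/
def AMinimal : Prop :=
  ∀ X : Set K, Set.Definable₁ (Set.univ : Set K) L X → IsDiscreteSet X → IsClosed X →
    PseudoFinite1 K X

/-- `K` is i-minimal if every definable subset of `K` with empty interior is nowhere dense. -/
def IMinimal : Prop :=
  ∀ X : Set K, Set.Definable₁ (Set.univ : Set K) L X → interior X = ∅ → IsNwd X

/-- A function `K → K` is definable if its graph is definable. -/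
def DefFun1 (f : K → K) : Prop :=
  Set.Definable (Set.univ : Set K) L {x : Fin 2 → K | x 1 = f (x 0)}

/-- Local o-minimality: for every definable `f : K → K` and every `x`, the sign of `f` is
constant on some interval `(x, y)` with `y > x`. -/
def LocallyOMinimal : Prop :=
  ∀ f : K → K, DefFun1 L K f → ∀ x : K, ∃ y : K, x < y ∧
    ((∀ z ∈ Set.Ioo x y, 0 < f z) ∨ (∀ z ∈ Set.Ioo x y, f z = 0) ∨
      (∀ z ∈ Set.Ioo x y, f z < 0))

open Classical in
/-- The dimension of a subset of `K^n`: the largest `d` such that the projection of `X` onto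
some `d` coordinates has nonempty interior; the empty set has dimension `-1`. -/
noncomputable def ddim {n : ℕ} (X : Set (Fin n → K)) : ℤ :=
  if X = ∅ then -1
  else (↑(sSup {d : ℕ | ∃ p : Fin d → Fin n, Function.Injective p ∧
    (interior ((fun x : Fin n → K => x ∘ p) '' X)).Nonempty}) : ℤ)

/-- The graph of `f` restricted to `X`, as a subset of `K^{n+m}`, is definable. -/
def DefFunGraphOn {n m : ℕ} (X : Set (Fin n → K)) (f : (Fin n → K) → (Fin m → K)) : Prop :=
  Set.Definable (Set.univ : Set K) L
    {z : Fin (n + m) → K | ∃ x ∈ X, z = Fin.append x (f x)}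

/-- The graph of a `K`-valued function restricted to `U ⊆ K^n` is definable. -/
def DefFunKOn {n : ℕ} (U : Set (Fin n → K)) (f : (Fin n → K) → K) : Prop :=
  Set.Definable (Set.univ : Set K) L
    {z : Fin (n + 1) → K | (z ∘ Fin.castSucc) ∈ U ∧ z (Fin.last n) = f (z ∘ Fin.castSucc)}

/-- `K` has definable Skolem functions. -/
def HasDSF : Prop :=
  ∀ (m n : ℕ) (A : Set (Fin (m + n) → K)), Set.Definable (Set.univ : Set K) L A →
    ∃ f : (Fin m → K) → (Fin n → K),
      DefFunGraphOn L K (Set.univ : Set (Fin m → K)) f ∧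
      ∀ x : Fin m → K, (∃ y : Fin n → K, Fin.append x y ∈ A) → Fin.append x (f x) ∈ A

/-- The Z-closure of `A ⊆ K`: the union of all nowhere dense subsets of `K` definable with
parameters from `A`. -/
def zcl (A : Set K) : Set K :=
  ⋃₀ {C : Set K | IsNwd C ∧ Set.Definable₁ A L C}

/-- A pseudo-ℕ set: a definable subset of the nonnegative part of `K` that is closed, discrete
and unbounded above. -/
def IsPseudoNat (N : Set K) : Prop :=
  Set.Definable₁ (Set.univ : Set K) L N ∧ N ⊆ {x : K | 0 ≤ x} ∧
    IsClosed N ∧ IsDiscreteSet N ∧ ¬ BddAbove N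

/-- The graph of `f` restricted to `N ⊆ K` is definable. -/
def DefFunOn1 (N : Set K) (f : K → K) : Prop :=
  Set.Definable (Set.univ : Set K) L {x : Fin 2 → K | x 0 ∈ N ∧ x 1 = f (x 0)}

/-- A subset of `K` is pseudo-enumerable if it is the image of a pseudo-ℕ set under a definable
bijection. -/
def PseudoEnumerable1 (Q : Set K) : Prop :=
  ∃ N : Set K, IsPseudoNat L K N ∧
    ∃ f : K → K, DefFunOn1 L K N f ∧ Set.InjOn f N ∧ f '' N = Q

/-- The sup-distance on `K^n`. -/
def dmax {n : ℕ} (x y : Fin n → K) : K :=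
  Finset.univ.fold max 0 (fun i => |x i - y i|)



open FirstOrder Set

section D1

/-! ### Term DSL -/

inductive Tm (K : Type*) (n : ℕ) where
  | var (i : Fin n)
  | const (c : K)
  | add (s t : Tm K n)
  | mul (s t : Tm K n)

namespace Tm

variable {K : Type*} [Field K] [LinearOrder K] [IsStrictOrderedRing K] {n : ℕ}

def eval : Tm K n → (Fin n → K) → K
  | var i, x => x i
  | const c, _ => c
  | add s t, x => s.eval x + t.eval x
  | mul s t, x => s.eval x * t.eval x

@[simp] lemma eval_var (i : Fin n) (x : Fin n → K) : (var i).eval x = x i := rfl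
@[simp] lemma eval_const (c : K) (x : Fin n → K) : (const c).eval x = c := rfl
@[simp] lemma eval_add (s t : Tm K n) (x : Fin n → K) :
    (add s t).eval x = s.eval x + t.eval x := rfl
@[simp] lemma eval_mul (s t : Tm K n) (x : Fin n → K) :
    (mul s t).eval x = s.eval x * t.eval x := rfl

def neg (t : Tm K n) : Tm K n := mul (const (-1)) t
def sub (s t : Tm K n) : Tm K n := add s (neg t)

@[simp] lemma eval_neg (t : Tm K n) (x : Fin n → K) : t.neg.eval x = -(t.eval x) := by
  simp [neg]
@[simp] lemma eval_sub (s t : Tm K n) (x : Fin n → K) :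
    (s.sub t).eval x = s.eval x - t.eval x := by
  simp [sub]; ring

end Tm

/-! ### Formula DSL -/

variable (L : FirstOrder.Language) (K : Type*) [Field K] [LinearOrder K] [IsStrictOrderedRing K] [L.Structure K]

inductive Fm : ℕ → Type _ where
  | mem {n m : ℕ} (S : Set (Fin m → K)) (hS : Set.Definable (univ : Set K) L S)
      (σ : Fin m → Tm K n) : Fm n
  | not {n} (φ : Fm n) : Fm n
  | and {n} (φ ψ : Fm n) : Fm n
  | or {n} (φ ψ : Fm n) : Fm n
  | ex {n} (φ : Fm (n + 1)) : Fm n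

namespace Fm

variable {L K}

def Realize : {n : ℕ} → Fm L K n → (Fin n → K) → Prop
  | _, mem S _ σ, x => (fun i => (σ i).eval x) ∈ S
  | _, not φ, x => ¬ φ.Realize x
  | _, and φ ψ, x => φ.Realize x ∧ ψ.Realize x
  | _, or φ ψ, x => φ.Realize x ∨ ψ.Realize x
  | _, ex φ, x => ∃ y : K, φ.Realize (Fin.snoc x y)

@[simp] lemma realize_mem {n m : ℕ} (S : Set (Fin m → K)) (hS : Set.Definable (univ : Set K) L S) (σ : Fin m → Tm K n)
    (x : Fin n → K) : (mem S hS σ).Realize x ↔ (fun i => (σ i).eval x) ∈ S := Iff.rfl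
@[simp] lemma realize_not {n} (φ : Fm L K n) (x) : (not φ).Realize x ↔ ¬ φ.Realize x := Iff.rfl
@[simp] lemma realize_and {n} (φ ψ : Fm L K n) (x) :
    (and φ ψ).Realize x ↔ φ.Realize x ∧ ψ.Realize x := Iff.rfl
@[simp] lemma realize_or {n} (φ ψ : Fm L K n) (x) :
    (or φ ψ).Realize x ↔ φ.Realize x ∨ ψ.Realize x := Iff.rfl
@[simp] lemma realize_ex {n} (φ : Fm L K (n+1)) (x : Fin n → K) :
    (ex φ).Realize x ↔ ∃ y : K, φ.Realize (Fin.snoc x y) := Iff.rfl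

def all {n} (φ : Fm L K (n+1)) : Fm L K n := not (ex (not φ))

@[simp] lemma realize_all {n} (φ : Fm L K (n+1)) (x : Fin n → K) :
    (all φ).Realize x ↔ ∀ y : K, φ.Realize (Fin.snoc x y) := by
  simp [all]

def imp {n} (φ ψ : Fm L K n) : Fm L K n := or (not φ) ψ

@[simp] lemma realize_imp {n} (φ ψ : Fm L K n) (x) :
    (imp φ ψ).Realize x ↔ (φ.Realize x → ψ.Realize x) := by
  simp [imp, or_iff_not_imp_left, Realize]

end Fm

end D1


open FirstOrder Set

set_option linter.unusedSectionVars false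

namespace Tame3

variable {L : FirstOrder.Language} {K : Type*} [Field K] [LinearOrder K] [IsStrictOrderedRing K] [L.Structure K]

lemma defEq : Set.Definable (univ : Set K) L {x : Fin 2 → K | x 0 = x 1} := by
  refine ⟨(FirstOrder.Language.Term.var 0).equal (FirstOrder.Language.Term.var 1), ?_⟩
  ext x; simp

lemma defConstSet (c : K) : Set.Definable (univ : Set K) L {x : Fin 1 → K | x 0 = c} := by
  refine ⟨(FirstOrder.Language.Term.var 0).equal
    (FirstOrder.Language.Constants.term (L.con (⟨c, mem_univ c⟩ : (univ : Set K)))), ?_⟩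
  ext x; simp


/-- The graph of a term: `{w | t.eval (init w) = w (last n)}`. -/
def tG {n : ℕ} (t : Tm K n) : Set (Fin (n+1) → K) :=
  {w | t.eval (Fin.init w) = w (Fin.last n)}

section

variable (hadd : Set.Definable (univ : Set K) L {x : Fin 3 → K | x 0 + x 1 = x 2})
variable (hmul : Set.Definable (univ : Set K) L {x : Fin 3 → K | x 0 * x 1 = x 2})

/-- Definability of binary-op graphs, generic in the operation. -/
lemma defG_op {n : ℕ} {op : K → K → K} {s t : Tm K n}
    (hop : Set.Definable (univ : Set K) L {x : Fin 3 → K | op (x 0) (x 1) = x 2})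
    (hs : Set.Definable (univ : Set K) L (tG s)) (ht : Set.Definable (univ : Set K) L (tG t)) :
    Set.Definable (univ : Set K) L {w : Fin (n+1) → K | op (s.eval (Fin.init w)) (t.eval (Fin.init w)) = w (Fin.last n)} := by
  classical
  set e3 : Fin (n+1) → Fin (n+3) := fun j => j.castSucc.castSucc with he3
  set fa : Fin (n+1) → Fin (n+3) :=
    Fin.snoc (fun j : Fin n => e3 j.castSucc) ((Fin.last (n+1)).castSucc) with hfa
  set fb : Fin (n+1) → Fin (n+3) :=
    Fin.snoc (fun j : Fin n => e3 j.castSucc) (Fin.last (n+2)) with hfb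
  set fop : Fin 3 → Fin (n+3) :=
    ![(Fin.last (n+1)).castSucc, Fin.last (n+2), e3 (Fin.last n)] with hfop
  set W : Set (Fin (n+3) → K) :=
    ((fun g : Fin (n+3) → K => g ∘ fa) ⁻¹' tG s) ∩ ((fun g : Fin (n+3) → K => g ∘ fb) ⁻¹' tG t) ∩
      ((fun g : Fin (n+3) → K => g ∘ fop) ⁻¹' {x : Fin 3 → K | op (x 0) (x 1) = x 2}) with hW
  have hWdef : Set.Definable (univ : Set K) L W :=
    ((hs.preimage_comp fa).inter (ht.preimage_comp fb)).inter (hop.preimage_comp fop)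
  have key : {w : Fin (n+1) → K | op (s.eval (Fin.init w)) (t.eval (Fin.init w)) = w (Fin.last n)}
      = (fun g : Fin (n+3) → K => g ∘ e3) '' W := by
    ext w
    constructor
    · intro hw
      refine ⟨Fin.snoc (Fin.snoc w (s.eval (Fin.init w))) (t.eval (Fin.init w)), ?_, ?_⟩
      · have hinit : ∀ (c : K) (c' : K),
            Fin.init ((Fin.snoc (Fin.snoc w c) c' : Fin (n+3) → K) ∘ fa) = Fin.init w := by
          intro c c'
          funext j
          simp [Fin.init, hfa, he3, Fin.snoc_castSucc]
        constructor
        · constructor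
          · show (Fin.snoc (Fin.snoc w _) _ ∘ fa) ∈ tG s
            simp only [tG, mem_setOf_eq, hinit]
            simp [hfa, Fin.snoc_castSucc, Fin.snoc_last]
          · show (Fin.snoc (Fin.snoc w _) _ ∘ fb) ∈ tG t
            have hinitb : Fin.init ((Fin.snoc (Fin.snoc w (s.eval (Fin.init w)))
                (t.eval (Fin.init w)) : Fin (n+3) → K) ∘ fb) = Fin.init w := by
              funext j
              simp [Fin.init, hfb, he3, Fin.snoc_castSucc]
            simp only [tG, mem_setOf_eq, hinitb]
            simp [hfb, Fin.snoc_castSucc, Fin.snoc_last]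
        · show op _ _ = _
          simp only [hfop]
          simp only [Function.comp_apply, Matrix.cons_val_zero, Matrix.cons_val_one,
            Matrix.head_cons, Matrix.cons_val_two, Matrix.tail_cons, he3]
          rw [Fin.snoc_last, Fin.snoc_castSucc, Fin.snoc_last, Fin.snoc_castSucc,
            Fin.snoc_castSucc]
          exact hw
      · funext j
        simp [he3, Fin.snoc_castSucc]
    · rintro ⟨v, ⟨⟨hvs, hvt⟩, hvop⟩, rfl⟩
      have h1 : Fin.init (v ∘ e3) = Fin.init (v ∘ fa) := by
        funext j
        simp [Fin.init, he3, hfa, Fin.snoc_castSucc]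
      have h2 : Fin.init (v ∘ e3) = Fin.init (v ∘ fb) := by
        funext j
        simp [Fin.init, he3, hfb, Fin.snoc_castSucc]
      show op (s.eval (Fin.init (v ∘ e3))) (t.eval (Fin.init (v ∘ e3))) = (v ∘ e3) (Fin.last n)
      rw [h1] at *
      have hs' : s.eval (Fin.init (v ∘ fa)) = v ((Fin.last (n+1)).castSucc) := by
        have := hvs
        simp only [tG, mem_preimage, mem_setOf_eq] at this
        rw [this]
        simp [hfa, Fin.snoc_last]
      have ht' : t.eval (Fin.init (v ∘ fb)) = v (Fin.last (n+2)) := by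
        have := hvt
        simp only [tG, mem_preimage, mem_setOf_eq] at this
        rw [this]
        simp [hfb, Fin.snoc_last]
      have hop' := hvop
      simp only [mem_preimage, mem_setOf_eq, Function.comp_apply, hfop, Matrix.cons_val_zero,
        Matrix.cons_val_one, Matrix.head_cons, Matrix.cons_val_two, Matrix.tail_cons] at hop'
      rw [hs', h2, ht']
      exact hop'
  rw [key]
  exact hWdef.image_comp e3

include hadd hmul in
lemma defG {n : ℕ} (t : Tm K n) :
    Set.Definable (univ : Set K) L (tG t) := by
  induction t with
  | var i =>
      have : tG (K := K) (Tm.var i) =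
          (fun g : Fin (n+1) → K => g ∘ ![i.castSucc, Fin.last n]) ⁻¹' {x : Fin 2 → K | x 0 = x 1} := by
        ext w
        simp [tG, Fin.init]
      rw [this]
      exact defEq.preimage_comp _
  | const c =>
      have : tG (K := K) (Tm.const c) =
          (fun g : Fin (n+1) → K => g ∘ ![Fin.last n]) ⁻¹' {x : Fin 1 → K | x 0 = c} := by
        ext w
        simp [tG, eq_comm]
      rw [this]
      exact (defConstSet c).preimage_comp _
  | add s t ihs iht => exact defG_op hadd ihs iht
  | mul s t ihs iht => exact defG_op hmul ihs iht

end

end Tame3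

section D4

namespace Tame3

variable {L : FirstOrder.Language} {K : Type*} [Field K] [LinearOrder K] [IsStrictOrderedRing K] [L.Structure K]


section
variable (hadd : Set.Definable (univ : Set K) L {x : Fin 3 → K | x 0 + x 1 = x 2})
variable (hmul : Set.Definable (univ : Set K) L {x : Fin 3 → K | x 0 * x 1 = x 2})

include hadd hmul in
/-- substitution of terms into a definable set is definable -/
lemma defSubst {n m : ℕ} {S : Set (Fin m → K)} (hS : Set.Definable (univ : Set K) L S)
    (σ : Fin m → Tm K n) :
    Set.Definable (univ : Set K) L {x : Fin n → K | (fun i => (σ i).eval x) ∈ S} := by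
  classical
  set e : Fin n → Fin (n+m) := Fin.castAdd m with he
  set b : Fin m → Fin (n+m) := Fin.natAdd n with hb
  set f : Fin m → Fin (n+1) → Fin (n+m) :=
    fun i => Fin.snoc (fun j : Fin n => Fin.castAdd m j) (Fin.natAdd n i) with hf
  set W : Set (Fin (n+m) → K) :=
    ((fun g : Fin (n+m) → K => g ∘ b) ⁻¹' S) ∩
      (⋂ i ∈ (Finset.univ : Finset (Fin m)), (fun g : Fin (n+m) → K => g ∘ f i) ⁻¹' tG (σ i))
    with hW
  have hWdef : Set.Definable (univ : Set K) L W :=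
    (hS.preimage_comp b).inter (Set.definable_biInter_finset
      (fun i => (defG hadd hmul (σ i)).preimage_comp (f i)) Finset.univ)
  have hInit : ∀ (v : Fin (n+m) → K) (i : Fin m), Fin.init (v ∘ f i) = v ∘ e := by
    intro v i
    funext j
    simp [Fin.init, hf, he, Fin.snoc_castSucc]
  have key : {x : Fin n → K | (fun i => (σ i).eval x) ∈ S}
      = (fun g : Fin (n+m) → K => g ∘ e) '' W := by
    ext x
    constructor
    · intro hx
      refine ⟨Fin.append x (fun i => (σ i).eval x), ⟨?_, ?_⟩, ?_⟩
      · show (Fin.append x _ ∘ b) ∈ S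
        have : Fin.append x (fun i => (σ i).eval x) ∘ b = fun i => (σ i).eval x := by
          funext i
          simp [hb, Fin.append_right]
        rwa [this]
      · simp only [mem_iInter]
        intro i _
        have h1 : Fin.append x (fun i => (σ i).eval x) ∘ e = x := by
          funext j
          simp [he, Fin.append_left]
        simp only [mem_preimage, tG, mem_setOf_eq, hInit, h1]
        simp [hf, Fin.snoc_last, Fin.append_right]
      · funext j
        simp [he, Fin.append_left]
    · rintro ⟨v, ⟨hvS, hvG⟩, rfl⟩
      simp only [mem_iInter] at hvG
      show (fun i => (σ i).eval (v ∘ e)) ∈ S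
      have : (fun i => (σ i).eval (v ∘ e)) = v ∘ b := by
        funext i
        have := hvG i (Finset.mem_univ i)
        simp only [mem_preimage, tG, mem_setOf_eq] at this
        rw [hInit] at this
        rw [this]
        simp [hf, Fin.snoc_last, hb]
      rwa [this]
  rw [key]
  exact hWdef.image_comp e

include hadd hmul in
lemma defFm : ∀ {n : ℕ} (φ : Fm L K n), Set.Definable (univ : Set K) L {x | φ.Realize x} := by
  intro n φ
  induction φ with
  | mem S hS σ => exact defSubst hadd hmul hS σ
  | not φ ih =>
      have : {x | (Fm.not φ).Realize x} = {x | φ.Realize x}ᶜ := rfl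
      rw [this]; exact ih.compl
  | and φ ψ ihφ ihψ =>
      have : {x | (Fm.and φ ψ).Realize x} = {x | φ.Realize x} ∩ {x | ψ.Realize x} := rfl
      rw [this]; exact ihφ.inter ihψ
  | or φ ψ ihφ ihψ =>
      have : {x | (Fm.or φ ψ).Realize x} = {x | φ.Realize x} ∪ {x | ψ.Realize x} := rfl
      rw [this]; exact ihφ.union ihψ
  | ex φ ih =>
      have key : {x | (Fm.ex φ).Realize x}
          = (fun g : Fin (_+1) → K => g ∘ Fin.castSucc) '' {x | φ.Realize x} := by
        ext x
        constructor
        · rintro ⟨y, hy⟩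
          refine ⟨Fin.snoc x y, hy, ?_⟩
          funext j
          simp [Fin.snoc_castSucc]
        · rintro ⟨w, hw, rfl⟩
          refine ⟨w (Fin.last _), ?_⟩
          have : Fin.snoc (w ∘ Fin.castSucc) (w (Fin.last _)) = w := by
            funext j
            rcases Fin.eq_castSucc_or_eq_last j with ⟨j', rfl⟩ | rfl
            · simp [Fin.snoc_castSucc]
            · simp [Fin.snoc_last]
          rwa [this]
      rw [key]
      exact ih.image_comp Fin.castSucc

end

end Tame3

end D4

section D5

variable {L : FirstOrder.Language} {K : Type*} [Field K] [LinearOrder K] [IsStrictOrderedRing K] [L.Structure K]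

namespace Fm

open Set

def tt {n : ℕ} : Fm L K n := Fm.mem univ Set.definable_univ Fin.elim0

@[simp] lemma realize_tt {n : ℕ} (x : Fin n → K) : (tt : Fm L K n).Realize x := by
  simp [tt, Realize]

def ff {n : ℕ} : Fm L K n := Fm.mem ∅ Set.definable_empty Fin.elim0

@[simp] lemma realize_ff {n : ℕ} (x : Fin n → K) : ¬ (ff : Fm L K n).Realize x := by
  simp [ff, Realize]

/-- finite conjunction -/
def finAnd {n : ℕ} : {m : ℕ} → (Fin m → Fm L K n) → Fm L K n
  | 0, _ => tt
  | _ + 1, f => (f 0).and (finAnd (fun i => f i.succ))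

@[simp] lemma realize_finAnd {n : ℕ} : ∀ {m : ℕ} (f : Fin m → Fm L K n) (x : Fin n → K),
    (finAnd f).Realize x ↔ ∀ i, (f i).Realize x
  | 0, f, x => by simp [finAnd, Fin.forall_fin_zero_pi]
  | m + 1, f, x => by
      rw [finAnd]
      simp only [realize_and, realize_finAnd]
      constructor
      · rintro ⟨h0, hs⟩ i
        rcases Fin.eq_zero_or_eq_succ i with rfl | ⟨j, rfl⟩
        · exact h0
        · exact hs j
      · intro h
        exact ⟨h 0, fun j => h j.succ⟩

/-- finite disjunction -/
def finOr {n : ℕ} : {m : ℕ} → (Fin m → Fm L K n) → Fm L K n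
  | 0, _ => ff
  | _ + 1, f => (f 0).or (finOr (fun i => f i.succ))

@[simp] lemma realize_finOr {n : ℕ} : ∀ {m : ℕ} (f : Fin m → Fm L K n) (x : Fin n → K),
    (finOr f).Realize x ↔ ∃ i, (f i).Realize x
  | 0, f, x => by simp [finOr]
  | m + 1, f, x => by
      rw [finOr]
      simp only [realize_or, realize_finOr]
      constructor
      · rintro (h0 | ⟨j, hj⟩)
        · exact ⟨0, h0⟩
        · exact ⟨j.succ, hj⟩
      · rintro ⟨i, hi⟩
        rcases Fin.eq_zero_or_eq_succ i with rfl | ⟨j, rfl⟩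
        · exact Or.inl hi
        · exact Or.inr ⟨j, hi⟩

/-- iterated existential over a block of `m` new variables -/
def exs {n : ℕ} : {m : ℕ} → Fm L K (n + m) → Fm L K n
  | 0, φ => φ
  | _ + 1, φ => exs (Fm.ex φ)

lemma realize_exs {n : ℕ} : ∀ {m : ℕ} (φ : Fm L K (n + m)) (x : Fin n → K),
    (exs φ).Realize x ↔ ∃ y : Fin m → K, φ.Realize (Fin.append x y)
  | 0, φ, x => by
      rw [exs]
      constructor
      · intro h
        refine ⟨Fin.elim0, ?_⟩
        have : Fin.append x (Fin.elim0 : Fin 0 → K) = x := by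
          funext j
          have h0 : Fin.castAdd 0 j = j := by ext; rfl
          rw [← h0, Fin.append_left, h0]
        rwa [this]
      · rintro ⟨y, hy⟩
        have : Fin.append x y = x := by
          funext j
          have h0 : Fin.castAdd 0 j = j := by ext; rfl
          rw [← h0, Fin.append_left, h0]
        rwa [this] at hy
  | m + 1, φ, x => by
      rw [exs, realize_exs (Fm.ex φ) x]
      constructor
      · rintro ⟨y, z, hz⟩
        exact ⟨Fin.snoc y z, by rwa [Fin.append_snoc]⟩
      · rintro ⟨w, hw⟩
        refine ⟨Fin.init w, w (Fin.last m), ?_⟩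
        rw [← Fin.append_snoc, Fin.snoc_init_self]
        exact hw

end Fm

end D5

section D6

open Set

variable {L : FirstOrder.Language} {K : Type*} [Field K] [LinearOrder K] [IsStrictOrderedRing K] [L.Structure K]

namespace Fm

section Atoms

variable (hlt : Set.Definable (univ : Set K) L {x : Fin 2 → K | x 0 < x 1})

lemma defEq' : Set.Definable (univ : Set K) L {x : Fin 2 → K | x 0 = x 1} := by
  refine ⟨(FirstOrder.Language.Term.var 0).equal (FirstOrder.Language.Term.var 1), ?_⟩
  ext x; simp

variable {n : ℕ}

def ltF (s t : Tm K n) : Fm L K n := Fm.mem {x : Fin 2 → K | x 0 < x 1} hlt ![s, t]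

@[simp] lemma realize_ltF (s t : Tm K n) (x : Fin n → K) :
    (ltF hlt s t).Realize x ↔ s.eval x < t.eval x := by
  simp [ltF]

def eqF (s t : Tm K n) : Fm L K n := Fm.mem {x : Fin 2 → K | x 0 = x 1} defEq' ![s, t]

@[simp] lemma realize_eqF (s t : Tm K n) (x : Fin n → K) :
    (eqF s t : Fm L K n).Realize x ↔ s.eval x = t.eval x := by
  simp [eqF]

def leF (s t : Tm K n) : Fm L K n := (ltF hlt t s).not

@[simp] lemma realize_leF (s t : Tm K n) (x : Fin n → K) :
    (leF hlt s t).Realize x ↔ s.eval x ≤ t.eval x := by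
  simp [leF, not_lt]

def neF (s t : Tm K n) : Fm L K n := (eqF s t).not

@[simp] lemma realize_neF (s t : Tm K n) (x : Fin n → K) :
    (neF s t : Fm L K n).Realize x ↔ s.eval x ≠ t.eval x := by
  simp [neF]

def absLeF (s t : Tm K n) : Fm L K n := (leF hlt s t).and (leF hlt s.neg t)

@[simp] lemma realize_absLeF (s t : Tm K n) (x : Fin n → K) :
    (absLeF hlt s t).Realize x ↔ |s.eval x| ≤ t.eval x := by
  simp [absLeF, abs_le', Realize]

def absLtF (s t : Tm K n) : Fm L K n := (ltF hlt s t).and (ltF hlt s.neg t)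

@[simp] lemma realize_absLtF (s t : Tm K n) (x : Fin n → K) :
    (absLtF hlt s t).Realize x ↔ |s.eval x| < t.eval x := by
  rw [abs_lt]
  simp only [absLtF, realize_and, realize_ltF, Tm.eval_neg]
  constructor
  · rintro ⟨h1, h2⟩
    exact ⟨by linarith, h1⟩
  · rintro ⟨h1, h2⟩
    exact ⟨h2, by linarith⟩

end Atoms

end Fm

/-- Main definability principle: a set cut out by a DSL formula is definable. -/
lemma defSetOf (hexp : IsOrderedFieldExpansion L K) {n : ℕ} (φ : Fm L K n)
    {S : Set (Fin n → K)} (h : ∀ x, x ∈ S ↔ φ.Realize x) :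
    Set.Definable (univ : Set K) L S := by
  have : S = setOf φ.Realize := Set.ext h
  rw [this]
  exact Tame3.defFm (hexp.2.1.mono (Set.empty_subset _)) (hexp.2.2.mono (Set.empty_subset _)) φ

end D6

section D7

open Set

variable {K : Type*} [Field K] [LinearOrder K] [IsStrictOrderedRing K] [TopologicalSpace K] [OrderTopology K]

/-- `X` is `ε`-separated from `p` (apart from `p` itself). -/
def SepAt {m : ℕ} (X : Set (Fin m → K)) (p : Fin m → K) (ε : K) : Prop :=
  ∀ z ∈ X, z ≠ p → ∃ i, ε ≤ |z i - p i|

/-- `X` has no accumulation points (in the strong, uniform-local sense). -/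
def NoAcc {m : ℕ} (X : Set (Fin m → K)) : Prop := ∀ p, ∃ ε > 0, SepAt X p ε

def SepAt1 (X : Set K) (p : K) (ε : K) : Prop := ∀ z ∈ X, z ≠ p → ε ≤ |z - p|

def NoAcc1 (X : Set K) : Prop := ∀ p, ∃ ε > 0, SepAt1 X p ε

lemma exists_ball_subset {U : Set K} (hU : IsOpen U) {p : K} (hp : p ∈ U) :
    ∃ ε > 0, ∀ y : K, |y - p| < ε → y ∈ U := by
  rcases mem_nhds_iff_exists_Ioo_subset.mp (hU.mem_nhds hp) with ⟨l, u, hmem, hsub⟩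
  rcases hmem with ⟨hl, hu⟩
  refine ⟨min (p - l) (u - p), by simp [hl, hu], fun y hy => ?_⟩
  rw [abs_lt] at hy
  have hmin1 : min (p - l) (u - p) ≤ p - l := min_le_left _ _
  have hmin2 : min (p - l) (u - p) ≤ u - p := min_le_right _ _
  exact hsub ⟨by linarith [hy.1], by linarith [hy.2]⟩

lemma ioo_ball (c ε : K) : {y : K | |y - c| < ε} = Set.Ioo (c - ε) (c + ε) := by
  ext y
  rw [mem_setOf_eq, Set.mem_Ioo, abs_lt]
  constructor <;> rintro ⟨h1, h2⟩ <;> constructor <;> linarith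

lemma isOpen_ball (c ε : K) : IsOpen {y : K | |y - c| < ε} := by
  rw [ioo_ball]; exact isOpen_Ioo

lemma isOpen_boxSet {m : ℕ} (p : Fin m → K) (ε : K) :
    IsOpen {z : Fin m → K | ∀ i, |z i - p i| < ε} := by
  have : {z : Fin m → K | ∀ i, |z i - p i| < ε}
      = ⋂ i, (fun z : Fin m → K => z i) ⁻¹' {y : K | |y - p i| < ε} := by
    ext z; simp
  rw [this]
  exact isOpen_iInter_of_finite fun i => (isOpen_ball _ _).preimage (continuous_apply i)

lemma exists_box_subset {m : ℕ} {U : Set (Fin m → K)} (hU : IsOpen U) {p : Fin m → K}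
    (hp : p ∈ U) : ∃ ε > 0, ∀ z : Fin m → K, (∀ i, |z i - p i| < ε) → z ∈ U := by
  rcases Nat.eq_zero_or_pos m with rfl | hm
  · exact ⟨1, one_pos, fun z _ => by rwa [Subsingleton.elim z p]⟩
  rcases isOpen_pi_iff.mp hU p hp with ⟨I, u, h1, h2⟩
  have hd : ∀ i : Fin m, ∃ d : K, 0 < d ∧ (i ∈ I → ∀ y : K, |y - p i| < d → y ∈ u i) := by
    intro i
    by_cases hi : i ∈ I
    · rcases exists_ball_subset (h1 i hi).1 (h1 i hi).2 with ⟨d, hd0, hd⟩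
      exact ⟨d, hd0, fun _ => hd⟩
    · exact ⟨1, one_pos, fun h => absurd h hi⟩
  choose d hd0 hdI using hd
  haveI : Nonempty (Fin m) := ⟨⟨0, hm⟩⟩
  refine ⟨Finset.univ.inf' Finset.univ_nonempty d, ?_, fun z hz => ?_⟩
  · exact (Finset.lt_inf'_iff _).mpr (fun i _ => hd0 i)
  · refine h2 (fun i hi => hdI i hi (z i) (lt_of_lt_of_le (hz i) ?_))
    exact Finset.inf'_le d (Finset.mem_univ i)

lemma noAcc_iff {m : ℕ} {X : Set (Fin m → K)} :
    NoAcc X ↔ IsClosed X ∧ Tame.IsDiscreteSet X := by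
  constructor
  · intro h
    constructor
    · rw [← isOpen_compl_iff, isOpen_iff_forall_mem_open]
      intro p hp
      rcases h p with ⟨ε, hε, hsep⟩
      refine ⟨{z | ∀ i, |z i - p i| < ε}, fun z hz => ?_, isOpen_boxSet p ε, fun i => by simp [hε]⟩
      intro hzX
      have hzp : z ≠ p := fun he => hp (he ▸ hzX)
      rcases hsep z hzX hzp with ⟨i, hi⟩
      exact absurd (hz i) (not_lt.mpr hi)
    · intro x hx
      rcases h x with ⟨ε, hε, hsep⟩
      refine ⟨{z | ∀ i, |z i - x i| < ε}, isOpen_boxSet x ε, ?_⟩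
      apply Set.eq_singleton_iff_unique_mem.mpr
      refine ⟨⟨fun i => by simp [hε], hx⟩, ?_⟩
      rintro z ⟨hz1, hz2⟩
      by_contra hne
      rcases hsep z hz2 hne with ⟨i, hi⟩
      exact absurd (hz1 i) (not_lt.mpr hi)
  · rintro ⟨hcl, hdisc⟩ p
    by_cases hp : p ∈ X
    · rcases hdisc p hp with ⟨U, hUopen, hUX⟩
      have hpU : p ∈ U := by
        have : p ∈ U ∩ X := hUX ▸ rfl
        exact this.1
      rcases exists_box_subset hUopen hpU with ⟨ε, hε, hbox⟩
      refine ⟨ε, hε, fun z hzX hzp => ?_⟩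
      by_contra hall
      push_neg at hall
      have : z ∈ U ∩ X := ⟨hbox z (fun i => hall i), hzX⟩
      rw [hUX] at this
      exact hzp this
    · rcases exists_box_subset (isOpen_compl_iff.mpr hcl) hp with ⟨ε, hε, hbox⟩
      refine ⟨ε, hε, fun z hzX hzp => ?_⟩
      by_contra hall
      push_neg at hall
      exact (hbox z fun i => hall i) hzX

lemma noAcc1_iff {X : Set K} : NoAcc1 X ↔ IsClosed X ∧ Tame.IsDiscreteSet X := by
  constructor
  · intro h
    constructor
    · rw [← isOpen_compl_iff, isOpen_iff_forall_mem_open]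
      intro p hp
      rcases h p with ⟨ε, hε, hsep⟩
      refine ⟨{z | |z - p| < ε}, fun z hz hzX => ?_, isOpen_ball p ε, by simp [hε]⟩
      have hzp : z ≠ p := fun he => hp (he ▸ hzX)
      exact absurd hz (not_lt.mpr (hsep z hzX hzp))
    · intro x hx
      rcases h x with ⟨ε, hε, hsep⟩
      refine ⟨{z | |z - x| < ε}, isOpen_ball x ε, ?_⟩
      apply Set.eq_singleton_iff_unique_mem.mpr
      refine ⟨⟨by simp [hε], hx⟩, ?_⟩
      rintro z ⟨hz1, hz2⟩
      by_contra hne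
      exact absurd hz1 (not_lt.mpr (hsep z hz2 hne))
  · rintro ⟨hcl, hdisc⟩ p
    by_cases hp : p ∈ X
    · rcases hdisc p hp with ⟨U, hUopen, hUX⟩
      have hpU : p ∈ U := by
        have : p ∈ U ∩ X := hUX ▸ rfl
        exact this.1
      rcases exists_ball_subset hUopen hpU with ⟨ε, hε, hball⟩
      refine ⟨ε, hε, fun z hzX hzp => ?_⟩
      by_contra hlt
      push_neg at hlt
      have : z ∈ U ∩ X := ⟨hball z hlt, hzX⟩
      rw [hUX] at this
      exact hzp this
    · rcases exists_ball_subset (isOpen_compl_iff.mpr hcl) hp with ⟨ε, hε, hball⟩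
      refine ⟨ε, hε, fun z hzX hzp => ?_⟩
      by_contra hlt
      push_neg at hlt
      exact (hball z hlt) hzX

lemma noAcc_mono {m : ℕ} {X Y : Set (Fin m → K)} (h : NoAcc X) (hYX : Y ⊆ X) : NoAcc Y := by
  intro p
  rcases h p with ⟨ε, hε, hsep⟩
  exact ⟨ε, hε, fun z hz => hsep z (hYX hz)⟩

lemma noAcc_of_separated {m : ℕ} {X : Set (Fin m → K)} {ε : K} (hε : 0 < ε)
    (h : ∀ x ∈ X, ∀ y ∈ X, x ≠ y → ∃ i, ε ≤ |x i - y i|) : NoAcc X := by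
  intro p
  by_cases h₀ : ∃ z ∈ X, z ≠ p ∧ ∀ i, |z i - p i| < ε / 2
  · rcases h₀ with ⟨z₀, hz₀X, hz₀p, hz₀⟩
    rcases Function.ne_iff.mp hz₀p with ⟨i₀, hi₀⟩
    have hd : 0 < |z₀ i₀ - p i₀| := by
      rw [abs_pos, sub_ne_zero]; exact hi₀
    refine ⟨min (ε / 2) |z₀ i₀ - p i₀|, lt_min (by linarith) hd, fun z hzX hzp => ?_⟩
    by_cases hzz : z = z₀
    · subst hzz
      exact ⟨i₀, min_le_right _ _⟩
    · rcases h z hzX z₀ hz₀X hzz with ⟨i, hi⟩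
      refine ⟨i, le_trans (min_le_left _ _) ?_⟩
      have habs : |z i - z₀ i| ≤ |z i - p i| + |z₀ i - p i| := by
        have := abs_sub (z i - p i) (z₀ i - p i)
        calc |z i - z₀ i| = |(z i - p i) - (z₀ i - p i)| := by ring_nf
        _ ≤ |z i - p i| + |z₀ i - p i| := abs_sub _ _
      have := hz₀ i
      linarith
  · push_neg at h₀
    refine ⟨ε / 2, by linarith, fun z hzX hzp => ?_⟩
    by_contra hall
    push_neg at hall
    exact absurd (fun i => hall i) (by simpa using h₀ z hzX hzp)

lemma noAcc_of_finite {m : ℕ} {X : Set (Fin m → K)} (h : X.Finite) : NoAcc X := by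
  intro p
  rcases Nat.eq_zero_or_pos m with rfl | hm
  · exact ⟨1, one_pos, fun z _ hzp => absurd (Subsingleton.elim z p) hzp⟩
  haveI : Nonempty (Fin m) := ⟨⟨0, hm⟩⟩
  have hF : (X \ {p}).Finite := h.diff
  by_cases hne : (X \ {p}).Nonempty
  · set val : (Fin m → K) → K := fun z => Finset.univ.sup' Finset.univ_nonempty
      (fun i => |z i - p i|) with hval
    have hFne : hF.toFinset.Nonempty := by rwa [Set.Finite.toFinset_nonempty]
    refine ⟨hF.toFinset.inf' hFne val, ?_, ?_⟩
    · refine (Finset.lt_inf'_iff _).mpr ?_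
      intro z hz
      rw [Set.Finite.mem_toFinset] at hz
      rcases Function.ne_iff.mp hz.2 with ⟨i, hi⟩
      calc (0 : K) < |z i - p i| := by rw [abs_pos, sub_ne_zero]; exact hi
      _ ≤ val z := Finset.le_sup' (fun i => |z i - p i|) (Finset.mem_univ i)
    · intro z hzX hzp
      have hz : z ∈ hF.toFinset := by
        rw [Set.Finite.mem_toFinset]; exact ⟨hzX, hzp⟩
      rcases Finset.exists_mem_eq_sup' Finset.univ_nonempty (fun i => |z i - p i|) with ⟨i, _, hi⟩
      have h1 : hF.toFinset.inf' hFne val ≤ val z := Finset.inf'_le val hz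
      simp only [hval] at h1
      rw [hi] at h1
      exact ⟨i, h1⟩
  · refine ⟨1, one_pos, fun z hzX hzp => absurd ⟨hzX, hzp⟩ (fun hmem => hne ⟨z, hmem⟩)⟩

lemma noAcc1_of_finite {X : Set K} (h : X.Finite) : NoAcc1 X := by
  intro p
  have hF : (X \ {p}).Finite := h.diff
  by_cases hne : (X \ {p}).Nonempty
  · have hFne : hF.toFinset.Nonempty := by rwa [Set.Finite.toFinset_nonempty]
    refine ⟨hF.toFinset.inf' hFne (fun z => |z - p|), ?_, ?_⟩
    · refine (Finset.lt_inf'_iff _).mpr ?_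
      intro z hz
      rw [Set.Finite.mem_toFinset] at hz
      rw [abs_pos, sub_ne_zero]
      exact hz.2
    · intro z hzX hzp
      have hz : z ∈ hF.toFinset := by
        rw [Set.Finite.mem_toFinset]; exact ⟨hzX, hzp⟩
      exact Finset.inf'_le _ hz
  · exact ⟨1, one_pos, fun z hzX hzp => absurd ⟨hzX, hzp⟩ (fun hmem => hne ⟨z, hmem⟩)⟩

lemma noAcc_of_locally_finite {m : ℕ} {X : Set (Fin m → K)}
    (h : ∀ p : Fin m → K, ∃ ε > 0, (X ∩ {z | ∀ i, |z i - p i| < ε}).Finite) : NoAcc X := by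
  intro p
  rcases h p with ⟨ε, hε, hfin⟩
  rcases noAcc_of_finite hfin p with ⟨δ, hδ, hsep⟩
  refine ⟨min ε δ, lt_min hε hδ, fun z hzX hzp => ?_⟩
  by_contra hall
  push_neg at hall
  have hzmem : z ∈ X ∩ {z | ∀ i, |z i - p i| < ε} :=
    ⟨hzX, fun i => lt_of_lt_of_le (hall i) (min_le_left _ _)⟩
  rcases hsep z hzmem hzp with ⟨i, hi⟩
  exact absurd (hall i) (not_lt.mpr (le_trans (le_trans (min_le_right _ _) hi) le_rfl))

lemma noAcc1_of_locally_finite {X : Set K}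
    (h : ∀ p : K, ∃ ε > 0, (X ∩ {z | |z - p| < ε}).Finite) : NoAcc1 X := by
  intro p
  rcases h p with ⟨ε, hε, hfin⟩
  rcases noAcc1_of_finite hfin p with ⟨δ, hδ, hsep⟩
  refine ⟨min ε δ, lt_min hε hδ, fun z hzX hzp => ?_⟩
  by_contra hlt
  push_neg at hlt
  have hzmem : z ∈ X ∩ {z | |z - p| < ε} := ⟨hzX, lt_of_lt_of_le hlt (min_le_left _ _)⟩
  exact absurd hlt (not_lt.mpr (le_trans (min_le_right _ _) (hsep z hzmem hzp)))

/-- isolation radius for a point of a discrete set -/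
lemma discrete_isolation {m : ℕ} {X : Set (Fin m → K)} (h : Tame.IsDiscreteSet X)
    {x : Fin m → K} (hx : x ∈ X) :
    ∃ ε, 0 < ε ∧ ε ≤ 1 ∧ ∀ z ∈ X, z ≠ x → ∃ i, ε ≤ |z i - x i| := by
  rcases h x hx with ⟨U, hUopen, hUX⟩
  have hxU : x ∈ U := by
    have : x ∈ U ∩ X := hUX ▸ rfl
    exact this.1
  rcases exists_box_subset hUopen hxU with ⟨ε, hε, hbox⟩
  refine ⟨min ε 1, lt_min hε one_pos, min_le_right _ _, fun z hzX hzx => ?_⟩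
  by_contra hall
  push_neg at hall
  have : z ∈ U ∩ X := ⟨hbox z (fun i => lt_of_lt_of_le (hall i) (min_le_left _ _)), hzX⟩
  rw [hUX] at this
  exact hzx this

end D7

section D8

open Set

namespace Fm
variable {L : FirstOrder.Language} {K : Type*} [Field K] [LinearOrder K] [IsStrictOrderedRing K] [L.Structure K]

/-- block universal quantifier -/
def alls {n m : ℕ} (φ : Fm L K (n + m)) : Fm L K n := (exs φ.not).not

lemma realize_alls {n m : ℕ} (φ : Fm L K (n + m)) (x : Fin n → K) :
    (alls φ).Realize x ↔ ∀ y : Fin m → K, φ.Realize (Fin.append x y) := by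
  simp [alls, realize_exs]

end Fm

variable {L : FirstOrder.Language} {K : Type*} [Field K] [LinearOrder K] [IsStrictOrderedRing K]
  [TopologicalSpace K] [OrderTopology K] [L.Structure K]

lemma lubK (hdc : Tame.DefinablyComplete L K) {S : Set K}
    (hS : Set.Definable (univ : Set K) L {z : Fin 1 → K | z 0 ∈ S})
    (hne : S.Nonempty) (hb : BddAbove S) : ∃ a, IsLUB S a :=
  hdc S hS hne hb

lemma glbK (hexp : Tame.IsOrderedFieldExpansion L K) (hdc : Tame.DefinablyComplete L K)
    {S : Set K} (hS : Set.Definable (univ : Set K) L {z : Fin 1 → K | z 0 ∈ S})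
    (hne : S.Nonempty) (hb : BddBelow S) : ∃ a, IsGLB S a := by
  set T : Set K := {a : K | -a ∈ S} with hT
  have hTdef : Set.Definable (univ : Set K) L {z : Fin 1 → K | z 0 ∈ T} := by
    refine Tame.defSetOf hexp (Fm.mem {z : Fin 1 → K | z 0 ∈ S} hS ![(Tm.var 0).neg]) ?_
    intro x
    simp [hT, Tame.Tm.eval]
  have hTne : T.Nonempty := by
    rcases hne with ⟨s, hs⟩
    exact ⟨-s, by simp [hT, hs]⟩
  have hTb : BddAbove T := by
    rcases hb with ⟨b, hb⟩
    refine ⟨-b, fun t ht => ?_⟩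
    have : b ≤ -t := hb ht
    linarith
  rcases lubK hdc hTdef hTne hTb with ⟨a, ha⟩
  refine ⟨-a, ?_, ?_⟩
  · intro s hs
    have : -s ∈ T := by simp [hT, hs]
    have := ha.1 this
    linarith
  · intro b hb'
    have : -b ∈ upperBounds T := by
      intro t ht
      have : b ≤ -t := hb' ht
      linarith
    have := ha.2 this
    linarith

/-- the projection dropping the last coordinate -/
def projLast {m : ℕ} (X : Set (Fin (m + 1) → K)) : Set (Fin m → K) :=
  {q | ∃ y, Fin.snoc q y ∈ X}

lemma defProjLast (hexp : Tame.IsOrderedFieldExpansion L K) {m : ℕ}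
    {X : Set (Fin (m + 1) → K)} (hX : Set.Definable (univ : Set K) L X) :
    Set.Definable (univ : Set K) L (projLast X) := by
  refine Tame.defSetOf hexp (Fm.ex (Fm.mem X hX (fun j => Tm.var j))) ?_
  intro q
  show (∃ y, Fin.snoc q y ∈ X) ↔ _
  exact Iff.rfl

/-- fibers of the last-coordinate projection -/
def fibLast {m : ℕ} (X : Set (Fin (m + 1) → K)) (q : Fin m → K) : Set K :=
  {y | Fin.snoc q y ∈ X}

lemma defFibLast (hexp : Tame.IsOrderedFieldExpansion L K) {m : ℕ}
    {X : Set (Fin (m + 1) → K)} (hX : Set.Definable (univ : Set K) L X) (q : Fin m → K) :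
    Set.Definable (univ : Set K) L {z : Fin 1 → K | z 0 ∈ fibLast X q} := by
  refine Tame.defSetOf hexp
    (Fm.mem X hX ((Fin.snoc (fun i => Tm.const (q i)) (Tm.var 0) : Fin (m+1) → Tm K 1))) ?_
  intro z
  show Fin.snoc q (z 0) ∈ X ↔ _
  simp only [Fm.realize_mem]
  have he : (fun j => ((Fin.snoc (fun i => Tm.const (q i)) (Tm.var 0) : Fin (m+1) → Tm K 1) j).eval z)
      = (Fin.snoc q (z 0) : Fin (m+1) → K) := by
    funext j
    refine Fin.lastCases ?_ (fun i => ?_) j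
    · simp [Fin.snoc_last]
    · simp [Fin.snoc_castSucc]
  rw [he]

lemma fib_noAcc1 {m : ℕ} {X : Set (Fin (m + 1) → K)} (hna : NoAcc X) (q : Fin m → K) :
    NoAcc1 (fibLast X q) := by
  intro p
  rcases hna (Fin.snoc q p : Fin (m+1) → K) with ⟨ε, hε, hsep⟩
  refine ⟨ε, hε, fun z hz hzp => ?_⟩
  have hne : (Fin.snoc q z : Fin (m+1) → K) ≠ Fin.snoc q p := by
    intro he
    apply hzp
    have := congrFun he (Fin.last m)
    simpa [Fin.snoc_last] using this
  rcases hsep _ hz hne with ⟨i, hi⟩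
  refine Fin.lastCases ?_ (fun i' hi' => ?_) i hi
  · intro h
    simpa [Fin.snoc_last] using h
  · exfalso
    rw [Fin.snoc_castSucc, Fin.snoc_castSucc] at hi'
    simp at hi'
    linarith

end D8

section D9

open Set Tame

variable {L : FirstOrder.Language} {K : Type*} [Field K] [LinearOrder K] [IsStrictOrderedRing K]
  [TopologicalSpace K] [OrderTopology K] [L.Structure K]

lemma isLUB_iff' {S : Set K} {s : K} :
    IsLUB S s ↔ (∀ y ∈ S, y ≤ s) ∧ (∀ t, t < s → ∃ y, y ∈ S ∧ t < y) := by
  constructor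
  · rintro ⟨hub, hleast⟩
    refine ⟨fun y hy => hub hy, fun t ht => ?_⟩
    by_contra hno
    push_neg at hno
    have : t ∈ upperBounds S := fun y hy => hno y hy
    exact absurd (hleast this) (not_le.mpr ht)
  · rintro ⟨hub, hlt⟩
    refine ⟨fun y hy => hub y hy, fun b hb => ?_⟩
    by_contra hbs
    push_neg at hbs
    rcases hlt b hbs with ⟨y, hyS, hby⟩
    exact absurd (hb hyS) (not_le.mpr hby)

variable (K) in
/-- slice sets used in the projection argument -/
def projS {m : ℕ} (X : Set (Fin (m + 1) → K)) (q : Fin m → K) (δ : K) : Set K :=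
  {y | ∃ q' : Fin m → K, q' ≠ q ∧ (∀ i, |q' i - q i| ≤ δ) ∧ Fin.snoc q' y ∈ X}

variable (K) in
def projU {m : ℕ} (X : Set (Fin (m + 1) → K)) (q : Fin m → K) : Set (Fin 2 → K) :=
  {u | u 1 ∈ projS K X q (u 0)}

variable (K) in
def projSig {m : ℕ} (X : Set (Fin (m + 1) → K)) (q : Fin m → K) : Set K :=
  {s | ∃ δ, 0 < δ ∧ IsLUB (projS K X q δ) s}

@[simp] lemma mem_projS {m : ℕ} {X : Set (Fin (m + 1) → K)} {q : Fin m → K} {δ y : K} :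
    y ∈ projS K X q δ ↔ ∃ q' : Fin m → K, q' ≠ q ∧ (∀ i, |q' i - q i| ≤ δ) ∧
      Fin.snoc q' y ∈ X := Iff.rfl

@[simp] lemma mem_projU {m : ℕ} {X : Set (Fin (m + 1) → K)} {q : Fin m → K} {u : Fin 2 → K} :
    u ∈ projU K X q ↔ u 1 ∈ projS K X q (u 0) := Iff.rfl

@[simp] lemma mem_projSig {m : ℕ} {X : Set (Fin (m + 1) → K)} {q : Fin m → K} {s : K} :
    s ∈ projSig K X q ↔ ∃ δ, 0 < δ ∧ IsLUB (projS K X q δ) s := Iff.rfl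

lemma defProjU (hexp : Tame.IsOrderedFieldExpansion L K)
    {m : ℕ} {X : Set (Fin (m + 1) → K)} (hX : Set.Definable (univ : Set K) L X)
    (q : Fin m → K) : Set.Definable (univ : Set K) L (projU K X q) := by
  classical
  have hlt := hexp.1.mono (Set.empty_subset (univ : Set K))
  refine Tame.defSetOf hexp
    (Fm.exs (n := 2) (m := m)
      ((Fm.finOr (fun i => Fm.neF (Tm.var (Fin.natAdd 2 i)) (Tm.const (q i)))).and
        ((Fm.finAnd (fun i => Fm.absLeF hlt ((Tm.var (Fin.natAdd 2 i)).sub (Tm.const (q i)))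
            (Tm.var (Fin.castAdd m 0)))).and
          (Fm.mem X hX
            ((Fin.snoc (fun i => Tm.var (Fin.natAdd 2 i)) (Tm.var (Fin.castAdd m 1)) :
              Fin (m + 1) → Tm K (2 + m))))))) ?_
  intro u
  rw [Fm.realize_exs]
  have hbody : ∀ y : Fin m → K,
      ((Fm.finOr (fun i => Fm.neF (Tm.var (Fin.natAdd 2 i)) (Tm.const (q i)))).and
        ((Fm.finAnd (fun i => Fm.absLeF hlt ((Tm.var (Fin.natAdd 2 i)).sub (Tm.const (q i)))
            (Tm.var (Fin.castAdd m 0)))).and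
          (Fm.mem X hX
            ((Fin.snoc (fun i => Tm.var (Fin.natAdd 2 i)) (Tm.var (Fin.castAdd m 1)) :
              Fin (m + 1) → Tm K (2 + m)))))).Realize (Fin.append u y)
      ↔ (y ≠ q ∧ (∀ i, |y i - q i| ≤ u 0) ∧ (Fin.snoc y (u 1) : Fin (m + 1) → K) ∈ X) := by
    intro y
    have hmemX : (fun j => ((Fin.snoc (fun i => Tm.var (Fin.natAdd 2 i))
        (Tm.var (Fin.castAdd m 1)) : Fin (m + 1) → Tm K (2 + m)) j).eval (Fin.append u y))
        = (Fin.snoc y (u 1) : Fin (m + 1) → K) := by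
      funext j
      refine Fin.lastCases ?_ (fun i => ?_) j
      · simp [Fin.snoc_last, Fin.append_left]
      · simp [Fin.snoc_castSucc, Fin.append_right]
    simp only [Fm.realize_and, Fm.realize_finOr, Fm.realize_finAnd, Fm.realize_neF,
      Fm.realize_absLeF, Fm.realize_mem, Tm.eval_var, Tm.eval_sub, Tm.eval_const,
      Fin.append_right, Fin.append_left, hmemX]
    rw [← Function.ne_iff]
  constructor
  · intro hu
    rcases (mem_projU.mp hu) with ⟨q', h1, h2, h3⟩
    exact ⟨q', (hbody q').mpr ⟨h1, h2, h3⟩⟩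
  · rintro ⟨y, hy⟩
    rcases (hbody y).mp hy with ⟨h1, h2, h3⟩
    exact mem_projU.mpr ⟨y, h1, h2, h3⟩

lemma defProjS (hexp : Tame.IsOrderedFieldExpansion L K)
    {m : ℕ} {X : Set (Fin (m + 1) → K)} (hX : Set.Definable (univ : Set K) L X)
    (q : Fin m → K) (δ : K) :
    Set.Definable (univ : Set K) L {z : Fin 1 → K | z 0 ∈ projS K X q δ} := by
  refine Tame.defSetOf hexp (Fm.mem (projU K X q) (defProjU hexp hX q)
    ![Tm.const δ, Tm.var 0]) ?_
  intro z
  simp only [Fm.realize_mem, mem_setOf_eq]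
  have h0 : (fun i => ((![Tm.const δ, Tm.var 0] : Fin 2 → Tm K 1) i).eval z) ∈ projU K X q
      ↔ z 0 ∈ projS K X q δ := by
    rw [mem_projU]
    norm_num
  rw [h0]

lemma defProjSig (hexp : Tame.IsOrderedFieldExpansion L K)
    {m : ℕ} {X : Set (Fin (m + 1) → K)} (hX : Set.Definable (univ : Set K) L X)
    (q : Fin m → K) :
    Set.Definable (univ : Set K) L {z : Fin 1 → K | z 0 ∈ projSig K X q} := by
  classical
  have hlt := hexp.1.mono (Set.empty_subset (univ : Set K))
  have hU := defProjU hexp hX q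
  refine Tame.defSetOf hexp
    (Fm.ex ((Fm.ltF hlt (Tm.const 0) (Tm.var (Fin.last 1))).and
      ((Fm.all ((Fm.mem (projU K X q) hU
            ![Tm.var ((Fin.last 1).castSucc), Tm.var (Fin.last 2)]).imp
          (Fm.leF hlt (Tm.var (Fin.last 2)) (Tm.var (((0 : Fin 1).castSucc).castSucc))))).and
        (Fm.all ((Fm.ltF hlt (Tm.var (Fin.last 2))
            (Tm.var (((0 : Fin 1).castSucc).castSucc))).imp
          (Fm.ex ((Fm.mem (projU K X q) hU
              ![Tm.var (((Fin.last 1).castSucc).castSucc), Tm.var (Fin.last 3)]).and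
            (Fm.ltF hlt (Tm.var ((Fin.last 2).castSucc)) (Tm.var (Fin.last 3)))))))))) ?_
  intro x
  simp only [Fm.realize_ex, Fm.realize_and, Fm.realize_all, Fm.realize_imp, Fm.realize_ltF,
    Fm.realize_leF, Fm.realize_mem, Tm.eval_var, Tm.eval_const, mem_setOf_eq, mem_projU,
    Fin.snoc_last, Fin.snoc_castSucc, Matrix.cons_val_zero, Matrix.cons_val_one,
    Matrix.head_cons, mem_projSig]
  constructor
  · rintro ⟨δ, hδ, hlubδ⟩
    exact ⟨δ, hδ, fun y hy => hlubδ.1 hy, fun t ht => (isLUB_iff'.mp hlubδ).2 t ht⟩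
  · rintro ⟨δ, hδ, hub, hleast⟩
    exact ⟨δ, hδ, isLUB_iff'.mpr ⟨hub, hleast⟩⟩

lemma proj_noAcc (hexp : Tame.IsOrderedFieldExpansion L K) (hdc : Tame.DefinablyComplete L K)
    {m : ℕ} {X : Set (Fin (m + 1) → K)} (hX : Set.Definable (univ : Set K) L X)
    {r : K} (hbd : ∀ x ∈ X, ∀ i, |x i| ≤ r) (hna : NoAcc X) :
    NoAcc (projLast X) := by
  classical
  intro q
  by_contra hq
  push_neg at hq
  have hacc : ∀ δ : K, 0 < δ →
      ∃ q' : Fin m → K, q' ≠ q ∧ (∀ i, |q' i - q i| ≤ δ) ∧ ∃ y, Fin.snoc q' y ∈ X := by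
    intro δ hδ
    have h1 := hq δ hδ
    rw [SepAt] at h1
    push_neg at h1
    obtain ⟨z, hzP, hzq, hz⟩ := h1
    exact ⟨z, hzq, fun i => (hz i).le, hzP⟩
  have hSmono : ∀ {δ δ' : K}, δ ≤ δ' → projS K X q δ ⊆ projS K X q δ' := by
    intro δ δ' hδ y hy
    rcases hy with ⟨q', h1, h2, h3⟩
    exact ⟨q', h1, fun i => (h2 i).trans hδ, h3⟩
  have hSne : ∀ δ : K, 0 < δ → (projS K X q δ).Nonempty := by
    intro δ hδ
    rcases hacc δ hδ with ⟨q', h1, h2, y, hy⟩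
    exact ⟨y, q', h1, h2, hy⟩
  have hSub : ∀ δ : K, BddAbove (projS K X q δ) := by
    intro δ
    refine ⟨r, fun y hy => ?_⟩
    rcases hy with ⟨q', _, _, h3⟩
    have := hbd _ h3 (Fin.last m)
    rw [Fin.snoc_last] at this
    exact le_trans (le_abs_self y) this
  have hlub : ∀ δ : K, 0 < δ → ∃ s, IsLUB (projS K X q δ) s := fun δ hδ =>
    lubK hdc (defProjS hexp hX q δ) (hSne δ hδ) (hSub δ)
  -- the glb of the set of suprema
  have hSigne : (projSig K X q).Nonempty := by
    rcases hlub 1 one_pos with ⟨s, hs⟩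
    exact ⟨s, 1, one_pos, hs⟩
  have hSiglb : BddBelow (projSig K X q) := by
    refine ⟨-r, fun s hs => ?_⟩
    rcases hs with ⟨δ, hδ, hlubδ⟩
    rcases hSne δ hδ with ⟨y, hy⟩
    have h4 : -r ≤ y := by
      rcases hy with ⟨q', _, _, h3⟩
      have := hbd _ h3 (Fin.last m)
      rw [Fin.snoc_last] at this
      exact neg_le_of_abs_le this
    exact le_trans h4 (hlubδ.1 hy)
  rcases glbK hexp hdc (defProjSig hexp hX q) hSigne hSiglb with ⟨p, hp⟩
  -- now (snoc q p) is an accumulation point of X: contradiction with NoAcc X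
  rcases hna (Fin.snoc q p : Fin (m + 1) → K) with ⟨ε, hε, hsep⟩
  -- find δ₀ with lub close to p
  have hnotlb : ¬ (p + ε / 2) ∈ lowerBounds (projSig K X q) := by
    intro hlb
    have := hp.2 hlb
    linarith
  have hex : ∃ s ∈ projSig K X q, s < p + ε / 2 := by
    by_contra hno
    push_neg at hno
    exact hnotlb (fun s hs => (hno s hs))
  rcases hex with ⟨s, ⟨δ₀, hδ₀, hlub₀⟩, hs⟩
  set δ : K := min δ₀ (ε / 2) with hδdef
  have hδpos : 0 < δ := lt_min hδ₀ (by linarith)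
  rcases hlub δ hδpos with ⟨s', hs'⟩
  have hs's : s' ≤ s := by
    refine (isLUB_le_iff hs').mpr ?_
    intro y hy
    exact hlub₀.1 (hSmono (min_le_left _ _) hy)
  have hps' : p ≤ s' := hp.1 ⟨δ, hδpos, hs'⟩
  -- pick y ∈ S δ with y > s' - ε/2
  have hy : ∃ y, y ∈ projS K X q δ ∧ s' - ε / 2 < y := by
    rcases (isLUB_iff'.mp hs').2 (s' - ε / 2) (by linarith) with ⟨y, h1, h2⟩
    exact ⟨y, h1, h2⟩
  rcases hy with ⟨y, hymem, hylow⟩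
  have hyhigh : y ≤ s' := hs'.1 hymem
  rcases hymem with ⟨q', hq'ne, hq'close, hq'mem⟩
  -- the point snoc q' y is in X, close to snoc q p, and different from it
  have hne : (Fin.snoc q' y : Fin (m + 1) → K) ≠ Fin.snoc q p := by
    intro he
    apply hq'ne
    funext i
    have := congrFun he i.castSucc
    simpa [Fin.snoc_castSucc] using this
  rcases hsep _ hq'mem hne with ⟨i, hi⟩
  refine Fin.lastCases ?_ (fun i' => ?_) i hi
  · intro h
    rw [Fin.snoc_last, Fin.snoc_last] at h
    have h1 : |y - p| < ε := by
      rw [abs_lt]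
      constructor
      · have : s' < p + ε := by linarith
        nlinarith [hylow, hps']
      · nlinarith [hyhigh, hs's, hs]
    exact absurd h (not_le.mpr h1)
  · intro h
    rw [Fin.snoc_castSucc, Fin.snoc_castSucc] at h
    have h1 : |q' i' - q i'| ≤ δ := hq'close i'
    have h2 : δ < ε := lt_of_le_of_lt (min_le_right _ _) (by linarith)
    exact absurd h (not_le.mpr (lt_of_le_of_lt h1 h2))

end D9

section D10

open Set Tame

variable {L : FirstOrder.Language} {K : Type*} [Field K] [LinearOrder K] [IsStrictOrderedRing K]
  [TopologicalSpace K] [OrderTopology K] [L.Structure K]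

variable (L) in
/-- abbreviation for statement (3) -/
def H3prop (K : Type*) [Field K] [LinearOrder K] [IsStrictOrderedRing K] [TopologicalSpace K] [OrderTopology K]
    [L.Structure K] : Prop :=
  ∀ X : Set K, Set.Definable₁ (Set.univ : Set K) L X → IsClosed X → Tame.IsDiscreteSet X →
    X.Finite

lemma finite_of_subsingleton_amb {α : Type*} [Subsingleton α] (X : Set α) : X.Finite :=
  Set.subsingleton_of_subsingleton.finite

lemma pf_finite (hexp : Tame.IsOrderedFieldExpansion L K) (hdc : Tame.DefinablyComplete L K)
    (H3 : H3prop L K) :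
    ∀ (m : ℕ) (X : Set (Fin m → K)), Set.Definable (univ : Set K) L X →
      (∃ r, ∀ x ∈ X, ∀ i, |x i| ≤ r) → NoAcc X → X.Finite := by
  intro m
  induction m with
  | zero => intro X _ _ _; exact finite_of_subsingleton_amb X
  | succ m ih =>
      rintro X hX ⟨r, hbd⟩ hna
      have hP : (projLast X).Finite := by
        refine ih _ (defProjLast hexp hX) ⟨r, ?_⟩ (proj_noAcc hexp hdc hX hbd hna)
        rintro q ⟨y, hy⟩ i
        have := hbd _ hy i.castSucc
        rwa [Fin.snoc_castSucc] at this
      have hfib : ∀ q, (fibLast X q).Finite := by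
        intro q
        have hcd := noAcc1_iff.mp (fib_noAcc1 hna q)
        exact H3 _ (defFibLast hexp hX q) hcd.1 hcd.2
      have hcover : X = ⋃ q ∈ projLast X,
          (fun y => (Fin.snoc q y : Fin (m + 1) → K)) '' fibLast X q := by
        ext x
        constructor
        · intro hx
          refine Set.mem_biUnion (show Fin.init x ∈ projLast X from ⟨x (Fin.last m), ?_⟩) ?_
          · rwa [Fin.snoc_init_self]
          · refine ⟨x (Fin.last m), ?_, ?_⟩
            · show Fin.snoc (Fin.init x) (x (Fin.last m)) ∈ X
              rwa [Fin.snoc_init_self]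
            · exact Fin.snoc_init_self x
        · intro hx
          rcases Set.mem_iUnion₂.mp hx with ⟨q, hq, hy⟩
          rcases hy with ⟨y, hyf, rfl⟩
          exact hyf
      rw [hcover]
      exact hP.biUnion (fun q _ => (hfib q).image _)

lemma cd_finite (hexp : Tame.IsOrderedFieldExpansion L K) (hdc : Tame.DefinablyComplete L K)
    (H3 : H3prop L K) :
    ∀ (m : ℕ) (X : Set (Fin m → K)), Set.Definable (univ : Set K) L X → NoAcc X → X.Finite := by
  have hlt := hexp.1.mono (Set.empty_subset (univ : Set K))
  intro m
  match m with
  | 0 => intro X _ _; exact finite_of_subsingleton_amb X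
  | Nat.succ k =>
    intro X hX hna
    haveI : Nonempty (Fin (k + 1)) := ⟨0⟩
    set normFun : (Fin (k + 1) → K) → K :=
      fun x => Finset.univ.sup' Finset.univ_nonempty (fun i => |x i|) with hnf
    set N : Set K := {v : K | ∃ x, x ∈ X ∧ (∀ i, |x i| ≤ v) ∧ ∃ i, |x i| = v} with hN
    have hNdef : Set.Definable (univ : Set K) L {z : Fin 1 → K | z 0 ∈ N} := by
      refine Tame.defSetOf hexp
        (Fm.exs (n := 1) (m := k + 1)
          ((Fm.mem X hX (fun i => Tm.var (Fin.natAdd 1 i))).and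
            ((Fm.finAnd fun i => Fm.absLeF hlt (Tm.var (Fin.natAdd 1 i))
                (Tm.var (Fin.castAdd (k + 1) 0))).and
              (Fm.finOr fun i => (Fm.eqF (Tm.var (Fin.natAdd 1 i))
                  (Tm.var (Fin.castAdd (k + 1) 0))).or
                (Fm.eqF (Tm.var (Fin.natAdd 1 i))
                  ((Tm.var (Fin.castAdd (k + 1) 0)).neg)))))) ?_
      intro z
      rw [Fm.realize_exs]
      simp only [Fm.realize_and, Fm.realize_mem, Fm.realize_finAnd, Fm.realize_finOr,
        Fm.realize_or, Fm.realize_eqF, Fm.realize_absLeF, Tm.eval_var, Tm.eval_neg,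
        Fin.append_right, Fin.append_left, mem_setOf_eq]
      constructor
      · rintro ⟨x, hxX, hle, i₀, habs⟩
        refine ⟨x, hxX, fun i => hle i, ?_⟩
        · have hv0 : (0 : K) ≤ z 0 := le_trans (abs_nonneg _) (hle i₀)
          rcases (abs_eq hv0).mp habs with h | h
          · exact ⟨i₀, Or.inl h⟩
          · exact ⟨i₀, Or.inr h⟩
      · rintro ⟨y, hyX, hle, i₀, h⟩
        have hyX' : y ∈ X := hyX
        have hv0 : (0 : K) ≤ z 0 := le_trans (abs_nonneg _) (hle i₀)
        refine ⟨y, hyX', fun i => hle i, i₀, ?_⟩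
        rcases h with h | h
        · exact (abs_eq hv0).mpr (Or.inl h)
        · exact (abs_eq hv0).mpr (Or.inr h)
    have hNacc : NoAcc1 N := by
      apply noAcc1_of_locally_finite
      intro p
      refine ⟨1, one_pos, ?_⟩
      set c : K := |p| + 1 with hc
      have hboxdef : Set.Definable (univ : Set K) L {x : Fin (k+1) → K | x ∈ X ∧ ∀ i, |x i| ≤ c} := by
        refine Tame.defSetOf hexp
          ((Fm.mem X hX (fun i => Tm.var i)).and
            (Fm.finAnd fun i => Fm.absLeF hlt (Tm.var i) (Tm.const c))) ?_
        intro x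
        simp only [Fm.realize_and, Fm.realize_mem, Fm.realize_finAnd, Fm.realize_absLeF,
          Tm.eval_var, Tm.eval_const, mem_setOf_eq]
      have hboxfin : ({x : Fin (k+1) → K | x ∈ X ∧ ∀ i, |x i| ≤ c}).Finite := by
        refine pf_finite hexp hdc H3 _ _ hboxdef ⟨c, fun x hx i => hx.2 i⟩ ?_
        exact noAcc_mono hna (fun x hx => hx.1)
      refine Set.Finite.subset (hboxfin.image normFun) ?_
      rintro v ⟨hvN, hvp⟩
      rcases hvN with ⟨x, hxX, hle, i₀, habs⟩
      have hvc : v < c := by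
        rw [mem_setOf_eq] at hvp
        have h1 : v - p < 1 := lt_of_le_of_lt (le_abs_self _) hvp
        have h2 : p ≤ |p| := le_abs_self p
        rw [hc]; linarith
      have hnv : normFun x = v := by
        show Finset.univ.sup' Finset.univ_nonempty (fun i => |x i|) = v
        refine le_antisymm (Finset.sup'_le _ _ (fun i _ => hle i)) ?_
        rw [← habs]
        exact Finset.le_sup' (fun i => |x i|) (Finset.mem_univ i₀)
      exact ⟨x, ⟨hxX, fun i => le_trans (hle i) hvc.le⟩, hnv⟩
    have hNfin : N.Finite := by
      have h12 := noAcc1_iff.mp hNacc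
      exact H3 N hNdef h12.1 h12.2
    rcases Set.eq_empty_or_nonempty X with rfl | ⟨x₀, hx₀⟩
    · exact Set.finite_empty
    have hmemN : ∀ x ∈ X, normFun x ∈ N := by
      intro x hx
      refine ⟨x, hx, fun i => Finset.le_sup' (fun j => |x j|) (Finset.mem_univ i), ?_⟩
      rcases Finset.exists_mem_eq_sup' (Finset.univ_nonempty) (fun i => |x i|) with ⟨i, _, hi⟩
      exact ⟨i, hi.symm⟩
    have hNbdd : BddAbove N := hNfin.bddAbove
    rcases hNbdd with ⟨R, hR⟩
    refine pf_finite hexp hdc H3 _ _ hX ⟨R, fun x hx i => ?_⟩ hna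
    exact le_trans (Finset.le_sup' (fun j => |x j|) (Finset.mem_univ i)) (hR (hmemN x hx))

end D10

section D11

open Set Tame

namespace Fm
variable {L : FirstOrder.Language} {K : Type*} [Field K] [LinearOrder K] [IsStrictOrderedRing K] [L.Structure K]
variable (hlt : Set.Definable (univ : Set K) L {x : Fin 2 → K | x 0 < x 1})

/-- `a ≤ |b|` -/
def leAbsF {n : ℕ} (a b : Tm K n) : Fm L K n := (leF hlt a b).or (leF hlt a b.neg)

@[simp] lemma realize_leAbsF {n : ℕ} (a b : Tm K n) (x : Fin n → K) :
    (leAbsF hlt a b).Realize x ↔ a.eval x ≤ |b.eval x| := by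
  simp [leAbsF, le_abs]

end Fm

variable {L : FirstOrder.Language} {K : Type*} [Field K] [LinearOrder K] [IsStrictOrderedRing K]
  [TopologicalSpace K] [OrderTopology K] [L.Structure K]

variable (K) in
/-- the relation `x ∈ X` and `e` is a (capped) separation radius for `x` in `X` -/
def sepRel {n : ℕ} (X : Set (Fin n → K)) : Set (Fin (n + 1) → K) :=
  {w | Fin.init w ∈ X ∧ 0 < w (Fin.last n) ∧ w (Fin.last n) ≤ 1 ∧
    ∀ z ∈ X, z ≠ Fin.init w → ∃ i, w (Fin.last n) ≤ |z i - Fin.init w i|}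

lemma mem_sepRel_snoc {n : ℕ} {X : Set (Fin n → K)} {x : Fin n → K} {e : K} :
    (Fin.snoc x e : Fin (n + 1) → K) ∈ sepRel K X ↔
      x ∈ X ∧ 0 < e ∧ e ≤ 1 ∧ ∀ z ∈ X, z ≠ x → ∃ i, e ≤ |z i - x i| := by
  simp only [sepRel, mem_setOf_eq, Fin.init_snoc, Fin.snoc_last]

variable (K) in
/-- the max-separation-radius relation -/
def maxRel {n : ℕ} (X : Set (Fin n → K)) : Set (Fin (n + 1) → K) :=
  {w | w ∈ sepRel K X ∧ ∀ e' : K,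
      (Fin.snoc (Fin.init w) e' : Fin (n + 1) → K) ∈ sepRel K X → e' ≤ w (Fin.last n)}

lemma defSepRel (hexp : Tame.IsOrderedFieldExpansion L K) {n : ℕ} {X : Set (Fin n → K)}
    (hX : Set.Definable (univ : Set K) L X) :
    Set.Definable (univ : Set K) L (sepRel K X) := by
  classical
  have hlt := hexp.1.mono (Set.empty_subset (univ : Set K))
  refine Tame.defSetOf hexp
    ((Fm.mem X hX (fun i => Tm.var i.castSucc)).and
      ((Fm.ltF hlt (Tm.const 0) (Tm.var (Fin.last n))).and
        ((Fm.leF hlt (Tm.var (Fin.last n)) (Tm.const 1)).and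
          (Fm.alls (n := n + 1) (m := n)
            (((Fm.mem X hX (fun i => Tm.var (Fin.natAdd (n + 1) i))).and
                (Fm.finOr fun i => Fm.neF (Tm.var (Fin.natAdd (n + 1) i))
                  (Tm.var (Fin.castAdd n i.castSucc)))).imp
              (Fm.finOr fun i => Fm.leAbsF hlt (Tm.var (Fin.castAdd n (Fin.last n)))
                ((Tm.var (Fin.natAdd (n + 1) i)).sub
                  (Tm.var (Fin.castAdd n i.castSucc))))))))) ?_
  intro w
  rw [show (w ∈ sepRel K X) ↔ (Fin.init w ∈ X ∧ 0 < w (Fin.last n) ∧ w (Fin.last n) ≤ 1 ∧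
    ∀ z ∈ X, z ≠ Fin.init w → ∃ i, w (Fin.last n) ≤ |z i - Fin.init w i|) from Iff.rfl]
  simp only [Fm.realize_and, Fm.realize_mem, Fm.realize_ltF, Fm.realize_leF, Fm.realize_alls,
    Fm.realize_imp, Fm.realize_finOr, Fm.realize_neF, Fm.realize_leAbsF, Tm.eval_var,
    Tm.eval_const, Tm.eval_sub, Fin.append_left, Fin.append_right]
  constructor
  · rintro ⟨h1, h2, h3, h4⟩
    refine ⟨h1, h2, h3, fun z => ?_⟩
    rintro ⟨hz1, hz2⟩
    have hzne : z ≠ Fin.init w := by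
      rw [Function.ne_iff]
      exact hz2
    exact h4 z hz1 hzne
  · rintro ⟨h1, h2, h3, h4⟩
    refine ⟨h1, h2, h3, fun z hz1 hz2 => ?_⟩
    exact h4 z ⟨hz1, Function.ne_iff.mp hz2⟩

lemma defMaxRel (hexp : Tame.IsOrderedFieldExpansion L K) {n : ℕ} {X : Set (Fin n → K)}
    (hX : Set.Definable (univ : Set K) L X) :
    Set.Definable (univ : Set K) L (maxRel K X) := by
  classical
  have hlt := hexp.1.mono (Set.empty_subset (univ : Set K))
  have hD := defSepRel hexp hX
  refine Tame.defSetOf hexp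
    ((Fm.mem (sepRel K X) hD (fun j => Tm.var j)).and
      (Fm.all ((Fm.mem (sepRel K X) hD
          ((Fin.snoc (fun i : Fin n => Tm.var i.castSucc.castSucc)
            (Tm.var (Fin.last (n + 1))) : Fin (n + 1) → Tm K (n + 2)))).imp
        (Fm.leF hlt (Tm.var (Fin.last (n + 1))) (Tm.var ((Fin.last n).castSucc)))))) ?_
  intro w
  have hσ : ∀ e' : K, (fun j => ((Fin.snoc (fun i : Fin n => Tm.var i.castSucc.castSucc)
      (Tm.var (Fin.last (n + 1))) : Fin (n + 1) → Tm K (n + 2)) j).eval (Fin.snoc w e'))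
      = (Fin.snoc (Fin.init w) e' : Fin (n + 1) → K) := by
    intro e'
    funext j
    refine Fin.lastCases ?_ (fun i => ?_) j
    · simp [Fin.snoc_last]
    · simp [Fin.snoc_castSucc, Fin.init]
  show (w ∈ sepRel K X ∧ _) ↔ _
  simp only [Fm.realize_and, Fm.realize_mem, Fm.realize_all, Fm.realize_imp, Fm.realize_leF,
    Tm.eval_var, hσ, Fin.snoc_last, Fin.snoc_castSucc]

/-- slice of a relation at a fixed last coordinate -/
lemma defSliceLast (hexp : Tame.IsOrderedFieldExpansion L K) {n : ℕ}
    {D : Set (Fin (n + 1) → K)} (hD : Set.Definable (univ : Set K) L D) (ε : K) :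
    Set.Definable (univ : Set K) L {x : Fin n → K | (Fin.snoc x ε : Fin (n + 1) → K) ∈ D} := by
  refine Tame.defSetOf hexp
    (Fm.mem D hD ((Fin.snoc (fun i : Fin n => Tm.var i) (Tm.const ε) : Fin (n + 1) → Tm K n))) ?_
  intro x
  simp only [Fm.realize_mem, mem_setOf_eq]
  have he : (fun j => ((Fin.snoc (fun i : Fin n => Tm.var i) (Tm.const ε) :
      Fin (n + 1) → Tm K n) j).eval x) = (Fin.snoc x ε : Fin (n + 1) → K) := by
    funext j
    refine Fin.lastCases ?_ (fun i => ?_) j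
    · simp [Fin.snoc_last]
    · simp [Fin.snoc_castSucc]
  rw [he]

lemma defVSet (hexp : Tame.IsOrderedFieldExpansion L K) {n : ℕ}
    {M : Set (Fin (n + 1) → K)} (hM : Set.Definable (univ : Set K) L M) :
    Set.Definable (univ : Set K) L
      {z : Fin 1 → K | z 0 ∈ {v : K | ∃ w ∈ M, v * w (Fin.last n) = 1}} := by
  classical
  refine Tame.defSetOf hexp
    (Fm.exs (n := 1) (m := n + 1)
      ((Fm.mem M hM (fun j => Tm.var (Fin.natAdd 1 j))).and
        (Fm.eqF ((Tm.var (Fin.castAdd (n + 1) 0)).mul (Tm.var (Fin.natAdd 1 (Fin.last n))))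
          (Tm.const 1)))) ?_
  intro z
  rw [Fm.realize_exs]
  simp only [Fm.realize_and, Fm.realize_mem, Fm.realize_eqF, Tm.eval_var, Tm.eval_mul,
    Tm.eval_const, Fin.append_right, Fin.append_left, mem_setOf_eq]


lemma discrete_finite (hexp : Tame.IsOrderedFieldExpansion L K)
    (hdc : Tame.DefinablyComplete L K) (H3 : H3prop L K) :
    ∀ (m : ℕ) (X : Set (Fin m → K)), Set.Definable (univ : Set K) L X →
      Tame.IsDiscreteSet X → X.Finite := by
  intro m
  match m with
  | 0 => intro X _ _; exact finite_of_subsingleton_amb X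
  | Nat.succ k =>
    intro X hX hdisc
    set n : ℕ := k + 1 with hn
    haveI : Nonempty (Fin n) := ⟨0⟩
    have hD := defSepRel hexp hX
    have hM := defMaxRel hexp hX
    -- each point has a maximal capped separation radius
    have hcx : ∀ x ∈ X, ∃ c : K, IsLUB (fibLast (sepRel K X) x) c := by
      intro x hx
      rcases discrete_isolation hdisc hx with ⟨ε, hε0, hε1, hεsep⟩
      have hne : (fibLast (sepRel K X) x).Nonempty :=
        ⟨ε, mem_sepRel_snoc.mpr ⟨hx, hε0, hε1, hεsep⟩⟩
      have hub : BddAbove (fibLast (sepRel K X) x) := by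
        refine ⟨1, fun e he => ?_⟩
        exact (mem_sepRel_snoc.mp he).2.2.1
      exact lubK hdc (defFibLast hexp hD x) hne hub
    have hmax : ∀ x ∈ X, ∀ c : K, IsLUB (fibLast (sepRel K X) x) c →
        (Fin.snoc x c : Fin (n + 1) → K) ∈ maxRel K X := by
      intro x hx c hc
      have hmem : (Fin.snoc x c : Fin (n + 1) → K) ∈ sepRel K X := by
        rcases discrete_isolation hdisc hx with ⟨ε, hε0, hε1, hεsep⟩
        have hεD : ε ∈ fibLast (sepRel K X) x :=
          mem_sepRel_snoc.mpr ⟨hx, hε0, hε1, hεsep⟩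
        refine mem_sepRel_snoc.mpr ⟨hx, lt_of_lt_of_le hε0 (hc.1 hεD), ?_, ?_⟩
        · refine hc.2 ?_
          intro e he
          exact (mem_sepRel_snoc.mp he).2.2.1
        · intro z hz hzx
          have hub : (Finset.univ.sup' Finset.univ_nonempty (fun i => |z i - x i|)) ∈
              upperBounds (fibLast (sepRel K X) x) := by
            intro e he
            rcases (mem_sepRel_snoc.mp he).2.2.2 z hz hzx with ⟨i, hi⟩
            exact le_trans hi (Finset.le_sup' (fun i => |z i - x i|) (Finset.mem_univ i))
          have hcM := hc.2 hub
          rcases Finset.exists_mem_eq_sup' (Finset.univ_nonempty) (fun i => |z i - x i|)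
            with ⟨i, _, hi⟩
          exact ⟨i, by rw [← hi]; exact hcM⟩
      refine ⟨hmem, fun e' he' => ?_⟩
      rw [Fin.init_snoc] at he'
      rw [Fin.snoc_last]
      exact hc.1 he'
    -- the set of reciprocals of maximal radii
    set V : Set K := {v : K | ∃ w ∈ maxRel K X, v * w (Fin.last n) = 1} with hV
    have hV1 : ∀ v ∈ V, 1 ≤ v := by
      rintro v ⟨w, hw, hv⟩
      have h1 := hw.1
      have he0 : 0 < w (Fin.last n) := h1.2.1
      have he1 : w (Fin.last n) ≤ 1 := h1.2.2.1
      nlinarith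
    -- V is locally finite, hence finite by H3
    have hVacc : NoAcc1 V := by
      apply noAcc1_of_locally_finite
      intro p
      refine ⟨1, one_pos, ?_⟩
      by_cases hp : p ≤ 0
      · convert Set.finite_empty
        rw [Set.eq_empty_iff_forall_notMem]
        rintro v ⟨hvV, hvp⟩
        rw [mem_setOf_eq] at hvp
        have h1 : v - p < 1 := lt_of_le_of_lt (le_abs_self _) hvp
        have h2 := hV1 v hvV
        linarith
      push_neg at hp
      set ε₀ : K := (p + 1)⁻¹ with hε₀
      have hp1 : (0 : K) < p + 1 := by linarith
      have hε₀pos : 0 < ε₀ := by positivity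
      have hε₀le : ε₀ ≤ 1 := by
        rw [hε₀]
        rw [inv_le_one_iff₀]
        right; linarith
      -- the ε₀-separated slice is finite
      have hslicesep : ∀ x ∈ {x : Fin n → K | (Fin.snoc x ε₀ : Fin (n+1) → K) ∈ sepRel K X},
          ∀ y ∈ {x : Fin n → K | (Fin.snoc x ε₀ : Fin (n+1) → K) ∈ sepRel K X},
          x ≠ y → ∃ i, ε₀ ≤ |x i - y i| := by
        intro x hx y hy hxy
        have := (mem_sepRel_snoc.mp hy).2.2.2 x (mem_sepRel_snoc.mp hx).1 hxy
        exact this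
      have hslicefin : ({x : Fin n → K | (Fin.snoc x ε₀ : Fin (n+1) → K) ∈ sepRel K X}).Finite :=
        cd_finite hexp hdc H3 n _ (defSliceLast hexp hD ε₀)
          (noAcc_of_separated hε₀pos hslicesep)
      -- V near p injects into the slice
      refine Set.Finite.subset (Set.Finite.biUnion hslicefin
        (fun x _ => (?_ : ({v : K | ∃ e : K, (Fin.snoc x e : Fin (n+1) → K) ∈ maxRel K X ∧
          v * e = 1}).Finite))) ?_
      · -- each fiber is a subsingleton
        apply Set.Subsingleton.finite
        rintro v ⟨e, he, hv⟩ v' ⟨e', he', hv'⟩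
        have h1 : e' ≤ e := by
          have := he.2 e'
          rw [Fin.init_snoc, Fin.snoc_last] at this
          exact this he'.1
        have h2 : e ≤ e' := by
          have := he'.2 e
          rw [Fin.init_snoc, Fin.snoc_last] at this
          exact this he.1
        have hee : e = e' := le_antisymm h2 h1
        have he0 : 0 < e := (mem_sepRel_snoc.mp he.1).2.1
        subst hee
        have : v * e = v' * e := by rw [hv, hv']
        exact mul_right_cancel₀ (ne_of_gt he0) this
      · rintro v ⟨hvV, hvp⟩
        rcases hvV with ⟨w, hw, hv⟩
        rw [mem_setOf_eq] at hvp
        have hv1 : 1 ≤ v := hV1 v ⟨w, hw, hv⟩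
        have hvlt : v < p + 1 := by
          have h1 : v - p < 1 := lt_of_le_of_lt (le_abs_self _) hvp
          linarith
        have he0 : 0 < w (Fin.last n) := hw.1.2.1
        have heε₀ : ε₀ ≤ w (Fin.last n) := by
          have hv0 : 0 < v := by linarith
          have he' : w (Fin.last n) = v⁻¹ := by
            field_simp
            linarith [hv]
          rw [he', hε₀]
          exact le_of_lt ((inv_lt_inv₀ hp1 hv0).mpr hvlt)
        refine Set.mem_biUnion (?_ : Fin.init w ∈ _) ?_
        · rw [mem_setOf_eq]
          rcases hw.1 with ⟨hw1, hw2, hw3, hw4⟩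
          refine mem_sepRel_snoc.mpr ⟨hw1, hε₀pos, hε₀le, fun z hz hzx => ?_⟩
          rcases hw4 z hz hzx with ⟨i, hi⟩
          exact ⟨i, le_trans heε₀ hi⟩
        · rw [mem_setOf_eq]
          refine ⟨w (Fin.last n), ?_, hv⟩
          rw [Fin.snoc_init_self]
          exact hw
    have hVdef := defVSet hexp hM
    have hVfin : V.Finite := by
      have h12 := noAcc1_iff.mp hVacc
      exact H3 V hVdef h12.1 h12.2
    -- conclude
    rcases Set.eq_empty_or_nonempty X with rfl | ⟨x₀, hx₀⟩
    · exact Set.finite_empty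
    rcases hcx x₀ hx₀ with ⟨c₀, hc₀⟩
    have hc₀mem := hmax x₀ hx₀ c₀ hc₀
    have hc₀pos : 0 < c₀ := by
      have := hc₀mem.1.2.1
      rwa [Fin.snoc_last] at this
    have hv₀ : c₀⁻¹ ∈ V := by
      refine ⟨Fin.snoc x₀ c₀, hc₀mem, ?_⟩
      rw [Fin.snoc_last]
      exact inv_mul_cancel₀ (ne_of_gt hc₀pos)
    rcases hVfin.bddAbove with ⟨R, hR⟩
    have hR1 : 1 ≤ R := le_trans (hV1 _ hv₀) (hR hv₀)
    have hR0 : 0 < R := by linarith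
    have hXsub : X ⊆ {x : Fin n → K | (Fin.snoc x R⁻¹ : Fin (n+1) → K) ∈ sepRel K X} := by
      intro x hx
      rcases hcx x hx with ⟨c, hc⟩
      have hcmem := hmax x hx c hc
      have hcpos : 0 < c := by
        have := hcmem.1.2.1
        rwa [Fin.snoc_last] at this
      have hcv : c⁻¹ ∈ V := by
        refine ⟨Fin.snoc x c, hcmem, ?_⟩
        rw [Fin.snoc_last]
        exact inv_mul_cancel₀ (ne_of_gt hcpos)
      have hcR : c⁻¹ ≤ R := hR hcv
      have hRc : R⁻¹ ≤ c := by
        have := inv_anti₀ (by positivity : (0:K) < c⁻¹) hcR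
        rwa [inv_inv] at this
      rcases hcmem.1 with ⟨hw1, hw2, hw3, hw4⟩
      rw [Fin.init_snoc] at hw1 hw4
      rw [Fin.snoc_last] at hw2 hw3 hw4
      refine mem_sepRel_snoc.mpr ⟨hw1, by positivity, ?_, fun z hz hzx => ?_⟩
      · rw [inv_le_one_iff₀]; right; exact hR1
      · rcases hw4 z hz hzx with ⟨i, hi⟩
        exact ⟨i, le_trans hRc hi⟩
    have hsep : ∀ x ∈ {x : Fin n → K | (Fin.snoc x R⁻¹ : Fin (n+1) → K) ∈ sepRel K X},
        ∀ y ∈ {x : Fin n → K | (Fin.snoc x R⁻¹ : Fin (n+1) → K) ∈ sepRel K X},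
        x ≠ y → ∃ i, R⁻¹ ≤ |x i - y i| := by
      intro x hx y hy hxy
      exact (mem_sepRel_snoc.mp hy).2.2.2 x (mem_sepRel_snoc.mp hx).1 hxy
    have hslicefin : ({x : Fin n → K | (Fin.snoc x R⁻¹ : Fin (n+1) → K) ∈ sepRel K X}).Finite :=
      cd_finite hexp hdc H3 n _ (defSliceLast hexp hD R⁻¹)
        (noAcc_of_separated (by positivity) hsep)
    exact hslicefin.subset hXsub

end D11

section D12

open Set Tame

variable {L : FirstOrder.Language} {K : Type*} [Field K] [LinearOrder K] [IsStrictOrderedRing K]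
  [TopologicalSpace K] [OrderTopology K] [L.Structure K]

variable (K) in
def lift1 (X : Set K) : Set (Fin 1 → K) := {z : Fin 1 → K | z 0 ∈ X}

lemma lift1_closed {X : Set K} (h : IsClosed X) : IsClosed (lift1 K X) :=
  h.preimage (continuous_apply 0)

lemma lift1_discrete {X : Set K} (h : Tame.IsDiscreteSet X) :
    Tame.IsDiscreteSet (lift1 K X) := by
  intro z hz
  rcases h (z 0) hz with ⟨U, hUopen, hUX⟩
  refine ⟨(fun w : Fin 1 → K => w 0) ⁻¹' U, hUopen.preimage (continuous_apply 0), ?_⟩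
  apply Set.eq_singleton_iff_unique_mem.mpr
  constructor
  · refine ⟨?_, hz⟩
    have : z 0 ∈ U ∩ X := hUX ▸ rfl
    exact this.1
  · rintro w ⟨hwU, hwX⟩
    have : w 0 ∈ U ∩ X := ⟨hwU, hwX⟩
    rw [hUX, Set.mem_singleton_iff] at this
    funext i
    rw [Fin.eq_zero i]
    exact this

lemma lift1_finite {X : Set K} (h : (lift1 K X).Finite) : X.Finite := by
  have : X = (fun z : Fin 1 → K => z 0) '' lift1 K X := by
    ext x
    constructor
    · intro hx
      exact ⟨fun _ => x, hx, rfl⟩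
    · rintro ⟨z, hz, rfl⟩
      exact hz
  rw [this]
  exact h.image _

lemma finite_bdd1 {X : Set K} (h : X.Finite) : ∃ r, ∀ x ∈ X, |x| ≤ r := by
  rcases (h.image abs).bddAbove with ⟨r, hr⟩
  exact ⟨r, fun x hx => hr (Set.mem_image_of_mem abs hx)⟩

end D12

/-- characterizations of having o-minimal open core. -/
theorem statement2
    (hexp : IsOrderedFieldExpansion L K)
    (hdc : DefinablyComplete L K) :
    List.TFAE
      [ (AMinimal L K ∧ ∀ X : Set K, Set.Definable₁ (Set.univ : Set K) L X →
          PseudoFinite1 K X → X.Finite),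
        (AMinimal L K ∧ ∀ n : ℕ, ∀ X : Set (Fin n → K), Set.Definable (Set.univ : Set K) L X →
          PseudoFinite K X → X.Finite),
        (∀ X : Set K, Set.Definable₁ (Set.univ : Set K) L X → IsClosed X → IsDiscreteSet X →
          X.Finite),
        (∀ n : ℕ, ∀ X : Set (Fin n → K), Set.Definable (Set.univ : Set K) L X → IsClosed X →
          IsDiscreteSet X → X.Finite),
        (∀ X : Set K, Set.Definable₁ (Set.univ : Set K) L X → IsDiscreteSet X → X.Finite),
        (∀ n : ℕ, ∀ X : Set (Fin n → K), Set.Definable (Set.univ : Set K) L X →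
          IsDiscreteSet X → X.Finite) ] := by
  have hlt := hexp.1.mono (Set.empty_subset (Set.univ : Set K))
  tfae_have 1 → 3 := by
    rintro ⟨hA, hPF⟩ X hXdef hXcl hXdisc
    exact hPF X hXdef (hA X hXdef hXdisc hXcl)
  tfae_have 3 → 6 := by
    intro h3 n X hdef hdisc
    exact discrete_finite hexp hdc h3 n X hdef hdisc
  tfae_have 6 → 5 := by
    intro h6 X hXdef hXdisc
    exact lift1_finite (h6 1 (lift1 K X) hXdef (lift1_discrete hXdisc))
  tfae_have 5 → 3 := by
    intro h5 X hdef _ hdisc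
    exact h5 X hdef hdisc
  tfae_have 6 → 4 := by
    intro h6 n X hdef _ hdisc
    exact h6 n X hdef hdisc
  tfae_have 4 → 3 := by
    intro h4 X hdef hcl hdisc
    exact lift1_finite (h4 1 (lift1 K X) hdef (lift1_closed hcl) (lift1_discrete hdisc))
  tfae_have 3 → 2 := by
    intro h3
    constructor
    · intro X hdef hdisc hcl
      have hfin := h3 X hdef hcl hdisc
      exact ⟨hcl, finite_bdd1 hfin, hdisc⟩
    · intro n X hdef hPF
      exact discrete_finite hexp hdc h3 n X hdef hPF.2.2
  tfae_have 2 → 1 := by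
    rintro ⟨hA, h2⟩
    refine ⟨hA, fun X hdef hPF => ?_⟩
    rcases hPF with ⟨hcl, ⟨r, hr⟩, hdisc⟩
    refine lift1_finite (h2 1 (lift1 K X) hdef ⟨lift1_closed hcl, ⟨r, ?_⟩, lift1_discrete hdisc⟩)
    intro z hz i
    rw [Fin.eq_zero i]
    exact hr _ hz
  tfae_finish

end Tame
end

section
/- Let K be a definably complete expansion of an ordered field. The following are equivalent: (1) K is locally o-minimal, i.e., for every definable f : K → K and every x ∈ K there exists y > x such that f > 0 on (x,y), or f = 0 on (x,y), or f < 0 on (x,y); (2) for every definable X ⊆ K and every x ∈ K there exists y > x such that either (x,y) ⊆ X or (x,y) ∩ X = ∅; (3) every definable subset of K is either pseudo-finite or has nonempty interior. -/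
open FirstOrder Set

namespace Tame

variable (L : FirstOrder.Language) (K : Type*) [Field K] [LinearOrder K]
  [IsStrictOrderedRing K]
  [TopologicalSpace K] [OrderTopology K] [L.Structure K]

section Helpers

set_option linter.unusedSectionVars false
set_option maxHeartbeats 1000000

variable {L : FirstOrder.Language} {K : Type*} [Field K] [LinearOrder K]
  [IsStrictOrderedRing K]
  [TopologicalSpace K] [OrderTopology K] [L.Structure K]

lemma definable_fiber {n : ℕ} {S : Set (Fin (n+1) → K)}
    (hS : Set.Definable (univ : Set K) L S) (a : K) :
    Set.Definable (univ : Set K) L {x : Fin n → K | Fin.snoc x a ∈ S} := by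
  obtain ⟨φ, hφ⟩ := hS
  refine ⟨φ.subst (Fin.snoc (fun j => Language.Term.var j)
    ((L.con (⟨a, mem_univ a⟩ : (univ : Set K))).term)), ?_⟩
  ext x
  rw [mem_setOf_eq, hφ, mem_setOf_eq, mem_setOf_eq]
  have hv : (fun i => Language.Term.realize x ((Fin.snoc (fun j => Language.Term.var j)
      ((L.con (⟨a, mem_univ a⟩ : (univ : Set K))).term) : Fin (n+1) → _) i)) = Fin.snoc x a := by
    funext i
    refine Fin.lastCases ?_ (fun j => ?_) i
    · simp [Fin.snoc_last, Language.Term.realize_con]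
    · simp [Fin.snoc_castSucc]
  show φ.Realize (Fin.snoc x a) ↔
    Language.BoundedFormula.Realize (φ.subst _) x default
  rw [Language.BoundedFormula.realize_subst, hv]
  rfl


section Atoms

variable (hlt : Set.Definable (univ : Set K) L {x : Fin 2 → K | x 0 < x 1})
variable (hadd : Set.Definable (univ : Set K) L {x : Fin 3 → K | x 0 + x 1 = x 2})
variable (hmul : Set.Definable (univ : Set K) L {x : Fin 3 → K | x 0 * x 1 = x 2})

include hlt hadd hmul in
lemma dummy0 : True := trivial

include hlt in
lemma defLT {n : ℕ} (i j : Fin n) :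
    Set.Definable (univ : Set K) L {x : Fin n → K | x i < x j} := by
  have h := hlt.preimage_comp (![i, j] : Fin 2 → Fin n)
  convert h using 1
  rfl

include hadd in
lemma defAdd {n : ℕ} (i j k : Fin n) :
    Set.Definable (univ : Set K) L {x : Fin n → K | x i + x j = x k} := by
  have h := hadd.preimage_comp (![i, j, k] : Fin 3 → Fin n)
  convert h using 1
  rfl

include hmul in
lemma defMul {n : ℕ} (i j k : Fin n) :
    Set.Definable (univ : Set K) L {x : Fin n → K | x i * x j = x k} := by
  have h := hmul.preimage_comp (![i, j, k] : Fin 3 → Fin n)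
  convert h using 1
  rfl

include hlt in
lemma defEq {n : ℕ} (i j : Fin n) :
    Set.Definable (univ : Set K) L {x : Fin n → K | x i = x j} := by
  have h := ((defLT hlt i j).union (defLT hlt j i)).compl
  convert h using 1
  ext g
  simp [not_or, le_antisymm_iff, not_lt]
  tauto

include hadd in
lemma defZero {n : ℕ} (i : Fin n) :
    Set.Definable (univ : Set K) L {x : Fin n → K | x i = 0} := by
  have h := defAdd hadd i i i
  convert h using 1
  ext g
  simp [add_eq_left]

include hmul hadd in
lemma defOne {n : ℕ} (i : Fin n) :
    Set.Definable (univ : Set K) L {x : Fin n → K | x i = 1} := by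
  have h := (defMul hmul i i i).inter (defZero hadd i).compl
  convert h using 1
  ext g
  simp only [mem_setOf_eq, mem_inter_iff, mem_compl_iff]
  constructor
  · intro h1
    refine ⟨by rw [h1]; ring, by rw [h1]; exact one_ne_zero⟩
  · rintro ⟨h1, h2⟩
    exact mul_left_cancel₀ h2 (by rw [mul_one]; exact h1)

lemma defMem {n : ℕ} (i : Fin n) {X : Set K}
    (hX : Set.Definable₁ (univ : Set K) L X) :
    Set.Definable (univ : Set K) L {x : Fin n → K | x i ∈ X} := by
  have h := Set.Definable.preimage_comp (M := K) (![i] : Fin 1 → Fin n) hX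
  convert h using 1
  rfl

lemma defProj1 {n : ℕ} {S : Set (Fin (n+1) → K)}
    (hS : Set.Definable (univ : Set K) L S) :
    Set.Definable₁ (univ : Set K) L {z : K | ∃ y ∈ S, y 0 = z} := by
  have h := hS.image_comp (![0] : Fin 1 → Fin (n+1))
  show Set.Definable (univ : Set K) L {x : Fin 1 → K | x 0 ∈ {z : K | ∃ y ∈ S, y 0 = z}}
  convert h using 1
  ext g
  simp only [mem_setOf_eq, mem_image]
  constructor
  · rintro ⟨y, hy, hy0⟩
    exact ⟨y, hy, by funext k; fin_cases k; simpa using hy0⟩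
  · rintro ⟨y, hy, rfl⟩
    exact ⟨y, hy, by simp [Function.comp]⟩

end Atoms


section Derived

variable (hlt : Set.Definable (univ : Set K) L {x : Fin 2 → K | x 0 < x 1})
variable (hadd : Set.Definable (univ : Set K) L {x : Fin 3 → K | x 0 + x 1 = x 2})
variable (hmul : Set.Definable (univ : Set K) L {x : Fin 3 → K | x 0 * x 1 = x 2})

lemma defCompl1 {X : Set K} (hX : Set.Definable₁ (univ : Set K) L X) :
    Set.Definable₁ (univ : Set K) L Xᶜ := by
  have h := Set.Definable.compl hX
  show Set.Definable (univ : Set K) L {x : Fin 1 → K | x 0 ∈ Xᶜ}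
  convert h using 1
  rfl

lemma defInter1 {X Y : Set K} (hX : Set.Definable₁ (univ : Set K) L X)
    (hY : Set.Definable₁ (univ : Set K) L Y) :
    Set.Definable₁ (univ : Set K) L (X ∩ Y) := by
  have h := Set.Definable.inter hX hY
  show Set.Definable (univ : Set K) L {x : Fin 1 → K | x 0 ∈ X ∩ Y}
  convert h using 1
  rfl

include hlt in
lemma defIoi (a : K) : Set.Definable₁ (univ : Set K) L (Set.Ioi a) := by
  have h := definable_fiber (defLT hlt (1 : Fin 2) (0 : Fin 2)) a
  show Set.Definable (univ : Set K) L {x : Fin 1 → K | x 0 ∈ Set.Ioi a}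
  convert h using 1
  rfl

include hlt in
lemma defIio (a : K) : Set.Definable₁ (univ : Set K) L (Set.Iio a) := by
  have h := definable_fiber (defLT hlt (0 : Fin 2) (1 : Fin 2)) a
  show Set.Definable (univ : Set K) L {x : Fin 1 → K | x 0 ∈ Set.Iio a}
  convert h using 1
  rfl

include hlt in
lemma defIcc (a b : K) : Set.Definable₁ (univ : Set K) L (Set.Icc a b) := by
  have h := defInter1 (defCompl1 (defIio hlt a)) (defCompl1 (defIoi hlt b))
  convert h using 1
  rw [compl_Iio, compl_Ioi, Ici_inter_Iic]

include hlt hadd in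
lemma defNegSet {X : Set K} (hX : Set.Definable₁ (univ : Set K) L X) :
    Set.Definable₁ (univ : Set K) L {z : K | -z ∈ X} := by
  have hS : Set.Definable (univ : Set K) L
      ({y : Fin 3 → K | y 1 ∈ X} ∩ ({y | y 2 = 0} ∩ {y | y 0 + y 1 = y 2})) :=
    (defMem 1 hX).inter ((defZero hadd 2).inter (defAdd hadd 0 1 2))
  have h := defProj1 hS
  convert h using 1
  ext z
  simp only [mem_setOf_eq, mem_inter_iff]
  constructor
  · intro hz
    exact ⟨![z, -z, 0], ⟨by simpa using hz, by simp, by simp⟩, by simp⟩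
  · rintro ⟨y, ⟨h1, h2, h3⟩, rfl⟩
    have : y 1 = -(y 0) := by rw [h2] at h3; linarith
    rwa [this] at h1

include hlt hadd hmul in
lemma defInvSet {X : Set K} (hX : Set.Definable₁ (univ : Set K) L X) :
    Set.Definable₁ (univ : Set K) L {z : K | ∃ w, w ∈ X ∧ 0 < w ∧ z * w = 1} := by
  have hS : Set.Definable (univ : Set K) L
      ({y : Fin 4 → K | y 1 ∈ X} ∩ ({y | y 2 = 1} ∩ ({y | y 3 = 0} ∩
        ({y | y 3 < y 1} ∩ {y | y 0 * y 1 = y 2})))) :=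
    (defMem 1 hX).inter ((defOne hadd hmul 2).inter ((defZero hadd 3).inter
      ((defLT hlt 3 1).inter (defMul hmul 0 1 2))))
  have h := defProj1 hS
  convert h using 1
  ext z
  simp only [mem_setOf_eq, mem_inter_iff]
  constructor
  · rintro ⟨w, h1, h2, h3⟩
    exact ⟨![z, w, 1, 0], ⟨by simpa using h1, by simp, by simp, by simpa using h2,
      by simpa using h3⟩, by simp⟩
  · rintro ⟨y, ⟨h1, h2, h3, h4, h5⟩, rfl⟩
    refine ⟨y 1, h1, by rw [h3] at h4; exact h4, by rw [h2] at h5; exact h5⟩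

include hlt in
lemma defInterior {X : Set K} (hX : Set.Definable₁ (univ : Set K) L X) :
    Set.Definable₁ (univ : Set K) L (interior X) := by
  -- E ⊆ K^4, coordinates (z, a, b, w) : a < w ∧ w < b ∧ w ∉ X
  have hE : Set.Definable (univ : Set K) L
      ({y : Fin 4 → K | y 1 < y 3} ∩ ({y | y 3 < y 2} ∩ {y | y 3 ∈ Xᶜ})) :=
    (defLT hlt 1 3).inter ((defLT hlt 3 2).inter (defMem 3 (defCompl1 hX)))
  have hP := hE.image_comp (Fin.castSucc : Fin 3 → Fin 4)
  have hD : Set.Definable (univ : Set K) L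
      ({y : Fin 3 → K | y 1 < y 0} ∩ ({y | y 0 < y 2} ∩
        ((fun g : Fin 4 → K => g ∘ Fin.castSucc) ''
          ({y : Fin 4 → K | y 1 < y 3} ∩ ({y | y 3 < y 2} ∩ {y | y 3 ∈ Xᶜ})))ᶜ)) :=
    (defLT hlt 1 0).inter ((defLT hlt 0 2).inter hP.compl)
  have h := defProj1 hD
  convert h using 1
  ext z
  rw [mem_setOf_eq, mem_interior_iff_mem_nhds, mem_nhds_iff_exists_Ioo_subset]
  constructor
  · rintro ⟨a, b, hz, hsub⟩
    refine ⟨![z, a, b], ⟨hz.1, hz.2, ?_⟩, by simp⟩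
    rintro ⟨g, ⟨hg1, hg2, hg3⟩, hgc⟩
    have e0 : g 0 = z := by
      have := congrFun hgc 0; simpa using this
    have e1 : g 1 = a := by
      have := congrFun hgc 1; simpa using this
    have e2 : g 2 = b := by
      have := congrFun hgc 2; simpa using this
    simp only [mem_setOf_eq] at hg1 hg2 hg3
    rw [e1] at hg1; rw [e2] at hg2
    exact hg3 (hsub ⟨hg1, hg2⟩)
  · rintro ⟨y, ⟨h1, h2, h3⟩, rfl⟩
    refine ⟨y 1, y 2, ⟨h1, h2⟩, fun w hw => ?_⟩
    by_contra hwX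
    exact h3 ⟨![y 0, y 1, y 2, w], ⟨by simpa using hw.1, by simpa using hw.2,
      by simpa using hwX⟩, by
        funext i
        fin_cases i <;> simp [Fin.castSucc, Fin.castAdd, Fin.castLE]⟩

include hlt in
lemma defClosure {X : Set K} (hX : Set.Definable₁ (univ : Set K) L X) :
    Set.Definable₁ (univ : Set K) L (closure X) := by
  have h := defCompl1 (defInterior hlt (defCompl1 hX))
  rwa [← closure_eq_compl_interior_compl] at h

end Derived


section Main

variable (hlt : Set.Definable (univ : Set K) L {x : Fin 2 → K | x 0 < x 1})
variable (hadd : Set.Definable (univ : Set K) L {x : Fin 3 → K | x 0 + x 1 = x 2})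
variable (hmul : Set.Definable (univ : Set K) L {x : Fin 3 → K | x 0 * x 1 = x 2})

-- Statement (2) as a hypothesis
variable (h2 : ∀ X : Set K, Set.Definable₁ (Set.univ : Set K) L X → ∀ x : K, ∃ y : K, x < y ∧
          (Set.Ioo x y ⊆ X ∨ Set.Ioo x y ∩ X = ∅))

include hlt hadd hmul h2 in
lemma bddAboveAux {X : Set K} (hX : Set.Definable₁ (univ : Set K) L X)
    (hint : interior X = ∅) : ∃ r : K, ∀ z ∈ X, z ≤ r := by
  by_contra hc
  push_neg at hc
  have hZ := defInvSet hlt hadd hmul hX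
  obtain ⟨y, hy, hcase⟩ := h2 _ hZ 0
  rcases hcase with hsub | hdisj
  · -- Ioo 0 y ⊆ Z gives an interval inside X
    have hXsub : Ioo y⁻¹ (y⁻¹ + 1) ⊆ X := by
      intro u hu
      have hupos : 0 < u := lt_trans (inv_pos.mpr hy) hu.1
      have huy : u⁻¹ < y := inv_lt_of_inv_lt₀ hy hu.1
      have : u⁻¹ ∈ Ioo (0:K) y := ⟨inv_pos.mpr hupos, huy⟩
      obtain ⟨w, hwX, hwpos, hweq⟩ := hsub this
      have : w = u := by
        field_simp at hweq
        exact hweq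
      rwa [this] at hwX
    have : Ioo y⁻¹ (y⁻¹ + 1) ⊆ interior X := interior_maximal hXsub isOpen_Ioo
    obtain ⟨u, hu⟩ := nonempty_Ioo.mpr (lt_add_one y⁻¹)
    rw [hint] at this
    exact this hu
  · -- Ioo 0 y ∩ Z = ∅ contradicts unboundedness
    obtain ⟨z, hzX, hz⟩ := hc (max y⁻¹ 1)
    have hz1 : (1:K) ≤ max y⁻¹ 1 := le_max_right _ _
    have hzpos : 0 < z := lt_of_lt_of_le (by norm_num) (le_trans hz1 hz.le)
    have hzy : y⁻¹ < z := lt_of_le_of_lt (le_max_left _ _) hz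
    have hmem : z⁻¹ ∈ Ioo (0:K) y ∩ {w : K | ∃ v, v ∈ X ∧ 0 < v ∧ w * v = 1} := by
      refine ⟨⟨inv_pos.mpr hzpos, inv_lt_of_inv_lt₀ hy hzy⟩, ⟨z, hzX, hzpos, ?_⟩⟩
      exact inv_mul_cancel₀ (ne_of_gt hzpos)
    rw [hdisj] at hmem
    exact hmem

include hlt hadd hmul h2 in
lemma localEmpty {X : Set K} (hX : Set.Definable₁ (univ : Set K) L X)
    (hint : interior X = ∅) (p : K) :
    ∃ a b : K, a < p ∧ p < b ∧ Ioo a b ∩ X ⊆ {p} := by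
  have noSub : ∀ c d : K, c < d → ¬ (Ioo c d ⊆ X) := by
    intro c d hcd hsub
    obtain ⟨u, hu⟩ := nonempty_Ioo.mpr hcd
    have := interior_maximal hsub isOpen_Ioo
    rw [hint] at this
    exact this hu
  obtain ⟨y, hy, hcase⟩ := h2 X hX p
  have hright : Ioo p y ∩ X = ∅ := by
    rcases hcase with hsub | hdisj
    · exact absurd hsub (noSub _ _ hy)
    · exact hdisj
  set Xn : Set K := {z : K | -z ∈ X} with hXn
  have hXnd := defNegSet hlt hadd hX
  obtain ⟨y', hy', hcase'⟩ := h2 Xn hXnd (-p)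
  have hleft : Ioo (-p) y' ∩ Xn = ∅ := by
    rcases hcase' with hsub | hdisj
    · exfalso
      have hsub2 : Ioo (-y') p ⊆ X := by
        intro u hu
        have : -u ∈ Ioo (-p) y' := ⟨neg_lt_neg hu.2, by linarith [hu.1]⟩
        have := hsub this
        simpa [Xn] using this
      exact noSub _ _ (by linarith) hsub2
    · exact hdisj
  refine ⟨-y', y, by linarith, hy, ?_⟩
  rintro z ⟨hzI, hzX⟩
  rcases lt_trichotomy z p with h | h | h
  · exfalso
    have : -z ∈ Ioo (-p) y' ∩ Xn := ⟨⟨neg_lt_neg h, by linarith [hzI.1]⟩, by simp [Xn, hzX]⟩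
    rw [hleft] at this
    exact this
  · exact h
  · exfalso
    have : z ∈ Ioo p y ∩ X := ⟨⟨h, hzI.2⟩, hzX⟩
    rw [hright] at this
    exact this

include hlt in
lemma frontierPoint (hdc : DefinablyComplete L K) {X : Set K}
    (hX : Set.Definable₁ (univ : Set K) L X) {u v : K} (hu : u ∈ X) (hv : v ∉ X)
    (huv : u < v) : ∃ c, c ∈ Icc u v ∧ c ∈ closure X ∧ c ∈ closure Xᶜ := by
  have hT : Set.Definable₁ (univ : Set K) L (X ∩ Icc u v) := defInter1 hX (defIcc hlt u v)
  have hne : (X ∩ Icc u v).Nonempty := ⟨u, hu, le_refl u, huv.le⟩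
  have hbdd : BddAbove (X ∩ Icc u v) := ⟨v, fun t ht => ht.2.2⟩
  obtain ⟨c, hc⟩ := hdc _ hT hne hbdd
  have hcu : u ≤ c := hc.1 ⟨hu, le_refl u, huv.le⟩
  have hcv : c ≤ v := hc.2 fun t ht => ht.2.2
  refine ⟨c, ⟨hcu, hcv⟩, ?_, ?_⟩
  · exact closure_mono inter_subset_left (hc.mem_closure hne)
  · rcases eq_or_lt_of_le hcv with rfl | hclt
    · exact subset_closure hv
    · have hIoc : Ioc c v ⊆ Xᶜ := by
        rintro t ⟨h1, h2⟩ ht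
        exact absurd h1 (not_lt.mpr (hc.1 ⟨ht, le_trans hcu h1.le, h2⟩))
      have : c ∈ closure (Ioo c v) := by
        rw [closure_Ioo (ne_of_lt hclt)]
        exact ⟨le_refl c, hclt.le⟩
      exact closure_mono (subset_trans Ioo_subset_Ioc_self hIoc) this

include hlt in
lemma frontier_pf
    (h3 : ∀ X : Set K, Set.Definable₁ (Set.univ : Set K) L X →
      PseudoFinite1 K X ∨ (interior X).Nonempty)
    {X : Set K} (hX : Set.Definable₁ (univ : Set K) L X) :
    PseudoFinite1 K (closure X ∩ closure Xᶜ) := by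
  have hF : Set.Definable₁ (univ : Set K) L (closure X ∩ closure Xᶜ) :=
    defInter1 (defClosure hlt hX) (defClosure hlt (defCompl1 hX))
  rcases h3 _ hF with hps | hne
  · exact hps
  exfalso
  obtain ⟨z, hz⟩ := hne
  rw [mem_interior_iff_mem_nhds, mem_nhds_iff_exists_Ioo_subset] at hz
  obtain ⟨a, b, hzab, hsub⟩ := hz
  have hY : Set.Definable₁ (univ : Set K) L (X ∩ Ioo a b) := by
    have := defInter1 hX (defInter1 (defIoi hlt a) (defIio hlt b))
    rwa [Ioi_inter_Iio] at this
  have hYps : PseudoFinite1 K (X ∩ Ioo a b) := by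
    rcases h3 _ hY with hps | hne'
    · exact hps
    exfalso
    obtain ⟨w, hw⟩ := hne'
    rw [mem_interior_iff_mem_nhds, mem_nhds_iff_exists_Ioo_subset] at hw
    obtain ⟨c, d, hwcd, hsub'⟩ := hw
    have hwF : w ∈ closure Xᶜ := (hsub (hsub' hwcd).2).2
    obtain ⟨t, htI, htX⟩ := (mem_closure_iff.mp hwF) _ isOpen_Ioo hwcd
    exact htX (hsub' htI).1
  obtain ⟨u, huI, huX⟩ := (mem_closure_iff.mp (hsub hzab).1) _ isOpen_Ioo hzab
  -- u ∈ X ∩ Ioo a b, isolated, but X is dense in Ioo a b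
  obtain ⟨U, hUopen, hUY⟩ := hYps.2.2 u ⟨huX, huI⟩
  have huU : u ∈ U := by
    have : u ∈ U ∩ (X ∩ Ioo a b) := by rw [hUY]; rfl
    exact this.1
  have hmemnhds : (U ∩ Ioo a b) ∈ nhds u := (hUopen.inter isOpen_Ioo).mem_nhds ⟨huU, huI⟩
  rw [mem_nhds_iff_exists_Ioo_subset] at hmemnhds
  obtain ⟨c, d, hucd, hsub'⟩ := hmemnhds
  obtain ⟨m, hm⟩ := nonempty_Ioo.mpr hucd.2
  have hmab : m ∈ Ioo a b := (hsub' ⟨lt_trans hucd.1 hm.1, hm.2⟩).2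
  have hmcl : m ∈ closure X := (hsub hmab).1
  obtain ⟨t, htI, htX⟩ := (mem_closure_iff.mp hmcl) _ isOpen_Ioo hm
  have htY : t ∈ U ∩ (X ∩ Ioo a b) := by
    have h1 : t ∈ Ioo c d := ⟨lt_trans hucd.1 htI.1, htI.2⟩
    exact ⟨(hsub' h1).1, htX, (hsub' h1).2⟩
  rw [hUY] at htY
  have : t = u := htY
  rw [this] at htI
  exact lt_irrefl u htI.1

end Main

end Helpers

/-- characterizations of local o-minimality. -/
theorem statement3
    (hexp : IsOrderedFieldExpansion L K)
    (hdc : DefinablyComplete L K) :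
    List.TFAE
      [ LocallyOMinimal L K,
        (∀ X : Set K, Set.Definable₁ (Set.univ : Set K) L X → ∀ x : K, ∃ y : K, x < y ∧
          (Set.Ioo x y ⊆ X ∨ Set.Ioo x y ∩ X = ∅)),
        (∀ X : Set K, Set.Definable₁ (Set.univ : Set K) L X →
          PseudoFinite1 K X ∨ (interior X).Nonempty) ] := by
  obtain ⟨hlt0, hadd0, hmul0⟩ := hexp
  have hlt := hlt0.mono (Set.subset_univ _)
  have hadd := hadd0.mono (Set.subset_univ _)
  have hmul := hmul0.mono (Set.subset_univ _)
  tfae_have 1 → 2 := by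
    intro h1 X hX x
    classical
    set f : K → K := fun z => if z ∈ X then 1 else 0 with hf
    have hdf : DefFun1 L K f := by
      show Set.Definable (univ : Set K) L {p : Fin 2 → K | p 1 = f (p 0)}
      have h := ((defMem (0 : Fin 2) hX).inter (defOne hadd hmul (1 : Fin 2))).union
        (((defMem (0 : Fin 2) hX).compl).inter (defZero hadd (1 : Fin 2)))
      convert h using 1
      ext p
      by_cases hp : p 0 ∈ X <;> simp [f, hp]
    obtain ⟨y, hy, hcase⟩ := h1 f hdf x
    refine ⟨y, hy, ?_⟩
    rcases hcase with h | h | h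
    · left
      intro z hz
      by_contra hzX
      have := h z hz
      simp [f, hzX] at this
    · right
      rw [eq_empty_iff_forall_notMem]
      rintro z ⟨hz1, hz2⟩
      have := h z hz1
      simp [f, hz2] at this
    · exfalso
      obtain ⟨z, hz⟩ := nonempty_Ioo.mpr hy
      have h1 := h z hz
      have h0 : (0:K) ≤ f z := by by_cases hzX : z ∈ X <;> simp [f, hzX]
      linarith
  tfae_have 2 → 1 := by
    intro h2 f hf x
    have hG : Set.Definable (univ : Set K) L {p : Fin 2 → K | p 1 = f (p 0)} := hf
    have hG3 : Set.Definable (univ : Set K) L {y : Fin 3 → K | y 1 = f (y 0)} := by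
      have h := hG.preimage_comp (![0, 1] : Fin 2 → Fin 3)
      convert h using 1
      rfl
    have hX0 : Set.Definable₁ (univ : Set K) L {z : K | f z = 0} := by
      have hS := hG.inter (defZero hadd (1 : Fin 2))
      have h := defProj1 (n := 1) hS
      convert h using 1
      ext z
      simp only [mem_setOf_eq, mem_inter_iff]
      constructor
      · intro hz
        exact ⟨![z, f z], ⟨by simp, by exact hz⟩, by simp⟩
      · rintro ⟨y, ⟨h1', h2'⟩, rfl⟩
        show f (y 0) = 0
        rw [← h1', h2']
    have hXp : Set.Definable₁ (univ : Set K) L {z : K | 0 < f z} := by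
      have hS := hG3.inter ((defZero hadd (2 : Fin 3)).inter (defLT hlt 2 1))
      have h := defProj1 (n := 2) hS
      convert h using 1
      ext z
      simp only [mem_setOf_eq, mem_inter_iff]
      constructor
      · intro hz
        exact ⟨![z, f z, 0], ⟨by simp, by simp, by exact hz⟩, by simp⟩
      · rintro ⟨y, ⟨h1', h2', h3'⟩, rfl⟩
        show 0 < f (y 0)
        rw [← h1']
        rw [h2'] at h3'
        exact h3'
    obtain ⟨y0, hy0, hc0⟩ := h2 _ hX0 x
    rcases hc0 with hsub | hdisj
    · exact ⟨y0, hy0, Or.inr (Or.inl fun z hz => hsub hz)⟩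
    · obtain ⟨y1, hy1, hc1⟩ := h2 _ hXp x
      rcases hc1 with hsub1 | hdisj1
      · exact ⟨y1, hy1, Or.inl fun z hz => hsub1 hz⟩
      · refine ⟨min y0 y1, lt_min hy0 hy1, Or.inr (Or.inr fun z hz => ?_)⟩
        have hz0 : z ∈ Ioo x y0 := ⟨hz.1, lt_of_lt_of_le hz.2 (min_le_left _ _)⟩
        have hz1 : z ∈ Ioo x y1 := ⟨hz.1, lt_of_lt_of_le hz.2 (min_le_right _ _)⟩
        have h0 : f z ≠ 0 := fun h => (eq_empty_iff_forall_notMem.mp hdisj z) ⟨hz0, h⟩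
        have hp : ¬ (0 < f z) := fun h => (eq_empty_iff_forall_notMem.mp hdisj1 z) ⟨hz1, h⟩
        rcases lt_trichotomy (f z) 0 with h | h | h
        · exact h
        · exact absurd h h0
        · exact absurd h hp
  tfae_have 2 → 3 := by
    intro h2 X hX
    rcases eq_empty_or_nonempty (interior X) with hint | hne
    swap
    · exact Or.inr hne
    left
    have hloc := localEmpty hlt hadd hmul h2 hX hint
    refine ⟨?_, ?_, ?_⟩
    · rw [← closure_subset_iff_isClosed]
      intro p hp
      obtain ⟨a, b, hap, hpb, hsub⟩ := hloc p
      obtain ⟨z, hzI, hzX⟩ := (mem_closure_iff.mp hp) _ isOpen_Ioo ⟨hap, hpb⟩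
      have : z = p := hsub ⟨hzI, hzX⟩
      rwa [← this]
    · -- bounded
      obtain ⟨r1, hr1⟩ := bddAboveAux hlt hadd hmul h2 hX hint
      have hXn := defNegSet hlt hadd hX
      have hintn : interior {z : K | -z ∈ X} = ∅ := by
        rw [eq_empty_iff_forall_notMem]
        intro w hw
        rw [mem_interior_iff_mem_nhds, mem_nhds_iff_exists_Ioo_subset] at hw
        obtain ⟨a, b, hwab, hsub⟩ := hw
        have hsub2 : Ioo (-b) (-a) ⊆ X := by
          intro u hu
          have : -u ∈ Ioo a b := ⟨by linarith [hu.2], by linarith [hu.1]⟩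
          have := hsub this
          simpa using this
        have : Ioo (-b) (-a) ⊆ interior X := interior_maximal hsub2 isOpen_Ioo
        rw [hint] at this
        obtain ⟨u, hu⟩ := nonempty_Ioo.mpr (show -b < -a by linarith [hwab.1, hwab.2])
        exact this hu
      obtain ⟨r2, hr2⟩ := bddAboveAux hlt hadd hmul h2 hXn hintn
      refine ⟨max r1 r2, fun z hz => abs_le.mpr ⟨?_, le_trans (hr1 z hz) (le_max_left _ _)⟩⟩
      have : -z ≤ r2 := hr2 (-z) (by simpa using hz)
      have := le_trans this (le_max_right r1 r2)
      linarith
    · -- discrete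
      intro p hp
      obtain ⟨a, b, hap, hpb, hsub⟩ := hloc p
      refine ⟨Ioo a b, isOpen_Ioo, subset_antisymm hsub ?_⟩
      rintro q hq
      rw [mem_singleton_iff] at hq
      rw [hq]
      exact ⟨⟨hap, hpb⟩, hp⟩
  tfae_have 3 → 2 := by
    intro h3 X hX x
    by_contra hc
    push_neg at hc
    obtain ⟨hFcl, -, hFdisc⟩ := frontier_pf hlt h3 hX
    have hacc : ∀ y, x < y → ((closure X ∩ closure Xᶜ) ∩ Ioo x y).Nonempty := by
      intro y hy
      obtain ⟨hnsub, hnemp⟩ := hc y hy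
      obtain ⟨u, huI, huX⟩ := hnemp
      obtain ⟨v, hvI, hvX⟩ := not_subset.mp hnsub
      rcases lt_trichotomy u v with h | h | h
      · obtain ⟨c, hcI, hcX, hcXc⟩ := frontierPoint hlt hdc hX huX hvX h
        exact ⟨c, ⟨hcX, hcXc⟩,
          ⟨lt_of_lt_of_le huI.1 hcI.1, lt_of_le_of_lt hcI.2 hvI.2⟩⟩
      · exact absurd (h ▸ huX) hvX
      · obtain ⟨c, hcI, hcXc, hcX⟩ := frontierPoint hlt hdc (defCompl1 hX)
          hvX (by simpa using huX) h
        rw [compl_compl] at hcX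
        exact ⟨c, ⟨hcX, hcXc⟩,
          ⟨lt_of_lt_of_le hvI.1 hcI.1, lt_of_le_of_lt hcI.2 huI.2⟩⟩
    have hxF : x ∈ closure X ∩ closure Xᶜ := by
      rw [← hFcl.closure_eq]
      rw [mem_closure_iff]
      intro O hO hxO
      obtain ⟨a, b, hxab, hsubO⟩ :=
        mem_nhds_iff_exists_Ioo_subset.mp (hO.mem_nhds hxO)
      obtain ⟨c, hcF, hcI⟩ := hacc b hxab.2
      exact ⟨c, hsubO ⟨lt_trans hxab.1 hcI.1, hcI.2⟩, hcF⟩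
    obtain ⟨U, hUopen, hUF⟩ := hFdisc x hxF
    have hxU : x ∈ U := by
      have : x ∈ U ∩ (closure X ∩ closure Xᶜ) := by rw [hUF]; rfl
      exact this.1
    obtain ⟨a, b, hxab, hsubU⟩ :=
      mem_nhds_iff_exists_Ioo_subset.mp (hUopen.mem_nhds hxU)
    obtain ⟨c, hcF, hcI⟩ := hacc b hxab.2
    have : c ∈ U ∩ (closure X ∩ closure Xᶜ) :=
      ⟨hsubU ⟨lt_trans hxab.1 hcI.1, hcI.2⟩, hcF⟩
    rw [hUF] at this
    rw [mem_singleton_iff] at this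
    rw [this] at hcI
    exact lt_irrefl x hcI.1
  tfae_finish

end Tame
end

section
/- Let K be a definably complete expansion of an ordered field. Then K is not pseudo-enumerable: there is no definable subset N of {x ∈ K : x ≥ 0} that is closed, discrete, and unbounded above, together with a definable surjection f : N → K. -/
open FirstOrder Set




namespace Tame9

/-- Deep embedding of first-order formulas over the signature
`<, +(graph), *(graph), =, constants, N, graph of f`. -/
inductive Fml (K : Type*) : ℕ → Type _
  | lt {n} (i j : Fin n) : Fml K n
  | add {n} (i j k : Fin n) : Fml K n
  | mul {n} (i j k : Fin n) : Fml K n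
  | eq {n} (i j : Fin n) : Fml K n
  | const {n} (i : Fin n) (c : K) : Fml K n
  | inN {n} (i : Fin n) : Fml K n
  | graph {n} (i j : Fin n) : Fml K n
  | not {n} (φ : Fml K n) : Fml K n
  | and {n} (φ ψ : Fml K n) : Fml K n
  | or {n} (φ ψ : Fml K n) : Fml K n
  | ex {n} (φ : Fml K (n+1)) : Fml K n

namespace Fml

variable {K : Type*} [Field K] [LinearOrder K] [IsStrictOrderedRing K]

/-- Evaluation of a deep formula. -/
@[simp]
def eval (N : Set K) (f : K → K) : ∀ {n}, Fml K n → (Fin n → K) → Prop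
  | _, .lt i j, x => x i < x j
  | _, .add i j k, x => x i + x j = x k
  | _, .mul i j k, x => x i * x j = x k
  | _, .eq i j, x => x i = x j
  | _, .const i c, x => x i = c
  | _, .inN i, x => x i ∈ N
  | _, .graph i j, x => x i ∈ N ∧ x j = f (x i)
  | _, .not φ, x => ¬ eval N f φ x
  | _, .and φ ψ, x => eval N f φ x ∧ eval N f ψ x
  | _, .or φ ψ, x => eval N f φ x ∨ eval N f ψ x
  | _, .ex φ, x => ∃ y, eval N f φ (Fin.snoc x y)

/-- Relabelling of variables. -/
def relabel : ∀ {m n}, (Fin m → Fin n) → Fml K m → Fml K n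
  | _, _, g, .lt i j => .lt (g i) (g j)
  | _, _, g, .add i j k => .add (g i) (g j) (g k)
  | _, _, g, .mul i j k => .mul (g i) (g j) (g k)
  | _, _, g, .eq i j => .eq (g i) (g j)
  | _, _, g, .const i c => .const (g i) c
  | _, _, g, .inN i => .inN (g i)
  | _, _, g, .graph i j => .graph (g i) (g j)
  | _, _, g, .not φ => .not (relabel g φ)
  | _, _, g, .and φ ψ => .and (relabel g φ) (relabel g ψ)
  | _, _, g, .or φ ψ => .or (relabel g φ) (relabel g ψ)
  | _, _, g, .ex φ => .ex (relabel (Fin.snoc (Fin.castSucc ∘ g) (Fin.last _)) φ)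

theorem snoc_comp_snoc_castSucc_g {m n : ℕ} (g : Fin m → Fin n) (x : Fin n → K) (y : K) :
    (Fin.snoc x y : Fin (n+1) → K) ∘ (Fin.snoc (Fin.castSucc ∘ g) (Fin.last n) : Fin (m+1) → Fin (n+1))
      = Fin.snoc (x ∘ g) y := by
  funext i
  refine Fin.lastCases ?_ (fun j => ?_) i
  · simp only [Function.comp_apply, Fin.snoc_last]
  · simp only [Function.comp_apply, Fin.snoc_castSucc]

@[simp]
theorem eval_relabel (N : Set K) (f : K → K) :
    ∀ {m n} (g : Fin m → Fin n) (φ : Fml K m) (x : Fin n → K),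
      eval N f (relabel g φ) x ↔ eval N f φ (x ∘ g)
  | _, _, g, .lt i j, x => Iff.rfl
  | _, _, g, .add i j k, x => Iff.rfl
  | _, _, g, .mul i j k, x => Iff.rfl
  | _, _, g, .eq i j, x => Iff.rfl
  | _, _, g, .const i c, x => Iff.rfl
  | _, _, g, .inN i, x => Iff.rfl
  | _, _, g, .graph i j, x => Iff.rfl
  | _, _, g, .not φ, x => by simp [relabel, eval_relabel N f g φ x]
  | _, _, g, .and φ ψ, x => by
      simp [relabel, eval_relabel N f g φ x, eval_relabel N f g ψ x]
  | _, _, g, .or φ ψ, x => by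
      simp [relabel, eval_relabel N f g φ x, eval_relabel N f g ψ x]
  | _, _, g, .ex φ, x => by
      simp only [relabel, eval]
      refine exists_congr fun y => ?_
      rw [eval_relabel N f _ φ _, snoc_comp_snoc_castSucc_g]

/-- Abbreviations. -/
def imp {n} (φ ψ : Fml K n) : Fml K n := .or (.not φ) ψ

def all {n} (φ : Fml K (n+1)) : Fml K n := .not (.ex (.not φ))

def le {n} (i j : Fin n) : Fml K n := .or (.lt i j) (.eq i j)

@[simp]
theorem eval_imp {n} (N : Set K) (f : K → K) (φ ψ : Fml K n) (x : Fin n → K) :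
    eval N f (imp φ ψ) x ↔ (eval N f φ x → eval N f ψ x) := by
  simp [imp]; tauto

@[simp]
theorem eval_all {n} (N : Set K) (f : K → K) (φ : Fml K (n+1)) (x : Fin n → K) :
    eval N f (all φ) x ↔ ∀ y, eval N f φ (Fin.snoc x y) := by
  simp [all]

@[simp]
theorem eval_le {n} (N : Set K) (f : K → K) (i j : Fin n) (x : Fin n → K) :
    eval N f (le i j) x ↔ x i ≤ x j := by
  simp [le, le_iff_lt_or_eq]

end Fml

section Definability

variable {K : Type*} [Field K] [LinearOrder K] [IsStrictOrderedRing K] (L : FirstOrder.Language) [L.Structure K]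
variable (N : Set K) (f : K → K)

/-- Main definability theorem for deep formulas. -/
theorem fml_definable
    (hlt : Set.Definable (univ : Set K) L {x : Fin 2 → K | x 0 < x 1})
    (hadd : Set.Definable (univ : Set K) L {x : Fin 3 → K | x 0 + x 1 = x 2})
    (hmul : Set.Definable (univ : Set K) L {x : Fin 3 → K | x 0 * x 1 = x 2})
    (hN : Set.Definable (univ : Set K) L {x : Fin 1 → K | x 0 ∈ N})
    (hG : Set.Definable (univ : Set K) L {x : Fin 2 → K | x 0 ∈ N ∧ x 1 = f (x 0)}) :
    ∀ {n} (φ : Fml K n), Set.Definable (univ : Set K) L {x : Fin n → K | Fml.eval N f φ x}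
  | n, .lt i j => by
      have h := hlt.preimage_comp (M := K) ![i, j]
      have e : {x : Fin n → K | Fml.eval N f (.lt i j) x}
          = (fun g : Fin n → K => g ∘ ![i, j]) ⁻¹' {x : Fin 2 → K | x 0 < x 1} := by
        ext x; simp
      rw [e]; exact h
  | n, .add i j k => by
      have h := hadd.preimage_comp (M := K) ![i, j, k]
      have e : {x : Fin n → K | Fml.eval N f (.add i j k) x}
          = (fun g : Fin n → K => g ∘ ![i, j, k]) ⁻¹' {x : Fin 3 → K | x 0 + x 1 = x 2} := by
        ext x; simp
      rw [e]; exact h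
  | n, .mul i j k => by
      have h := hmul.preimage_comp (M := K) ![i, j, k]
      have e : {x : Fin n → K | Fml.eval N f (.mul i j k) x}
          = (fun g : Fin n → K => g ∘ ![i, j, k]) ⁻¹' {x : Fin 3 → K | x 0 * x 1 = x 2} := by
        ext x; simp
      rw [e]; exact h
  | n, .eq i j => by
      refine ⟨Language.Term.equal (Language.Term.var i) (Language.Term.var j), ?_⟩
      ext v
      simp only [Fml.eval, Language.Term.equal, Language.Formula.Realize, mem_setOf_eq,
        Language.BoundedFormula.realize_bdEqual, Language.Term.realize]
      exact Iff.rfl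
  | n, .const i c => by
      refine ⟨Language.Term.equal (Language.Term.var i)
        (Language.Constants.term (α := Fin n) (L.con ⟨c, mem_univ c⟩)), ?_⟩
      ext v
      simp only [Fml.eval, Language.Term.equal, Language.Formula.Realize, mem_setOf_eq,
        Language.BoundedFormula.realize_bdEqual, Language.Term.realize,
        Language.Term.realize_constants]
      exact Iff.rfl
  | n, .inN i => by
      have h := hN.preimage_comp (M := K) ![i]
      have e : {x : Fin n → K | Fml.eval N f (.inN i) x}
          = (fun g : Fin n → K => g ∘ ![i]) ⁻¹' {x : Fin 1 → K | x 0 ∈ N} := by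
        ext x; simp
      rw [e]; exact h
  | n, .graph i j => by
      have h := hG.preimage_comp (M := K) ![i, j]
      have e : {x : Fin n → K | Fml.eval N f (.graph i j) x}
          = (fun g : Fin n → K => g ∘ ![i, j]) ⁻¹' {x : Fin 2 → K | x 0 ∈ N ∧ x 1 = f (x 0)} := by
        ext x; simp
      rw [e]; exact h
  | n, .not φ => by
      have h := (fml_definable hlt hadd hmul hN hG φ).compl
      have e : {x : Fin n → K | Fml.eval N f (.not φ) x}
          = {x : Fin n → K | Fml.eval N f φ x}ᶜ := by
        ext x; simp
      rw [e]; exact h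
  | n, .and φ ψ => by
      have h := (fml_definable hlt hadd hmul hN hG φ).inter
        (fml_definable hlt hadd hmul hN hG ψ)
      have e : {x : Fin n → K | Fml.eval N f (.and φ ψ) x}
          = {x : Fin n → K | Fml.eval N f φ x} ∩ {x : Fin n → K | Fml.eval N f ψ x} := by
        ext x; simp
      rw [e]; exact h
  | n, .or φ ψ => by
      have h := (fml_definable hlt hadd hmul hN hG φ).union
        (fml_definable hlt hadd hmul hN hG ψ)
      have e : {x : Fin n → K | Fml.eval N f (.or φ ψ) x}
          = {x : Fin n → K | Fml.eval N f φ x} ∪ {x : Fin n → K | Fml.eval N f ψ x} := by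
        ext x; simp
      rw [e]; exact h
  | n, .ex φ => by
      have h := (fml_definable hlt hadd hmul hN hG φ).image_comp (M := K)
        (Fin.castSucc : Fin n → Fin (n+1))
      have e : {x : Fin n → K | Fml.eval N f (.ex φ) x}
          = (fun g : Fin (n+1) → K => g ∘ Fin.castSucc) '' {x : Fin (n+1) → K | Fml.eval N f φ x} := by
        ext x
        constructor
        · rintro ⟨y, hy⟩
          exact ⟨Fin.snoc x y, hy, by funext i; simp [Fin.snoc_castSucc]⟩
        · rintro ⟨w, hw, rfl⟩
          refine ⟨w (Fin.last n), ?_⟩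
          have hsw : (Fin.snoc ((fun g : Fin (n+1) → K => g ∘ Fin.castSucc) w) (w (Fin.last n)))
              = w := by
            funext i
            refine Fin.lastCases ?_ (fun j => ?_) i <;> simp [Fin.snoc_castSucc]
          show Fml.eval N f φ _
          rw [hsw]
          exact hw
      rw [e]; exact h

end Definability


namespace Fml

@[simp] lemma snoc_1_0 {α : Type*} (x : Fin 1 → α) (y : α) : (Fin.snoc x y : Fin 2 → α) 0 = x 0 := rfl
@[simp] lemma snoc_1_1 {α : Type*} (x : Fin 1 → α) (y : α) : (Fin.snoc x y : Fin 2 → α) 1 = y := rfl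
@[simp] lemma snoc_2_0 {α : Type*} (x : Fin 2 → α) (y : α) : (Fin.snoc x y : Fin 3 → α) 0 = x 0 := rfl
@[simp] lemma snoc_2_1 {α : Type*} (x : Fin 2 → α) (y : α) : (Fin.snoc x y : Fin 3 → α) 1 = x 1 := rfl
@[simp] lemma snoc_2_2 {α : Type*} (x : Fin 2 → α) (y : α) : (Fin.snoc x y : Fin 3 → α) 2 = y := rfl
@[simp] lemma snoc_3_0 {α : Type*} (x : Fin 3 → α) (y : α) : (Fin.snoc x y : Fin 4 → α) 0 = x 0 := rfl
@[simp] lemma snoc_3_1 {α : Type*} (x : Fin 3 → α) (y : α) : (Fin.snoc x y : Fin 4 → α) 1 = x 1 := rfl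
@[simp] lemma snoc_3_2 {α : Type*} (x : Fin 3 → α) (y : α) : (Fin.snoc x y : Fin 4 → α) 2 = x 2 := rfl
@[simp] lemma snoc_3_3 {α : Type*} (x : Fin 3 → α) (y : α) : (Fin.snoc x y : Fin 4 → α) 3 = y := rfl
@[simp] lemma snoc_4_0 {α : Type*} (x : Fin 4 → α) (y : α) : (Fin.snoc x y : Fin 5 → α) 0 = x 0 := rfl
@[simp] lemma snoc_4_1 {α : Type*} (x : Fin 4 → α) (y : α) : (Fin.snoc x y : Fin 5 → α) 1 = x 1 := rfl
@[simp] lemma snoc_4_2 {α : Type*} (x : Fin 4 → α) (y : α) : (Fin.snoc x y : Fin 5 → α) 2 = x 2 := rfl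
@[simp] lemma snoc_4_3 {α : Type*} (x : Fin 4 → α) (y : α) : (Fin.snoc x y : Fin 5 → α) 3 = x 3 := rfl
@[simp] lemma snoc_4_4 {α : Type*} (x : Fin 4 → α) (y : α) : (Fin.snoc x y : Fin 5 → α) 4 = y := rfl
@[simp] lemma snoc_5_0 {α : Type*} (x : Fin 5 → α) (y : α) : (Fin.snoc x y : Fin 6 → α) 0 = x 0 := rfl
@[simp] lemma snoc_5_1 {α : Type*} (x : Fin 5 → α) (y : α) : (Fin.snoc x y : Fin 6 → α) 1 = x 1 := rfl
@[simp] lemma snoc_5_2 {α : Type*} (x : Fin 5 → α) (y : α) : (Fin.snoc x y : Fin 6 → α) 2 = x 2 := rfl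
@[simp] lemma snoc_5_3 {α : Type*} (x : Fin 5 → α) (y : α) : (Fin.snoc x y : Fin 6 → α) 3 = x 3 := rfl
@[simp] lemma snoc_5_4 {α : Type*} (x : Fin 5 → α) (y : α) : (Fin.snoc x y : Fin 6 → α) 4 = x 4 := rfl
@[simp] lemma snoc_5_5 {α : Type*} (x : Fin 5 → α) (y : α) : (Fin.snoc x y : Fin 6 → α) 5 = y := rfl
@[simp] lemma snoc_6_0 {α : Type*} (x : Fin 6 → α) (y : α) : (Fin.snoc x y : Fin 7 → α) 0 = x 0 := rfl
@[simp] lemma snoc_6_1 {α : Type*} (x : Fin 6 → α) (y : α) : (Fin.snoc x y : Fin 7 → α) 1 = x 1 := rfl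
@[simp] lemma snoc_6_2 {α : Type*} (x : Fin 6 → α) (y : α) : (Fin.snoc x y : Fin 7 → α) 2 = x 2 := rfl
@[simp] lemma snoc_6_3 {α : Type*} (x : Fin 6 → α) (y : α) : (Fin.snoc x y : Fin 7 → α) 3 = x 3 := rfl
@[simp] lemma snoc_6_4 {α : Type*} (x : Fin 6 → α) (y : α) : (Fin.snoc x y : Fin 7 → α) 4 = x 4 := rfl
@[simp] lemma snoc_6_5 {α : Type*} (x : Fin 6 → α) (y : α) : (Fin.snoc x y : Fin 7 → α) 5 = x 5 := rfl
@[simp] lemma snoc_6_6 {α : Type*} (x : Fin 6 → α) (y : α) : (Fin.snoc x y : Fin 7 → α) 6 = y := rfl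
@[simp] lemma snoc_7_0 {α : Type*} (x : Fin 7 → α) (y : α) : (Fin.snoc x y : Fin 8 → α) 0 = x 0 := rfl
@[simp] lemma snoc_7_1 {α : Type*} (x : Fin 7 → α) (y : α) : (Fin.snoc x y : Fin 8 → α) 1 = x 1 := rfl
@[simp] lemma snoc_7_2 {α : Type*} (x : Fin 7 → α) (y : α) : (Fin.snoc x y : Fin 8 → α) 2 = x 2 := rfl
@[simp] lemma snoc_7_3 {α : Type*} (x : Fin 7 → α) (y : α) : (Fin.snoc x y : Fin 8 → α) 3 = x 3 := rfl
@[simp] lemma snoc_7_4 {α : Type*} (x : Fin 7 → α) (y : α) : (Fin.snoc x y : Fin 8 → α) 4 = x 4 := rfl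
@[simp] lemma snoc_7_5 {α : Type*} (x : Fin 7 → α) (y : α) : (Fin.snoc x y : Fin 8 → α) 5 = x 5 := rfl
@[simp] lemma snoc_7_6 {α : Type*} (x : Fin 7 → α) (y : α) : (Fin.snoc x y : Fin 8 → α) 6 = x 6 := rfl
@[simp] lemma snoc_7_7 {α : Type*} (x : Fin 7 → α) (y : α) : (Fin.snoc x y : Fin 8 → α) 7 = y := rfl

variable {K : Type*} [Field K] [LinearOrder K] [IsStrictOrderedRing K]

/-- `x i + x j ≤ x k`. -/
def addLe {n} (i j k : Fin n) : Fml K n :=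
  .ex (.and (.add i.castSucc j.castSucc (Fin.last n)) (le (Fin.last n) k.castSucc))

@[simp]
theorem eval_addLe {n} (N : Set K) (f : K → K) (i j k : Fin n) (x : Fin n → K) :
    eval N f (addLe i j k) x ↔ x i + x j ≤ x k := by
  simp only [addLe, eval, eval_le, Fin.snoc_castSucc, Fin.snoc_last, ← le_iff_lt_or_eq]
  constructor
  · rintro ⟨y, h1, h2⟩; linarith [h1, h2]
  · intro h; exact ⟨x i + x j, rfl, h⟩

/-- `c ≤ x i`. -/
def constLe {n} (c : K) (i : Fin n) : Fml K n :=
  .ex (.and (.const (Fin.last n) c) (le (Fin.last n) i.castSucc))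

@[simp]
theorem eval_constLe {n} (N : Set K) (f : K → K) (c : K) (i : Fin n) (x : Fin n → K) :
    eval N f (constLe c i) x ↔ c ≤ x i := by
  simp only [constLe, eval, eval_le, Fin.snoc_castSucc, Fin.snoc_last, ← le_iff_lt_or_eq]
  constructor
  · rintro ⟨y, rfl, h2⟩; exact h2
  · intro h; exact ⟨c, rfl, h⟩

/-- `x i ≤ c`. -/
def leConst {n} (i : Fin n) (c : K) : Fml K n :=
  .ex (.and (.const (Fin.last n) c) (le i.castSucc (Fin.last n)))

@[simp]
theorem eval_leConst {n} (N : Set K) (f : K → K) (c : K) (i : Fin n) (x : Fin n → K) :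
    eval N f (leConst i c) x ↔ x i ≤ c := by
  simp only [leConst, eval, eval_le, Fin.snoc_castSucc, Fin.snoc_last, ← le_iff_lt_or_eq]
  constructor
  · rintro ⟨y, rfl, h2⟩; exact h2
  · intro h; exact ⟨c, rfl, h⟩

attribute [irreducible] relabel all imp le addLe constLe leConst

end Fml

section Definability2

variable {K : Type*} [Field K] [LinearOrder K] [IsStrictOrderedRing K] (L : FirstOrder.Language) [L.Structure K]
variable (N : Set K) (f : K → K)

theorem fml_def₁
    (hlt : Set.Definable (univ : Set K) L {x : Fin 2 → K | x 0 < x 1})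
    (hadd : Set.Definable (univ : Set K) L {x : Fin 3 → K | x 0 + x 1 = x 2})
    (hmul : Set.Definable (univ : Set K) L {x : Fin 3 → K | x 0 * x 1 = x 2})
    (hN : Set.Definable (univ : Set K) L {x : Fin 1 → K | x 0 ∈ N})
    (hG : Set.Definable (univ : Set K) L {x : Fin 2 → K | x 0 ∈ N ∧ x 1 = f (x 0)})
    (φ : Fml K 1) (S : Set K) (hS : ∀ a : K, a ∈ S ↔ Fml.eval N f φ ![a]) :
    Set.Definable₁ (univ : Set K) L S := by
  have h := fml_definable L N f hlt hadd hmul hN hG φ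
  have e : {x : Fin 1 → K | x 0 ∈ S} = {x : Fin 1 → K | Fml.eval N f φ x} := by
    ext x
    have hx : ![x 0] = x := by
      funext i
      fin_cases i
      rfl
    rw [mem_setOf_eq, mem_setOf_eq, hS (x 0), hx]
  show Set.Definable (univ : Set K) L {x : Fin 1 → K | x 0 ∈ S}
  rw [e]; exact h

/-- Lower bounds of a definable set are definable. -/
theorem definable_lb
    (hlt : Set.Definable (univ : Set K) L {x : Fin 2 → K | x 0 < x 1})
    {S : Set K} (hS : Set.Definable₁ (univ : Set K) L S) :
    Set.Definable₁ (univ : Set K) L (lowerBounds S) := by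
  have hS2 : Set.Definable (univ : Set K) L {x : Fin 2 → K | x 1 ∈ S} := by
    have h := (show Set.Definable (univ : Set K) L {x : Fin 1 → K | x 0 ∈ S} from hS).preimage_comp
      (M := K) (![1] : Fin 1 → Fin 2)
    have e : {x : Fin 2 → K | x 1 ∈ S}
        = (fun g : Fin 2 → K => g ∘ ![1]) ⁻¹' {x : Fin 1 → K | x 0 ∈ S} := by
      ext x; simp
    rw [e]; exact h
  have hlt2 : Set.Definable (univ : Set K) L {x : Fin 2 → K | x 1 < x 0} := by
    have h := hlt.preimage_comp (M := K) (![1, 0] : Fin 2 → Fin 2)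
    have e : {x : Fin 2 → K | x 1 < x 0}
        = (fun g : Fin 2 → K => g ∘ ![1, 0]) ⁻¹' {x : Fin 2 → K | x 0 < x 1} := by
      ext x; simp
    rw [e]; exact h
  have hC := (hS2.inter hlt2).image_comp (M := K) (![0] : Fin 1 → Fin 2)
  have e2 : ((fun g : Fin 2 → K => g ∘ ![0]) ''
      ({x : Fin 2 → K | x 1 ∈ S} ∩ {x : Fin 2 → K | x 1 < x 0}))
      = {x : Fin 1 → K | ∃ s ∈ S, s < x 0} := by
    ext x
    constructor
    · rintro ⟨w, ⟨hw1, hw2⟩, rfl⟩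
      exact ⟨w 1, hw1, by simpa using hw2⟩
    · rintro ⟨s, hs, hlt'⟩
      refine ⟨![x 0, s], ⟨by simpa using hs, by simpa using hlt'⟩, ?_⟩
      funext i
      fin_cases i
      simp
  rw [e2] at hC
  have hC2 := hC.compl
  have e3 : {x : Fin 1 → K | ∃ s ∈ S, s < x 0}ᶜ = {x : Fin 1 → K | x 0 ∈ lowerBounds S} := by
    ext x
    simp only [mem_compl_iff, mem_setOf_eq, not_exists]
    constructor
    · intro h
      intro s hs
      by_contra hc
      exact h s ⟨hs, by linarith⟩
    · intro h s hs
      have := h hs.1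
      linarith [hs.2]
  rw [e3] at hC2
  exact hC2

end Definability2


section Preds

variable {K : Type*} [Field K] [LinearOrder K] [IsStrictOrderedRing K] (N : Set K) (f : K → K)

open Fml

def Dmem (t z : K) : Prop := ∃ s, s ∈ N ∧ s ≤ t ∧ z = f s

def lam (y s : K) : Prop := (s ∈ N ∧ y = f s) ∧ ∀ s', s' ∈ N ∧ y = f s' → s ≤ s'

def dst (y : K) : Set K :=
  {r | r = 1 ∨ (0 < r ∧ ∃ s, lam N f y s ∧
    ∃ z, Dmem N f s z ∧ z ≠ y ∧ (z + r = y ∨ y + r = z))}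

def Rad (y r : K) : Prop := ∃ d, IsGLB (dst N f y) d ∧ 100 * r = d

def clean (u v t : K) : Prop :=
  ∀ z, Dmem N f t z → ∀ r, Rad N f z r → ∀ w, u ≤ w → w ≤ v → (w + r ≤ z ∨ z + r ≤ w)

def anch (u v t : K) : Prop :=
  ∃ z, Dmem N f t z ∧ ∃ g, u + g = v ∧ z ≤ v + 20 * g ∧ u ≤ z + 20 * g

def PP (a b t : K) : Prop :=
  ∃ u v, a ≤ u ∧ u < v ∧ v ≤ b ∧ clean N f u v t ∧ anch N f u v t

def nacc (t : K) : Prop :=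
  ∀ w : K, ∃ e, 0 < e ∧ ∀ z, Dmem N f t z → z ≠ w → (z + e ≤ w ∨ w + e ≤ z)

def Vv (a b T : K) : Set K :=
  {w | a ≤ w ∧ w ≤ b ∧ ∀ z, Dmem N f T z → ∀ r, Rad N f z r → (w + r ≤ z ∨ z + r ≤ w)}

def mV (a b m T : K) : Prop := m ∈ Vv N f a b T ∧ ∀ w ∈ Vv N f a b T, m ≤ w

def Sstar (a b : K) : Set K := {x | ∃ T, T ∈ N ∧ mV N f a b x T}

def dmemF : Fml K 2 := .ex (.and (.graph 2 1) (le 2 0))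

def lamF : Fml K 2 := .and (.graph 1 0) (all (imp (.graph 2 0) (le 1 2)))

def dsetF : Fml K 2 :=
  .or (.const 1 1) (.and (.ex (.and (.const 2 (0 : K)) (.lt 2 1)))
    (.ex (.and (relabel ![0, 2] lamF)
      (.ex (.and (relabel ![2, 3] dmemF)
        (.and (.not (.eq 3 0)) (.or (.add 3 1 0) (.add 0 1 3))))))))

def glbF : Fml K 2 :=
  .and (all (imp (relabel ![0, 2] dsetF) (le 1 2)))
    (all (imp (all (imp (relabel ![0, 3] dsetF) (le 2 3))) (le 2 1)))

def radF : Fml K 2 :=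
  .ex (.and (relabel ![0, 2] glbF) (.ex (.and (.const 3 (100 : K)) (.mul 3 1 2))))

def cleanF : Fml K 3 :=
  all (imp (relabel ![2, 3] dmemF)
    (all (imp (relabel ![3, 4] radF)
      (all (imp (le 0 5) (imp (le 5 1) (.or (addLe 5 4 3) (addLe 3 4 5))))))))

def anchF : Fml K 3 :=
  .ex (.and (relabel ![2, 3] dmemF)
    (.ex (.and (.add 0 4 1)
      (.ex (.and (.const 5 (20 : K))
        (.ex (.and (.mul 5 4 6)
          (.and (.ex (.and (.add 1 6 7) (le 3 7)))
            (.ex (.and (.add 3 6 7) (le 0 7)))))))))))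

def pF (a b : K) : Fml K 1 :=
  .ex (.ex (.and (constLe a 1) (.and (.lt 1 2) (.and (leConst 2 b)
    (.and (relabel ![1, 2, 0] cleanF) (relabel ![1, 2, 0] anchF))))))

def naccF : Fml K 1 :=
  all (.ex (.and (.ex (.and (.const 3 (0 : K)) (.lt 3 2)))
    (all (imp (relabel ![0, 3] dmemF)
      (imp (.not (.eq 3 1)) (.or (addLe 3 2 1) (addLe 1 2 3)))))))

def vF (a b : K) : Fml K 2 :=
  .and (constLe a 0) (.and (leConst 0 b)
    (all (imp (relabel ![1, 2] dmemF)
      (all (imp (relabel ![2, 3] radF) (.or (addLe 0 3 2) (addLe 2 3 0)))))))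

def minvF (a b : K) : Fml K 2 :=
  .and (vF a b) (all (imp (relabel ![2, 1] (vF a b)) (le 0 2)))

def sstarF (a b : K) : Fml K 1 := .ex (.and (.inN 1) (minvF a b))

@[simp]
lemma eval_dmemF (x : Fin 2 → K) : eval N f (dmemF (K := K)) x ↔ Dmem N f (x 0) (x 1) := by
  simp only [dmemF, Fml.eval, Fml.eval_relabel, Fml.eval_all, Fml.eval_imp, Fml.eval_le, Fml.eval_addLe, Fml.eval_constLe, Fml.eval_leConst, Function.comp_apply, Matrix.cons_val_zero, Matrix.cons_val_one, Matrix.head_cons, Matrix.cons_val_two, Matrix.tail_cons, snoc_1_0, snoc_1_1, snoc_2_0, snoc_2_1, snoc_2_2, snoc_3_0, snoc_3_1, snoc_3_2, snoc_3_3, snoc_4_0, snoc_4_1, snoc_4_2, snoc_4_3, snoc_4_4, snoc_5_0, snoc_5_1, snoc_5_2, snoc_5_3, snoc_5_4, snoc_5_5, snoc_6_0, snoc_6_1, snoc_6_2, snoc_6_3, snoc_6_4, snoc_6_5, snoc_6_6, snoc_7_0, snoc_7_1, snoc_7_2, snoc_7_3, snoc_7_4, snoc_7_5, snoc_7_6,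 snoc_7_7, Dmem, ← le_iff_lt_or_eq]
  try tauto

attribute [irreducible] dmemF

@[simp]
lemma eval_lamF (x : Fin 2 → K) : eval N f (lamF (K := K)) x ↔ lam N f (x 0) (x 1) := by
  simp only [lamF, Fml.eval, Fml.eval_relabel, Fml.eval_all, Fml.eval_imp, Fml.eval_le, Fml.eval_addLe, Fml.eval_constLe, Fml.eval_leConst, eval_dmemF, Function.comp_apply, Matrix.cons_val_zero, Matrix.cons_val_one, Matrix.head_cons, Matrix.cons_val_two, Matrix.tail_cons, snoc_1_0, snoc_1_1, snoc_2_0, snoc_2_1, snoc_2_2, snoc_3_0, snoc_3_1, snoc_3_2, snoc_3_3, snoc_4_0, snoc_4_1, snoc_4_2, snoc_4_3, snoc_4_4, snoc_5_0, snoc_5_1, snoc_5_2, snoc_5_3, snoc_5_4, snoc_5_5, snoc_6_0, snoc_6_1, snoc_6_2, snoc_6_3, snoc_6_4, snoc_6_5, snoc_6_6, snoc_7_0, snoc_7_1, snoc_7_2, snoc_7_3, snoc_7_4, snoc_7_5, snoc_7_6, snoc_7_7, lam, ← le_iff_lt_or_eq]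
  try tauto

attribute [irreducible] lamF

@[simp]
lemma eval_dsetF (x : Fin 2 → K) : eval N f (dsetF (K := K)) x ↔ x 1 ∈ dst N f (x 0) := by
  simp only [dsetF, Fml.eval, Fml.eval_relabel, Fml.eval_all, Fml.eval_imp, Fml.eval_le, Fml.eval_addLe, Fml.eval_constLe, Fml.eval_leConst, eval_dmemF, eval_lamF, Function.comp_apply, Matrix.cons_val_zero, Matrix.cons_val_one, Matrix.head_cons, Matrix.cons_val_two, Matrix.tail_cons, snoc_1_0, snoc_1_1, snoc_2_0, snoc_2_1, snoc_2_2, snoc_3_0, snoc_3_1, snoc_3_2, snoc_3_3, snoc_4_0, snoc_4_1, snoc_4_2, snoc_4_3, snoc_4_4, snoc_5_0, snoc_5_1, snoc_5_2, snoc_5_3, snoc_5_4, snoc_5_5, snoc_6_0, snoc_6_1, snoc_6_2, snoc_6_3, snoc_6_4, snoc_6_5, snoc_6_6, snoc_7_0, snoc_7_1, snoc_7_2, snoc_7_3, snoc_7_4, snoc_7_5, snoc_7_6, snoc_7_7, dst, Set.mem_setOf_eq, exists_eq_left, exists_eq_left', ← le_iff_lt_or_eq]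
  try tauto

attribute [irreducible] dsetF

@[simp]
lemma eval_glbF (x : Fin 2 → K) : eval N f (glbF (K := K)) x ↔ IsGLB (dst N f (x 0)) (x 1) := by
  simp only [glbF, Fml.eval, Fml.eval_relabel, Fml.eval_all, Fml.eval_imp, Fml.eval_le, Fml.eval_addLe, Fml.eval_constLe, Fml.eval_leConst, eval_dmemF, eval_lamF, eval_dsetF, Function.comp_apply, Matrix.cons_val_zero, Matrix.cons_val_one, Matrix.head_cons, Matrix.cons_val_two, Matrix.tail_cons, snoc_1_0, snoc_1_1, snoc_2_0, snoc_2_1, snoc_2_2, snoc_3_0, snoc_3_1, snoc_3_2, snoc_3_3, snoc_4_0, snoc_4_1, snoc_4_2, snoc_4_3, snoc_4_4, snoc_5_0, snoc_5_1, snoc_5_2, snoc_5_3, snoc_5_4, snoc_5_5, snoc_6_0, snoc_6_1, snoc_6_2, snoc_6_3, snoc_6_4, snoc_6_5, snoc_6_6, snoc_7_0, snoc_7_1, snoc_7_2, snoc_7_3, snoc_7_4, snoc_7_5, snoc_7_6, snoc_7_7, IsGLB, IsLUB, IsGreatest, IsLeast, lowerBounds, upperBounds, Set.mem_setOf_eq,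 ← le_iff_lt_or_eq]
  try tauto

attribute [irreducible] glbF

@[simp]
lemma eval_radF (x : Fin 2 → K) : eval N f (radF (K := K)) x ↔ Rad N f (x 0) (x 1) := by
  simp only [radF, Fml.eval, Fml.eval_relabel, Fml.eval_all, Fml.eval_imp, Fml.eval_le, Fml.eval_addLe, Fml.eval_constLe, Fml.eval_leConst, eval_dmemF, eval_lamF, eval_dsetF, eval_glbF, Function.comp_apply, Matrix.cons_val_zero, Matrix.cons_val_one, Matrix.head_cons, Matrix.cons_val_two, Matrix.tail_cons, snoc_1_0, snoc_1_1, snoc_2_0, snoc_2_1, snoc_2_2, snoc_3_0, snoc_3_1, snoc_3_2, snoc_3_3, snoc_4_0, snoc_4_1, snoc_4_2, snoc_4_3, snoc_4_4, snoc_5_0, snoc_5_1, snoc_5_2, snoc_5_3, snoc_5_4, snoc_5_5, snoc_6_0, snoc_6_1, snoc_6_2, snoc_6_3, snoc_6_4, snoc_6_5, snoc_6_6, snoc_7_0, snoc_7_1, snoc_7_2, snoc_7_3, snoc_7_4, snoc_7_5, snoc_7_6, snoc_7_7, Rad, exists_eq_left, ← le_iff_lt_or_eq]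
  try tauto

attribute [irreducible] radF

@[simp]
lemma eval_cleanF (x : Fin 3 → K) : eval N f (cleanF (K := K)) x ↔ clean N f (x 0) (x 1) (x 2) := by
  simp only [cleanF, Fml.eval, Fml.eval_relabel, Fml.eval_all, Fml.eval_imp, Fml.eval_le, Fml.eval_addLe, Fml.eval_constLe, Fml.eval_leConst, eval_dmemF, eval_lamF, eval_dsetF, eval_glbF, eval_radF, Function.comp_apply, Matrix.cons_val_zero, Matrix.cons_val_one, Matrix.head_cons, Matrix.cons_val_two, Matrix.tail_cons, snoc_1_0, snoc_1_1, snoc_2_0, snoc_2_1, snoc_2_2, snoc_3_0, snoc_3_1, snoc_3_2, snoc_3_3, snoc_4_0, snoc_4_1, snoc_4_2, snoc_4_3, snoc_4_4, snoc_5_0, snoc_5_1, snoc_5_2, snoc_5_3, snoc_5_4, snoc_5_5, snoc_6_0, snoc_6_1, snoc_6_2, snoc_6_3, snoc_6_4, snoc_6_5, snoc_6_6, snoc_7_0, snoc_7_1, snoc_7_2, snoc_7_3, snoc_7_4, snoc_7_5, snoc_7_6, snoc_7_7, clean, ← le_iff_lt_or_eq]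
  try tauto

attribute [irreducible] cleanF

@[simp]
lemma eval_anchF (x : Fin 3 → K) : eval N f (anchF (K := K)) x ↔ anch N f (x 0) (x 1) (x 2) := by
  simp only [anchF, Fml.eval, Fml.eval_relabel, Fml.eval_all, Fml.eval_imp, Fml.eval_le, Fml.eval_addLe, Fml.eval_constLe, Fml.eval_leConst, eval_dmemF, eval_lamF, eval_dsetF, eval_glbF, eval_radF, eval_cleanF, Function.comp_apply, Matrix.cons_val_zero, Matrix.cons_val_one, Matrix.head_cons, Matrix.cons_val_two, Matrix.tail_cons, snoc_1_0, snoc_1_1, snoc_2_0, snoc_2_1, snoc_2_2, snoc_3_0, snoc_3_1, snoc_3_2, snoc_3_3, snoc_4_0, snoc_4_1, snoc_4_2, snoc_4_3, snoc_4_4, snoc_5_0, snoc_5_1, snoc_5_2, snoc_5_3, snoc_5_4, snoc_5_5, snoc_6_0, snoc_6_1, snoc_6_2, snoc_6_3, snoc_6_4, snoc_6_5, snoc_6_6, snoc_7_0, snoc_7_1, snoc_7_2, snoc_7_3, snoc_7_4, snoc_7_5, snoc_7_6, snoc_7_7, anch, exists_eq_left, exists_eq_left', ← le_iff_lt_or_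eq]
  try tauto

attribute [irreducible] anchF

@[simp]
lemma eval_pF (a b : K) (x : Fin 1 → K) : eval N f (pF a b) x ↔ PP N f a b (x 0) := by
  simp only [pF, Fml.eval, Fml.eval_relabel, Fml.eval_all, Fml.eval_imp, Fml.eval_le, Fml.eval_addLe, Fml.eval_constLe, Fml.eval_leConst, eval_dmemF, eval_lamF, eval_dsetF, eval_glbF, eval_radF, eval_cleanF, eval_anchF, Function.comp_apply, Matrix.cons_val_zero, Matrix.cons_val_one, Matrix.head_cons, Matrix.cons_val_two, Matrix.tail_cons, snoc_1_0, snoc_1_1, snoc_2_0, snoc_2_1, snoc_2_2, snoc_3_0, snoc_3_1, snoc_3_2, snoc_3_3, snoc_4_0, snoc_4_1, snoc_4_2, snoc_4_3, snoc_4_4, snoc_5_0, snoc_5_1, snoc_5_2, snoc_5_3, snoc_5_4, snoc_5_5, snoc_6_0, snoc_6_1, snoc_6_2, snoc_6_3, snoc_6_4, snoc_6_5, snoc_6_6, snoc_7_0, snoc_7_1, snoc_7_2, snoc_7_3, snoc_7_4, snoc_7_5, snoc_7_6, snoc_7_7, PP, ← le_iff_lt_or_eq]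
  try tauto

attribute [irreducible] pF

@[simp]
lemma eval_naccF (x : Fin 1 → K) : eval N f (naccF (K := K)) x ↔ nacc N f (x 0) := by
  simp only [naccF, Fml.eval, Fml.eval_relabel, Fml.eval_all, Fml.eval_imp, Fml.eval_le, Fml.eval_addLe, Fml.eval_constLe, Fml.eval_leConst, eval_dmemF, eval_lamF, eval_dsetF, eval_glbF, eval_radF, eval_cleanF, eval_anchF, eval_pF, Function.comp_apply, Matrix.cons_val_zero, Matrix.cons_val_one, Matrix.head_cons, Matrix.cons_val_two, Matrix.tail_cons, snoc_1_0, snoc_1_1, snoc_2_0, snoc_2_1, snoc_2_2, snoc_3_0, snoc_3_1, snoc_3_2, snoc_3_3, snoc_4_0, snoc_4_1, snoc_4_2, snoc_4_3, snoc_4_4, snoc_5_0, snoc_5_1, snoc_5_2, snoc_5_3, snoc_5_4, snoc_5_5, snoc_6_0, snoc_6_1, snoc_6_2, snoc_6_3, snoc_6_4, snoc_6_5, snoc_6_6, snoc_7_0, snoc_7_1, snoc_7_2, snoc_7_3, snoc_7_4, snoc_7_5, snoc_7_6, snoc_7_7, nacc, exists_eq_left, ← le_iff_lt_or_eq]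
  try tauto

attribute [irreducible] naccF

@[simp]
lemma eval_vF (a b : K) (x : Fin 2 → K) : eval N f (vF a b) x ↔ x 0 ∈ Vv N f a b (x 1) := by
  simp only [vF, Fml.eval, Fml.eval_relabel, Fml.eval_all, Fml.eval_imp, Fml.eval_le, Fml.eval_addLe, Fml.eval_constLe, Fml.eval_leConst, eval_dmemF, eval_lamF, eval_dsetF, eval_glbF, eval_radF, eval_cleanF, eval_anchF, eval_pF, eval_naccF, Function.comp_apply, Matrix.cons_val_zero, Matrix.cons_val_one, Matrix.head_cons, Matrix.cons_val_two, Matrix.tail_cons, snoc_1_0, snoc_1_1, snoc_2_0, snoc_2_1, snoc_2_2, snoc_3_0, snoc_3_1, snoc_3_2, snoc_3_3, snoc_4_0, snoc_4_1, snoc_4_2, snoc_4_3, snoc_4_4, snoc_5_0, snoc_5_1, snoc_5_2, snoc_5_3, snoc_5_4, snoc_5_5, snoc_6_0, snoc_6_1, snoc_6_2, snoc_6_3, snoc_6_4, snoc_6_5, snoc_6_6, snoc_7_0, snoc_7_1, snoc_7_2, snoc_7_3, snoc_7_4, snoc_7_5, snoc_7_6, snoc_7_7, Vv, Set.mem_setOf_eq,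 ← le_iff_lt_or_eq]
  try tauto

attribute [irreducible] vF

@[simp]
lemma eval_minvF (a b : K) (x : Fin 2 → K) : eval N f (minvF a b) x ↔ mV N f a b (x 0) (x 1) := by
  simp only [minvF, Fml.eval, Fml.eval_relabel, Fml.eval_all, Fml.eval_imp, Fml.eval_le, Fml.eval_addLe, Fml.eval_constLe, Fml.eval_leConst, eval_dmemF, eval_lamF, eval_dsetF, eval_glbF, eval_radF, eval_cleanF, eval_anchF, eval_pF, eval_naccF, eval_vF, Function.comp_apply, Matrix.cons_val_zero, Matrix.cons_val_one, Matrix.head_cons, Matrix.cons_val_two, Matrix.tail_cons, snoc_1_0, snoc_1_1, snoc_2_0, snoc_2_1, snoc_2_2, snoc_3_0, snoc_3_1, snoc_3_2, snoc_3_3, snoc_4_0, snoc_4_1, snoc_4_2, snoc_4_3, snoc_4_4, snoc_5_0, snoc_5_1, snoc_5_2, snoc_5_3, snoc_5_4, snoc_5_5, snoc_6_0, snoc_6_1, snoc_6_2, snoc_6_3, snoc_6_4, snoc_6_5, snoc_6_6, snoc_7_0, snoc_7_1, snoc_7_2, snoc_7_3, snoc_7_4, snoc_7_5, snoc_7_6,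 snoc_7_7, mV, Vv, Set.mem_setOf_eq, ← le_iff_lt_or_eq]
  try tauto

attribute [irreducible] minvF

@[simp]
lemma eval_sstarF (a b : K) (x : Fin 1 → K) : eval N f (sstarF a b) x ↔ x 0 ∈ Sstar N f a b := by
  simp only [sstarF, Fml.eval, Fml.eval_relabel, Fml.eval_all, Fml.eval_imp, Fml.eval_le, Fml.eval_addLe, Fml.eval_constLe, Fml.eval_leConst, eval_dmemF, eval_lamF, eval_dsetF, eval_glbF, eval_radF, eval_cleanF, eval_anchF, eval_pF, eval_naccF, eval_vF, eval_minvF, Function.comp_apply, Matrix.cons_val_zero, Matrix.cons_val_one, Matrix.head_cons, Matrix.cons_val_two, Matrix.tail_cons, snoc_1_0, snoc_1_1, snoc_2_0, snoc_2_1, snoc_2_2, snoc_3_0, snoc_3_1, snoc_3_2, snoc_3_3, snoc_4_0, snoc_4_1, snoc_4_2, snoc_4_3, snoc_4_4, snoc_5_0, snoc_5_1, snoc_5_2, snoc_5_3, snoc_5_4, snoc_5_5, snoc_6_0, snoc_6_1, snoc_6_2, snoc_6_3, snoc_6_4, snoc_6_5, snoc_6_6, snoc_7_0, snoc_7_1,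 snoc_7_2, snoc_7_3, snoc_7_4, snoc_7_5, snoc_7_6, snoc_7_7, Sstar, Set.mem_setOf_eq, mV, Vv, ← le_iff_lt_or_eq]
  try tauto

end Preds


section Main

open Fml

variable {K : Type*} [Field K] [LinearOrder K] [IsStrictOrderedRing K] [TopologicalSpace K] [OrderTopology K]
variable {L : FirstOrder.Language} [L.Structure K] {N : Set K} {f : K → K}

/-- All the ambient hypotheses, bundled. -/
structure Ctx (L : FirstOrder.Language) (K : Type*) [Field K] [LinearOrder K] [IsStrictOrderedRing K] [TopologicalSpace K]
    [OrderTopology K] [L.Structure K] (N : Set K) (f : K → K) : Prop where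
  hdc : ∀ s : Set K, Set.Definable₁ (Set.univ : Set K) L s → s.Nonempty → BddAbove s →
    ∃ a : K, IsLUB s a
  hlt : Set.Definable (univ : Set K) L {x : Fin 2 → K | x 0 < x 1}
  hadd : Set.Definable (univ : Set K) L {x : Fin 3 → K | x 0 + x 1 = x 2}
  hmul : Set.Definable (univ : Set K) L {x : Fin 3 → K | x 0 * x 1 = x 2}
  hN : Set.Definable (univ : Set K) L {x : Fin 1 → K | x 0 ∈ N}
  hG : Set.Definable (univ : Set K) L {x : Fin 2 → K | x 0 ∈ N ∧ x 1 = f (x 0)}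
  hpos : N ⊆ {x : K | 0 ≤ x}
  hcl : IsClosed N
  hdisc : ∀ x ∈ N, ∃ U : Set K, IsOpen U ∧ U ∩ N = {x}
  hunb : ¬ BddAbove N
  hsur : ∀ y : K, ∃ x ∈ N, f x = y

namespace Ctx

variable (C : Ctx L K N f)
include C

theorem def₁ (φ : Fml K 1) (S : Set K) (hS : ∀ a : K, a ∈ S ↔ Fml.eval N f φ ![a]) :
    Set.Definable₁ (univ : Set K) L S :=
  fml_def₁ L N f C.hlt C.hadd C.hmul C.hN C.hG φ S hS

/-- `N` has no accumulation points in `K`. -/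
theorem noaccN (x : K) : ∃ e, 0 < e ∧ ∀ z ∈ N, z ≠ x → (z + e ≤ x ∨ x + e ≤ z) := by
  by_cases hx : x ∈ N
  · obtain ⟨U, hUo, hUN⟩ := C.hdisc x hx
    have hxU : x ∈ U := by
      have : x ∈ U ∩ N := by rw [hUN]; exact rfl
      exact this.1
    obtain ⟨a, b, hab, hsub⟩ := (mem_nhds_iff_exists_Ioo_subset).1 (hUo.mem_nhds hxU)
    refine ⟨min (x - a) (b - x), by simp [hab.1, hab.2], ?_⟩
    intro z hz hne
    by_contra hc
    push_neg at hc
    have hzI : z ∈ Set.Ioo a b := by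
      constructor
      · have := hc.1
        have h2 := min_le_left (x - a) (b - x)
        linarith
      · have := hc.2
        have h2 := min_le_right (x - a) (b - x)
        linarith
    have : z ∈ U ∩ N := ⟨hsub hzI, hz⟩
    rw [hUN] at this
    exact hne this
  · have hxU : x ∈ Nᶜ := hx
    obtain ⟨a, b, hab, hsub⟩ := (mem_nhds_iff_exists_Ioo_subset).1
      ((C.hcl.isOpen_compl).mem_nhds hxU)
    refine ⟨min (x - a) (b - x), by simp [hab.1, hab.2], ?_⟩
    intro z hz hne
    by_contra hc
    push_neg at hc
    have hzI : z ∈ Set.Ioo a b := by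
      constructor
      · have := hc.1
        have h2 := min_le_left (x - a) (b - x)
        linarith
      · have := hc.2
        have h2 := min_le_right (x - a) (b - x)
        linarith
    exact (hsub hzI) hz

theorem glb_exists {S : Set K} (hS : Set.Definable₁ (univ : Set K) L S) (hne : S.Nonempty)
    (hbb : BddBelow S) : ∃ d, IsGLB S d := by
  have hlb := definable_lb L C.hlt hS
  obtain ⟨s₀, hs₀⟩ := hne
  have hba : BddAbove (lowerBounds S) := ⟨s₀, fun b hb => hb hs₀⟩
  obtain ⟨d, hd⟩ := C.hdc _ hlb hbb hba
  refine ⟨d, ?_, ?_⟩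
  · intro s hs
    exact hd.2 (fun b hb => hb hs)
  · intro b hb
    exact hd.1 hb

/-- Minimum of a nonempty definable subset of `N`. -/
theorem nmin {S : Set K} (hS : Set.Definable₁ (univ : Set K) L S) (hSN : S ⊆ N)
    (hne : S.Nonempty) : ∃ m ∈ S, ∀ s ∈ S, m ≤ s := by
  have hbb : BddBelow S := ⟨0, fun s hs => C.hpos (hSN hs)⟩
  obtain ⟨d, hd⟩ := C.glb_exists hS hne hbb
  refine ⟨d, ?_, fun s hs => hd.1 hs⟩
  by_contra hdS
  obtain ⟨e, he, hcl⟩ := C.noaccN d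
  have : ¬ (d + e ∈ lowerBounds S) := by
    intro hmem
    have := hd.2 hmem
    linarith
  have hex : ∃ s ∈ S, s < d + e := by
    by_contra hc
    push_neg at hc
    exact this (fun s hs => hc s hs)
  obtain ⟨s, hs, hslt⟩ := hex
  have hds : d ≤ s := hd.1 hs
  have hne' : s ≠ d := fun h => hdS (h ▸ hs)
  rcases hcl s (hSN hs) hne' with h | h
  · linarith
  · linarith

/-- Maximum of a nonempty definable bounded-above subset of `N`. -/
theorem nmax {S : Set K} (hS : Set.Definable₁ (univ : Set K) L S) (hSN : S ⊆ N)
    (hne : S.Nonempty) (hba : BddAbove S) : ∃ m ∈ S, ∀ s ∈ S, s ≤ m := by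
  obtain ⟨d, hd⟩ := C.hdc S hS hne hba
  refine ⟨d, ?_, fun s hs => hd.1 hs⟩
  by_contra hdS
  obtain ⟨e, he, hcl⟩ := C.noaccN d
  have : ¬ (d - e ∈ upperBounds S) := by
    intro hmem
    have := hd.2 hmem
    linarith
  have hex : ∃ s ∈ S, d - e < s := by
    by_contra hc
    push_neg at hc
    exact this (fun s hs => hc s hs)
  obtain ⟨s, hs, hslt⟩ := hex
  have hds : s ≤ d := hd.1 hs
  have hne' : s ≠ d := fun h => hdS (h ▸ hs)
  rcases hcl s (hSN hs) hne' with h | h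
  · linarith
  · linarith

theorem Nne : N.Nonempty := by
  rcases N.eq_empty_or_nonempty with h | h
  · exact absurd (h ▸ bddAbove_empty) C.hunb
  · exact h

theorem n0_exists : ∃ m ∈ N, ∀ s ∈ N, m ≤ s :=
  C.nmin C.hN (fun _ h => h) C.Nne

theorem succ_exists (t : K) :
    ∃ t', (t' ∈ N ∧ t < t' ∧ ∀ s ∈ N, t < s → t' ≤ s) := by
  have hdef : Set.Definable₁ (univ : Set K) L {s | s ∈ N ∧ t < s} := by
    refine C.def₁ (.and (.inN 0) (.ex (.and (.const 1 t) (.lt 1 0)))) _ ?_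
    intro a
    simp only [Fml.eval, mem_setOf_eq, Matrix.cons_val_zero, snoc_1_0, snoc_1_1,
      exists_eq_left, exists_eq_left']
  have hne : {s | s ∈ N ∧ t < s}.Nonempty := by
    obtain ⟨s, hs, hts⟩ := not_bddAbove_iff.1 C.hunb t
    exact ⟨s, hs, hts⟩
  obtain ⟨m, hm, hmin⟩ := C.nmin hdef (fun s hs => hs.1) hne
  exact ⟨m, hm.1, hm.2, fun s hsN hts => hmin s ⟨hsN, hts⟩⟩

end Ctx

end Main


section Main2

open Fml

variable {K : Type*} [Field K] [LinearOrder K] [IsStrictOrderedRing K] [TopologicalSpace K] [OrderTopology K]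
variable {L : FirstOrder.Language} [L.Structure K] {N : Set K} {f : K → K}

theorem dmem_mono {t t' z : K} (htt : t ≤ t') (h : Dmem N f t z) : Dmem N f t' z := by
  obtain ⟨s, h1, h2, h3⟩ := h
  exact ⟨s, h1, h2.trans htt, h3⟩

theorem dmem_succ {t t' z : K} (ht'N : t' ∈ N) (htt' : t < t')
    (hmin : ∀ s ∈ N, t < s → t' ≤ s) :
    Dmem N f t' z ↔ (Dmem N f t z ∨ z = f t') := by
  constructor
  · rintro ⟨s, hsN, hst', rfl⟩
    rcases le_or_gt s t with h | h
    · exact Or.inl ⟨s, hsN, h, rfl⟩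
    · have := hmin s hsN h
      have : s = t' := le_antisymm hst' this
      exact Or.inr (by rw [this])
  · rintro (h | rfl)
    · exact dmem_mono htt'.le h
    · exact ⟨t', ht'N, le_refl _, rfl⟩

theorem dmem_min {n₀ z : K} (hn₀N : n₀ ∈ N) (hn₀ : ∀ s ∈ N, n₀ ≤ s) :
    Dmem N f n₀ z ↔ z = f n₀ := by
  constructor
  · rintro ⟨s, hsN, hsn, rfl⟩
    have : s = n₀ := le_antisymm hsn (hn₀ s hsN)
    rw [this]
  · rintro rfl
    exact ⟨n₀, hn₀N, le_refl _, rfl⟩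

theorem lam_unique {y s s' : K} (h : lam N f y s) (h' : lam N f y s') : s = s' :=
  le_antisymm (h.2 s' h'.1) (h'.2 s h.1)

namespace Ctx

variable (C : Ctx L K N f)
include C

theorem lam_exists (y : K) : ∃ s, lam N f y s := by
  have hdef : Set.Definable₁ (univ : Set K) L {s | s ∈ N ∧ y = f s} := by
    refine C.def₁ (.ex (.and (.const 1 y) (.graph 0 1))) _ ?_
    intro a
    simp only [Fml.eval, mem_setOf_eq, Matrix.cons_val_zero, snoc_1_0, snoc_1_1,
      exists_eq_left, exists_eq_left']
  have hne : {s | s ∈ N ∧ y = f s}.Nonempty := by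
    obtain ⟨x, hx, hfx⟩ := C.hsur y
    exact ⟨x, hx, hfx.symm⟩
  obtain ⟨m, hm, hmin⟩ := C.nmin hdef (fun s hs => hs.1) hne
  exact ⟨m, hm, fun s' hs' => hmin s' hs'⟩

/-- Induction along `N`. -/
theorem Nind (n₀ : K) (hn₀N : n₀ ∈ N) (hn₀ : ∀ s ∈ N, n₀ ≤ s) (S : Set K)
    (hdef : Set.Definable₁ (univ : Set K) L {t | t ∈ N ∧ t ∉ S})
    (hbase : n₀ ∈ S)
    (hstep : ∀ t ∈ N, t ∈ S → ∀ t', t' ∈ N → t < t' → (∀ s ∈ N, t < s → t' ≤ s) → t' ∈ S) :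
    ∀ t ∈ N, t ∈ S := by
  by_contra hc
  push_neg at hc
  obtain ⟨t₁, ht₁N, ht₁S⟩ := hc
  obtain ⟨m, hm, hmmin⟩ := C.nmin hdef (fun t ht => ht.1) ⟨t₁, ht₁N, ht₁S⟩
  have hn₀m : n₀ < m := by
    rcases lt_or_eq_of_le (hn₀ m hm.1) with h | h
    · exact h
    · exact absurd hbase (h ▸ hm.2)
  have hdefB : Set.Definable₁ (univ : Set K) L {s | s ∈ N ∧ s < m} := by
    refine C.def₁ (.and (.inN 0) (.ex (.and (.const 1 m) (.lt 0 1)))) _ ?_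
    intro a
    simp only [Fml.eval, mem_setOf_eq, Matrix.cons_val_zero, snoc_1_0, snoc_1_1,
      exists_eq_left, exists_eq_left']
  obtain ⟨p, hp, hpmax⟩ := C.nmax hdefB (fun s hs => hs.1) ⟨n₀, hn₀N, hn₀m⟩
    ⟨m, fun s hs => hs.2.le⟩
  have hpS : p ∈ S := by
    by_contra hpS
    have := hmmin p ⟨hp.1, hpS⟩
    exact absurd hp.2 (not_lt.2 this)
  have hsuccp : ∀ s ∈ N, p < s → m ≤ s := by
    intro s hsN hps
    by_contra hsm
    push_neg at hsm
    exact absurd (hpmax s ⟨hsN, hsm⟩) (not_le.2 hps)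
  exact hm.2 (hstep p hp.1 hpS m hm.1 hp.2 hsuccp)

theorem nacc_all (n₀ : K) (hn₀N : n₀ ∈ N) (hn₀ : ∀ s ∈ N, n₀ ≤ s) :
    ∀ t ∈ N, nacc N f t := by
  have hdef : Set.Definable₁ (univ : Set K) L {t | t ∈ N ∧ t ∉ {t | nacc N f t}} := by
    refine C.def₁ (.and (.inN 0) (.not naccF)) _ ?_
    intro a
    simp only [Fml.eval, eval_naccF, mem_setOf_eq, Matrix.cons_val_zero]
  refine C.Nind n₀ hn₀N hn₀ {t | nacc N f t} hdef ?_ ?_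
  · intro w
    rcases lt_trichotomy (f n₀) w with h | h | h
    · refine ⟨w - f n₀, by linarith, ?_⟩
      intro z hz hne
      rw [dmem_min hn₀N hn₀] at hz
      subst hz
      left; linarith
    · refine ⟨1, one_pos, ?_⟩
      intro z hz hne
      rw [dmem_min hn₀N hn₀] at hz
      exact absurd (hz.trans h) hne
    · refine ⟨f n₀ - w, by linarith, ?_⟩
      intro z hz hne
      rw [dmem_min hn₀N hn₀] at hz
      subst hz
      right; linarith
  · intro t htN ht t' ht'N htt' hminp
    intro w
    obtain ⟨e, he, h2⟩ := ht w
    rcases lt_trichotomy (f t') w with h | h | h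
    · refine ⟨min e (w - f t'), lt_min he (by linarith), ?_⟩
      intro z hz hne
      rcases (dmem_succ ht'N htt' hminp).1 hz with hzD | rfl
      · rcases h2 z hzD hne with hh | hh
        · left; have := min_le_left e (w - f t'); linarith
        · right; have := min_le_left e (w - f t'); linarith
      · left; have := min_le_right e (w - f t'); linarith
    · refine ⟨e, he, ?_⟩
      intro z hz hne
      rcases (dmem_succ ht'N htt' hminp).1 hz with hzD | rfl
      · exact h2 z hzD hne
      · exact absurd h hne
    · refine ⟨min e (f t' - w), lt_min he (by linarith), ?_⟩
      intro z hz hne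
      rcases (dmem_succ ht'N htt' hminp).1 hz with hzD | rfl
      · rcases h2 z hzD hne with hh | hh
        · left; have := min_le_left e (f t' - w); linarith
        · right; have := min_le_left e (f t' - w); linarith
      · right; have := min_le_right e (f t' - w); linarith

theorem rad_exists (y : K) : ∃ r, Rad N f y r := by
  have hdef : Set.Definable₁ (univ : Set K) L (dst N f y) := by
    refine C.def₁ (.ex (.and (.const 1 y) (relabel ![1, 0] dsetF))) _ ?_
    intro a
    simp only [Fml.eval, Fml.eval_relabel, eval_dsetF, Function.comp_apply,
      Matrix.cons_val_zero, Matrix.cons_val_one, Matrix.head_cons,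
      snoc_1_0, snoc_1_1, exists_eq_left, exists_eq_left']
  have hne : (dst N f y).Nonempty := ⟨1, Or.inl rfl⟩
  have hbb : BddBelow (dst N f y) := by
    refine ⟨0, ?_⟩
    rintro r (rfl | ⟨hr, _⟩)
    · exact zero_le_one
    · exact hr.le
  obtain ⟨d, hd⟩ := C.glb_exists hdef hne hbb
  refine ⟨d / 100, d, hd, ?_⟩
  have h100 : (100 : K) ≠ 0 := by norm_num
  field_simp

theorem rad_pos {y r : K} (n₀ : K) (hn₀N : n₀ ∈ N) (hn₀ : ∀ s ∈ N, n₀ ≤ s)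
    (h : Rad N f y r) : 0 < r := by
  obtain ⟨s₀, hs₀⟩ := C.lam_exists y
  obtain ⟨e, he, hcl⟩ := C.nacc_all n₀ hn₀N hn₀ s₀ hs₀.1.1 y
  obtain ⟨d, hglb, hdr⟩ := h
  have hlow : min e 1 ∈ lowerBounds (dst N f y) := by
    rintro q (rfl | ⟨hqpos, s, hlams, z, hzD, hzne, hor⟩)
    · exact min_le_right e 1
    · have hss : s = s₀ := lam_unique hlams hs₀
      subst hss
      have := min_le_left e 1
      rcases hcl z hzD hzne with hh | hh <;> rcases hor with h1 | h1 <;> linarith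
  have hmind : min e 1 ≤ d := hglb.2 hlow
  have : 0 < min e 1 := by positivity
  linarith

theorem rad_le_one {y r : K} (h : Rad N f y r) : 100 * r ≤ 1 := by
  obtain ⟨d, hglb, hdr⟩ := h
  have := hglb.1 (Or.inl rfl : (1 : K) ∈ dst N f y)
  linarith

theorem rad_le_dist {y r s₀ z : K} (h : Rad N f y r) (hlam : lam N f y s₀)
    (hzD : Dmem N f s₀ z) (hzne : z ≠ y) :
    (z < y → 100 * r ≤ y - z) ∧ (y < z → 100 * r ≤ z - y) := by
  obtain ⟨d, hglb, hdr⟩ := h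
  constructor
  · intro hzy
    have hq : y - z ∈ dst N f y :=
      Or.inr ⟨by linarith, s₀, hlam, z, hzD, hzne, Or.inl (by ring)⟩
    have := hglb.1 hq
    linarith
  · intro hzy
    have hq : z - y ∈ dst N f y :=
      Or.inr ⟨by linarith, s₀, hlam, z, hzD, hzne, Or.inr (by ring)⟩
    have := hglb.1 hq
    linarith

theorem rad_unique {y r r' : K} (h : Rad N f y r) (h' : Rad N f y r') : r = r' := by
  obtain ⟨d, hglb, hdr⟩ := h
  obtain ⟨d', hglb', hdr'⟩ := h'
  have : d = d' := hglb.unique hglb'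
  subst this
  have : (100 : K) * r = 100 * r' := by rw [hdr, hdr']
  linarith

end Ctx

end Main2


section Main3

open Fml

variable {K : Type*} [Field K] [LinearOrder K] [IsStrictOrderedRing K] [TopologicalSpace K] [OrderTopology K]
variable {L : FirstOrder.Language} [L.Structure K] {N : Set K} {f : K → K}

namespace Ctx

variable (C : Ctx L K N f)
include C

/-- The main invariant: at every stage there is a clean, anchored interval. -/
theorem pp_all (n₀ : K) (hn₀N : n₀ ∈ N) (hn₀ : ∀ s ∈ N, n₀ ≤ s) :
    ∀ t ∈ N, PP N f (f n₀ + 1/100) (f n₀ + 1/50) t := by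
  set a : K := f n₀ + 1/100 with ha
  set b : K := f n₀ + 1/50 with hb
  have hdef : Set.Definable₁ (univ : Set K) L {t | t ∈ N ∧ t ∉ {t | PP N f a b t}} := by
    refine C.def₁ (.and (.inN 0) (.not (pF a b))) _ ?_
    intro x
    simp only [Fml.eval, eval_pF, mem_setOf_eq, Matrix.cons_val_zero]
  refine C.Nind n₀ hn₀N hn₀ {t | PP N f a b t} hdef ?_ ?_
  · -- base case
    have hfact1 : (1:K)/100 < 1/50 := by norm_num
    have hfact2 : (1:K)/100 + 1/100 = 1/50 := by norm_num
    have hfact3 : (0:K) ≤ 1/50 + 20 * (1/100) := by norm_num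
    have hfact4 : (1:K)/100 ≤ 20 * (1/100) := by norm_num
    refine ⟨a, b, le_refl _, by rw [ha, hb]; linarith, le_refl _, ?_, ?_⟩
    · intro z hz r hr w hw1 hw2
      rw [dmem_min hn₀N hn₀] at hz
      subst hz
      right
      have h1 := C.rad_le_one hr
      rw [ha] at hw1
      linarith
    · refine ⟨f n₀, (dmem_min hn₀N hn₀).2 rfl, 1/100,
        by rw [ha, hb]; linarith, ?_, ?_⟩
      · rw [hb]; linarith
      · rw [ha]; linarith
  · -- inductive step
    intro t htN hPP t' ht'N htt' hminp
    obtain ⟨u, v, hau, huv, hvb, hclean, hanch⟩ := hPP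
    by_cases hyD : Dmem N f t (f t')
    · refine ⟨u, v, hau, huv, hvb, ?_, ?_⟩
      · intro z hz r hr w hw1 hw2
        rcases (dmem_succ ht'N htt' hminp).1 hz with hzD | rfl
        · exact hclean z hzD r hr w hw1 hw2
        · exact hclean _ hyD r hr w hw1 hw2
      · obtain ⟨z₀, hz₀, rest⟩ := hanch
        exact ⟨z₀, dmem_mono htt'.le hz₀, rest⟩
    · have hlam : lam N f (f t') t' := by
        refine ⟨⟨ht'N, rfl⟩, ?_⟩
        rintro s' ⟨hs'N, hfs'⟩
        rcases le_or_gt s' t with h | h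
        · exact absurd ⟨s', hs'N, h, hfs'⟩ hyD
        · exact hminp s' hs'N h
      obtain ⟨r', hr'⟩ := C.rad_exists (f t')
      have hr'pos : 0 < r' := C.rad_pos n₀ hn₀N hn₀ hr'
      by_cases hcase : ∀ w, u ≤ w → w ≤ v → (w + r' ≤ f t' ∨ f t' + r' ≤ w)
      · refine ⟨u, v, hau, huv, hvb, ?_, ?_⟩
        · intro z hz r hr w hw1 hw2
          rcases (dmem_succ ht'N htt' hminp).1 hz with hzD | rfl
          · exact hclean z hzD r hr w hw1 hw2
          · have hrr : r = r' := C.rad_unique hr hr'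
            rw [hrr]
            exact hcase w hw1 hw2
        · obtain ⟨z₀, hz₀, rest⟩ := hanch
          exact ⟨z₀, dmem_mono htt'.le hz₀, rest⟩
      · push_neg at hcase
        obtain ⟨x₀, hx₀u, hx₀v, hb1, hb2⟩ := hcase
        obtain ⟨z₀, hz₀D, g, hg, hz₀1, hz₀2⟩ := hanch
        have hgv : g = v - u := by linarith
        subst hgv
        have hz₀ne : z₀ ≠ f t' := by
          intro h
          rw [h] at hz₀D
          exact hyD hz₀D
        have hdists := C.rad_le_dist hr' hlam (dmem_mono htt'.le hz₀D) hz₀ne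
        have hr4 : 4 * r' < v - u := by
          rcases lt_trichotomy z₀ (f t') with hzy | hzy | hzy
          · have h1 := hdists.1 hzy
            linarith
          · exact absurd hzy hz₀ne
          · have h1 := hdists.2 hzy
            linarith
        by_cases hdi : u + (v - u)/4 + r' ≤ f t'
        · -- keep the left part [u, f t' - r']
          refine ⟨u, f t' - r', hau, by linarith, by linarith, ?_, ?_⟩
          · intro z hz r hr w hw1 hw2
            rcases (dmem_succ ht'N htt' hminp).1 hz with hzD | rfl
            · exact hclean z hzD r hr w hw1 (by linarith)
            · left
              have hrr : r = r' := C.rad_unique hr hr'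
              rw [hrr]
              linarith
          · refine ⟨f t', ⟨t', ht'N, le_refl _, rfl⟩, (f t' - r') - u, by ring, ?_, ?_⟩
            · linarith
            · linarith
        · -- keep the right part [f t' + r', v]
          push_neg at hdi
          have hub : f t' + r' < v := by linarith
          refine ⟨f t' + r', v, by linarith, hub, hvb, ?_, ?_⟩
          · intro z hz r hr w hw1 hw2
            rcases (dmem_succ ht'N htt' hminp).1 hz with hzD | rfl
            · exact hclean z hzD r hr w (by linarith) hw2
            · right
              have hrr : r = r' := C.rad_unique hr hr'
              rw [hrr]
              linarith
          · refine ⟨f t', ⟨t', ht'N, le_refl _, rfl⟩, v - (f t' + r'), by ring, ?_, ?_⟩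
            · linarith
            · linarith

theorem vv_definable (a b T : K) : Set.Definable₁ (univ : Set K) L (Vv N f a b T) := by
  refine C.def₁ (.ex (.and (.const 1 T) (vF a b))) _ ?_
  intro x
  simp only [Fml.eval, eval_vF, Matrix.cons_val_zero, snoc_1_0, snoc_1_1,
    exists_eq_left, exists_eq_left']

theorem vv_antitone {a b T T' : K} (hTT : T ≤ T') : Vv N f a b T' ⊆ Vv N f a b T := by
  rintro x ⟨h1, h2, h3⟩
  exact ⟨h1, h2, fun z hz r hr => h3 z (dmem_mono hTT hz) r hr⟩

theorem minv_exists (n₀ : K) (hn₀N : n₀ ∈ N) (hn₀ : ∀ s ∈ N, n₀ ≤ s) (T : K) (hT : T ∈ N) :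
    ∃ m, mV N f (f n₀ + 1/100) (f n₀ + 1/50) m T := by
  set a : K := f n₀ + 1/100 with ha
  set b : K := f n₀ + 1/50 with hb
  have hne : (Vv N f a b T).Nonempty := by
    obtain ⟨u, v, hau, huv, hvb, hclean, hanch⟩ := C.pp_all n₀ hn₀N hn₀ T hT
    exact ⟨u, hau, huv.le.trans hvb, fun z hz r hr => hclean z hz r hr u (le_refl _) huv.le⟩
  have hbb : BddBelow (Vv N f a b T) := ⟨a, fun x hx => hx.1⟩
  obtain ⟨d, hd⟩ := C.glb_exists (C.vv_definable a b T) hne hbb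
  have hdmem : d ∈ Vv N f a b T := by
    refine ⟨hd.2 (fun x hx => hx.1), ?_, ?_⟩
    · obtain ⟨x, hx⟩ := hne
      exact (hd.1 hx).trans hx.2.1
    · intro z hz r hr
      by_contra hc
      push_neg at hc
      obtain ⟨h1, h2⟩ := hc
      have hex : ∃ x ∈ Vv N f a b T, x < z + r := by
        by_contra hc2
        push_neg at hc2
        have : z + r ∈ lowerBounds (Vv N f a b T) := fun x hx => hc2 x hx
        have := hd.2 this
        linarith
      obtain ⟨x, hxV, hxlt⟩ := hex
      have hdx : d ≤ x := hd.1 hxV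
      rcases hxV.2.2 z hz r hr with h | h
      · linarith
      · linarith
  exact ⟨d, hdmem, fun w hw => hd.1 hw⟩

/-- The final contradiction. -/
theorem contra : False := by
  obtain ⟨n₀, hn₀N, hn₀⟩ := C.n0_exists
  set a : K := f n₀ + 1/100 with ha
  set b : K := f n₀ + 1/50 with hb
  have hSdef : Set.Definable₁ (univ : Set K) L (Sstar N f a b) := by
    refine C.def₁ (sstarF a b) _ ?_
    intro x
    simp only [eval_sstarF, Matrix.cons_val_zero]
  have hSne : (Sstar N f a b).Nonempty := by
    obtain ⟨m, hm⟩ := C.minv_exists n₀ hn₀N hn₀ n₀ hn₀N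
    exact ⟨m, n₀, hn₀N, hm⟩
  have hSba : BddAbove (Sstar N f a b) := by
    refine ⟨b, ?_⟩
    rintro x ⟨T, hTN, hmV⟩
    exact hmV.1.2.1
  obtain ⟨x', hx'⟩ := C.hdc _ hSdef hSne hSba
  have hx'mem : ∀ T ∈ N, x' ∈ Vv N f a b T := by
    intro T hT
    refine ⟨?_, ?_, ?_⟩
    · obtain ⟨m, hmS⟩ := hSne
      obtain ⟨T'', hT''N, hmV⟩ := hmS
      exact hmV.1.1.trans (hx'.1 ⟨T'', hT''N, hmV⟩)
    · exact hx'.2 (fun x hx => by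
        obtain ⟨T'', hT''N, hmV⟩ := hx
        exact hmV.1.2.1)
    · intro z hz r hr
      by_contra hc
      push_neg at hc
      obtain ⟨h1, h2⟩ := hc
      have hrpos : 0 < r := C.rad_pos n₀ hn₀N hn₀ hr
      have hex : ∃ m ∈ Sstar N f a b, z - r < m := by
        by_contra hc2
        push_neg at hc2
        have : x' ≤ z - r := hx'.2 (fun m hm => hc2 m hm)
        linarith
      obtain ⟨m, hmS, hmgt⟩ := hex
      obtain ⟨T'', hT''N, hmV⟩ := hmS
      have hmle : m ≤ x' := hx'.1 ⟨T'', hT''N, hmV⟩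
      rcases le_total T'' T with hle | hle
      · obtain ⟨m', hm'⟩ := C.minv_exists n₀ hn₀N hn₀ T hT
        have hm'le : m ≤ m' := hmV.2 m' (C.vv_antitone hle hm'.1)
        have hm'S : m' ∈ Sstar N f a b := ⟨T, hT, hm'⟩
        have hm'x : m' ≤ x' := hx'.1 hm'S
        rcases hm'.1.2.2 z hz r hr with h | h
        · linarith
        · linarith
      · have hmVT : m ∈ Vv N f a b T := C.vv_antitone hle hmV.1
        rcases hmVT.2.2 z hz r hr with h | h
        · linarith
        · linarith
  obtain ⟨τ, hτN, hfτ⟩ := C.hsur x'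
  have hx'V := hx'mem τ hτN
  obtain ⟨r, hr⟩ := C.rad_exists x'
  have hrpos : 0 < r := C.rad_pos n₀ hn₀N hn₀ hr
  have hDx : Dmem N f τ x' := ⟨τ, hτN, le_refl _, hfτ.symm⟩
  rcases hx'V.2.2 x' hDx r hr with h | h
  · linarith
  · linarith

end Ctx

end Main3

end Tame9

namespace Tame

variable (L : FirstOrder.Language) (K : Type*) [Field K] [LinearOrder K] [IsStrictOrderedRing K]
  [TopologicalSpace K] [OrderTopology K] [L.Structure K]

/-- a definably complete expansion of an ordered field is not pseudo-enumerable. -/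
theorem statement9
    (hexp : IsOrderedFieldExpansion L K)
    (hdc : DefinablyComplete L K) :
    ¬ ∃ N : Set K, Set.Definable₁ (Set.univ : Set K) L N ∧ N ⊆ {x : K | 0 ≤ x} ∧
      IsClosed N ∧ IsDiscreteSet N ∧ ¬ BddAbove N ∧
      ∃ f : K → K, DefFunOn1 L K N f ∧ ∀ y : K, ∃ x ∈ N, f x = y := by
  rintro ⟨N, hNdef, hNpos, hNcl, hNdisc, hNunb, f, hfdef, hfsurj⟩
  exact Tame9.Ctx.contra (L := L) (K := K) (N := N) (f := f)
    { hdc := hdc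
      hlt := hexp.1.mono (Set.subset_univ _)
      hadd := hexp.2.1.mono (Set.subset_univ _)
      hmul := hexp.2.2.mono (Set.subset_univ _)
      hN := hNdef
      hG := hfdef
      hpos := hNpos
      hcl := hNcl
      hdisc := hNdisc
      hunb := hNunb
      hsur := hfsurj }


end Tame
end
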